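/- arXiv:2504.06546 — 4 statements merged into one kernel-verified Lean document; each statement's English description precedes it below -/
import Mathlib

section
/- Let C1 be the linear code over F_q with generator matrix G1. Then every set of k−1 columns of G1 is linearly independent over F_q; consequently the minimum distance of the dual code satisfies d(C1^⊥) ≥ k. -/
open Finset

variable {F : Type*} [Field F] [Fintype F] [DecidableEq F]

/-- The linear code generated by the rows of the matrix `G`. -/
def rowSpan {k n : ℕ} (G : Matrix (Fin k) (Fin n) F) : Submodule F (Fin n → F) :=
  Submodule.span F (Set.range G)

/-- The Euclidean dual of the code `C`. -/
def dualCode {n : ℕ} (C : Submodule F (Fin n → F)) : Submodule F (Fin n → F) where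
  carrier := {v | ∀ c ∈ C, ∑ i, c i * v i = 0}
  add_mem' := by
    intro a b ha hb c hc
    have h1 := ha c hc
    have h2 := hb c hc
    show ∑ i, c i * (a + b) i = 0
    simp only [Pi.add_apply, mul_add, Finset.sum_add_distrib, h1, h2, add_zero]
  zero_mem' := by
    intro c hc
    show ∑ i, c i * (0 : Fin _ → F) i = 0
    simp
  smul_mem' := by
    intro r a ha c hc
    have h1 := ha c hc
    show ∑ i, c i * (r • a) i = 0
    calc ∑ i, c i * (r • a) i = r * ∑ i, c i * a i := by
          rw [Finset.mul_sum]
          exact Finset.sum_congr rfl fun i _ => by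
            simp only [Pi.smul_apply, smul_eq_mul]
            ring
      _ = 0 := by rw [h1, mul_zero]

/-- The code `C` has minimum Hamming distance `d`. -/
def HasMinDist {n : ℕ} (C : Submodule F (Fin n → F)) (d : ℕ) : Prop :=
  (∃ c ∈ C, c ≠ 0 ∧ hammingNorm c = d) ∧ ∀ c ∈ C, c ≠ 0 → d ≤ hammingNorm c

/-- The number of codewords of Hamming weight `w` in `C`. -/
noncomputable def numWt {n : ℕ} (C : Submodule F (Fin n → F)) (w : ℕ) : ℕ :=
  {c : Fin n → F | c ∈ C ∧ hammingNorm c = w}.ncard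

/-- The supports of the codewords of weight `w` in `C`. -/
def blocks {n : ℕ} (C : Submodule F (Fin n → F)) (w : ℕ) : Set (Finset (Fin n)) :=
  {s | ∃ c ∈ C, hammingNorm c = w ∧ (Finset.univ.filter fun i => c i ≠ 0) = s}

/-- The generator matrix `G₁`: the `j`-th column (`j < q-1`) is
`(θⱼ^{k-1}, θⱼ^{k-2}, …, θⱼ, 1)ᵀ`, the `q`-th column is `(1,0,…,0)ᵀ` and the
`(q+1)`-th column is `(0,1,0,…,0)ᵀ`. -/
def G1 (q k : ℕ) (θ : Fin (q - 1) → F) : Matrix (Fin k) (Fin (q + 1)) F :=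
  Matrix.of fun i j =>
    if h : (j : ℕ) < q - 1 then θ ⟨j, h⟩ ^ (k - 1 - (i : ℕ))
    else if (j : ℕ) = q - 1 then (if (i : ℕ) = 0 then 1 else 0)
    else (if (i : ℕ) = 1 then 1 else 0)

private lemma vand_zero {F : Type*} [Field F] {n : ℕ} (t : Finset (Fin n)) (x a : Fin n → F)
    (hinj : Set.InjOn x t)
    (h : ∀ e : ℕ, e < t.card → ∑ j ∈ t, a j * x j ^ e = 0) : ∀ j ∈ t, a j = 0 := by
  classical
  let σ : Fin t.card ≃ {y // y ∈ t} := t.equivFin.symm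
  have key : (fun j : Fin t.card => a ((σ j) : Fin n)) = 0 := by
    apply Matrix.eq_zero_of_forall_pow_sum_mul_pow_eq_zero (f := fun j => x ((σ j) : Fin n))
    · intro i j hij
      exact σ.injective (Subtype.ext (hinj (σ i).2 (σ j).2 hij))
    · intro e
      have h1 := h (e : ℕ) e.2
      rw [← Finset.sum_coe_sort t (fun j => a j * x j ^ (e : ℕ))] at h1
      rw [← h1]
      exact Equiv.sum_comp σ (fun j : {y // y ∈ t} => a (j : Fin n) * x (j : Fin n) ^ (e : ℕ))
  intro j hj
  have h2 := congrFun key (t.equivFin ⟨j, hj⟩)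
  simpa [σ] using h2

theorem stmt0 (p m q k : ℕ) (hp : p.Prime) (hq : q = p ^ m)
    (hcond : (p = 2 → 3 ≤ m ∧ 4 ≤ k ∧ k ≤ q - 3) ∧ (p ≠ 2 → 2 ≤ m ∧ 3 ≤ k ∧ k ≤ q - 2))
    (F : Type*) [Field F] [Fintype F] [DecidableEq F]
    (hcard : Fintype.card F = q)
    (θ : Fin (q - 1) → F) (hθinj : Function.Injective θ) (hθne : ∀ j, θ j ≠ 0) :
    (∀ s : Finset (Fin (q + 1)), s.card = k - 1 →
        LinearIndependent F (fun j : {x // x ∈ s} => fun i : Fin k => G1 q k θ i j.1)) ∧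
      ∀ v ∈ dualCode (rowSpan (G1 q k θ)), v ≠ 0 → k ≤ hammingNorm v := by
  classical
  have hk3 : 3 ≤ k ∧ k ≤ q := by
    by_cases hp2 : p = 2
    · have := hcond.1 hp2; omega
    · have := hcond.2 hp2; omega
  have main : ∀ s : Finset (Fin (q + 1)), s.card = k - 1 →
      LinearIndependent F (fun j : {x // x ∈ s} => fun i : Fin k => G1 q k θ i j.1) := by
    intro s hs
    rw [Fintype.linearIndependent_iff]
    intro g hg j0
    set a : Fin (q + 1) → F := fun j => if h : j ∈ s then g ⟨j, h⟩ else 0 with ha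
    have hrow : ∀ i : Fin k, ∑ j ∈ s, a j * G1 q k θ i j = 0 := by
      intro i
      have h1 := congrFun hg i
      simp only [Finset.sum_apply, Pi.smul_apply, smul_eq_mul, Pi.zero_apply] at h1
      rw [← h1, ← Finset.sum_coe_sort s (fun j => a j * G1 q k θ i j)]
      refine Finset.sum_congr rfl fun j _ => ?_
      simp [ha, j.2]
    set x : Fin (q + 1) → F := fun j => if h : (j : ℕ) < q - 1 then θ ⟨j, h⟩ else 0 with hx
    set V : Finset (Fin (q + 1)) := s.filter (fun j => (j : ℕ) < q - 1) with hV
    have hinj : Set.InjOn x V := by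
      intro j1 h1 j2 h2 hxx
      have m1 := (Finset.mem_filter.mp h1).2
      have m2 := (Finset.mem_filter.mp h2).2
      simp only [hx, dif_pos m1, dif_pos m2] at hxx
      have h5 := hθinj hxx
      simp only [Fin.mk.injEq] at h5
      exact Fin.ext h5
    have je1q : q < q + 1 := Nat.lt_succ_self q
    set je1 : Fin (q + 1) := ⟨q, je1q⟩ with hje1
    have hVsub : V ⊆ s := Finset.filter_subset _ _
    have hVcard : V.card ≤ k - 1 := hs ▸ Finset.card_le_card hVsub
    have hVcard2 : je1 ∈ s → V.card ≤ k - 2 := by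
      intro hmem
      have hsubV : V ⊆ s.erase je1 := by
        intro j hj
        refine Finset.mem_erase.mpr ⟨?_, hVsub hj⟩
        intro hjeq
        have := (Finset.mem_filter.mp hj).2
        rw [hjeq] at this
        simp only [hje1] at this
        omega
      have := Finset.card_le_card hsubV
      rw [Finset.card_erase_of_mem hmem, hs] at this
      omega
    have key : ∀ j ∈ V, a j = 0 := by
      apply vand_zero V x a hinj
      intro e he
      have hek : e ≤ k - 2 := by omega
      have hek' : je1 ∈ s → e ≤ k - 3 := fun hmem => by have := hVcard2 hmem; omega
      set i : Fin k := ⟨k - 1 - e, by omega⟩ with hi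
      have h0 := hrow i
      rw [← h0, hV, Finset.sum_filter]
      refine Finset.sum_congr rfl fun j hj => ?_
      by_cases hj1 : (j : ℕ) < q - 1
      · rw [if_pos hj1]
        simp only [hx, G1, Matrix.of_apply, dif_pos hj1, hi]
        congr 2
        omega
      · rw [if_neg hj1]
        by_cases hj2 : (j : ℕ) = q - 1
        · simp only [G1, Matrix.of_apply, dif_neg hj1, if_pos hj2, hi]
          have : ¬ (k - 1 - e = 0) := by omega
          rw [if_neg this, mul_zero]
        · have hjq : (j : ℕ) = q := by omega
          have hjeq : j = je1 := Fin.ext (by simp [hje1, hjq])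
          have hmem : je1 ∈ s := hjeq ▸ hj
          have he3 := hek' hmem
          simp only [G1, Matrix.of_apply, dif_neg hj1, if_neg hj2, hi]
          have : ¬ (k - 1 - e = 1) := by omega
          rw [if_neg this, mul_zero]
    have hV0 : ∀ j ∈ s, (j : ℕ) < q - 1 → a j = 0 := fun j hj hlt =>
      key j (Finset.mem_filter.mpr ⟨hj, hlt⟩)
    have hrow1 : ∀ j ∈ s, (j : ℕ) = q → a j = 0 := by
      intro j hj hjq
      have i1 : Fin k := ⟨1, by omega⟩
      have h0 := hrow ⟨1, by omega⟩
      rw [Finset.sum_eq_single_of_mem j hj] at h0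
      · simpa [G1, hjq, show ¬ ((q:ℕ) < q - 1) by omega, show (q:ℕ) ≠ q - 1 by omega] using h0
      · intro b hb hbj
        by_cases hb1 : (b : ℕ) < q - 1
        · rw [hV0 b hb hb1, zero_mul]
        · by_cases hb2 : (b : ℕ) = q - 1
          · simp [G1, hb1, hb2]
          · exact absurd (Fin.ext (by omega : (b : ℕ) = (j : ℕ))) hbj
    have hrow0 : ∀ j ∈ s, (j : ℕ) = q - 1 → a j = 0 := by
      intro j hj hjq
      have h0 := hrow ⟨0, by omega⟩
      rw [Finset.sum_eq_single_of_mem j hj] at h0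
      · simpa [G1, hjq, show ¬ (q - 1 < q - 1) by omega] using h0
      · intro b hb hbj
        by_cases hb1 : (b : ℕ) < q - 1
        · rw [hV0 b hb hb1, zero_mul]
        · by_cases hb2 : (b : ℕ) = q - 1
          · exact absurd (Fin.ext (by omega : (b : ℕ) = (j : ℕ))) hbj
          · simp [G1, hb1, hb2]
    have : a j0.1 = 0 := by
      rcases lt_trichotomy ((j0.1 : ℕ)) (q - 1) with h1 | h1 | h1
      · exact hV0 j0.1 j0.2 h1
      · exact hrow0 j0.1 j0.2 h1
      · have : (j0.1 : ℕ) = q := by have := j0.1.2; omega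
        exact hrow1 j0.1 j0.2 this
    have hga : g j0 = a j0.1 := by simp [ha, j0.2]
    rw [hga]; exact this
  refine ⟨main, ?_⟩
  intro v hv hvne
  by_contra hlt
  push_neg at hlt
  set supp : Finset (Fin (q + 1)) := Finset.univ.filter (fun i => v i ≠ 0) with hsupp
  have hwt : hammingNorm v = supp.card := rfl
  have hsc : supp.card ≤ k - 1 := by omega
  obtain ⟨s, hsub, hscard⟩ := Finset.exists_superset_card_eq hsc
    (by simp [Fintype.card_fin]; omega)
  have hli := main s hscard
  rw [Fintype.linearIndependent_iff] at hli
  have hvz := hli (fun j => v j.1) ?_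
  · apply hvne
    funext j
    by_cases hj : j ∈ supp
    · exact hvz ⟨j, hsub hj⟩
    · simpa [hsupp, not_not] using hj
  · funext i
    simp only [Finset.sum_apply, Pi.smul_apply, smul_eq_mul, Pi.zero_apply]
    have h1 : ∑ j : {x // x ∈ s}, v j.1 * G1 q k θ i j.1
        = ∑ j ∈ s, v j * G1 q k θ i j :=
      Finset.sum_coe_sort s (fun j => v j * G1 q k θ i j)
    rw [h1]
    have h2 : ∑ j ∈ s, v j * G1 q k θ i j = ∑ j : Fin (q + 1), v j * G1 q k θ i j := by
      apply Finset.sum_subset (Finset.subset_univ s)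
      intro j _ hjs
      have : j ∉ supp := fun h => hjs (hsub h)
      have : v j = 0 := by simpa [hsupp, not_not] using this
      rw [this, zero_mul]
    rw [h2]
    have h3 := hv (G1 q k θ i) (Submodule.subset_span ⟨i, rfl⟩)
    rw [← h3]
    exact Finset.sum_congr rfl fun j _ => mul_comm _ _
end

section
/- Let C1 be the linear code over F_q with generator matrix G1 (with dimension parameter k). If either (1) p = 2, m ≥ 3, and k ∈ {3, q−2, q−1}, or (2) p ≠ 2, m ≥ 2, and k ∈ {2, q−1}, then C1 is an MDS code with parameters [q+1, k, q+2−k]_q. -/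
set_option linter.unusedSectionVars false
set_option maxHeartbeats 1000000


open Finset

variable {F : Type*} [Field F] [Fintype F] [DecidableEq F]

open Polynomial

noncomputable def polyOf (k : ℕ) (a : Fin k → F) : F[X] :=
  ∑ i : Fin k, Polynomial.C (a i) * Polynomial.X ^ (k - 1 - (i : ℕ))

lemma polyOf_coeff (k : ℕ) (a : Fin k → F) (i : Fin k) :
    (polyOf k a).coeff (k - 1 - (i : ℕ)) = a i := by
  unfold polyOf
  rw [Polynomial.finset_sum_coeff, Finset.sum_eq_single i]
  · simp
  · intro b _ hb
    rw [Polynomial.coeff_C_mul, Polynomial.coeff_X_pow, if_neg, mul_zero]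
    intro h
    exact hb (Fin.ext (by have := b.isLt; have := i.isLt; omega))
  · simp

lemma polyOf_natDegree_le (k : ℕ) (a : Fin k → F) :
    (polyOf k a).natDegree ≤ k - 1 := by
  refine Polynomial.natDegree_sum_le_of_forall_le _ _ fun i _ => ?_
  exact (Polynomial.natDegree_C_mul_le _ _).trans (by simp [Polynomial.natDegree_X_pow])

lemma polyOf_eval (k : ℕ) (a : Fin k → F) (x : F) :
    (polyOf k a).eval x = ∑ i : Fin k, a i * x ^ (k - 1 - (i : ℕ)) := by
  rw [polyOf, Polynomial.eval_finset_sum]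
  simp

lemma polyOf_of_coeff {k : ℕ} (f : F[X]) (hdeg : f.natDegree ≤ k - 1) (hk : 1 ≤ k) :
    polyOf k (fun i => f.coeff (k - 1 - (i : ℕ))) = f := by
  ext N
  rcases le_or_gt N (k - 1) with h | h
  · have hthis := polyOf_coeff k (fun i => f.coeff (k - 1 - (i : ℕ))) ⟨k - 1 - N, by omega⟩
    have he : k - 1 - ((⟨k - 1 - N, by omega⟩ : Fin k) : ℕ) = N := by simp; omega
    rw [he] at hthis
    exact hthis
  · rw [Polynomial.coeff_eq_zero_of_natDegree_lt (lt_of_le_of_lt (polyOf_natDegree_le k _) h),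
      Polynomial.coeff_eq_zero_of_natDegree_lt (lt_of_le_of_lt hdeg h)]

lemma key_poly {k : ℕ} (hk : 2 ≤ k) (f : F[X]) (hdeg : f.natDegree ≤ k - 1)
    (R : Finset F) (hR : R.card = k - 1)
    (hroots : ∀ α ∈ R, f.eval α = 0) :
    f.coeff (k - 2) = -(f.coeff (k - 1) * ∑ α ∈ R, α) := by
  set P : F[X] := Polynomial.C (f.coeff (k - 1)) * ∏ α ∈ R, (X - Polynomial.C α) with hP
  have hmon : (∏ α ∈ R, (X - Polynomial.C α)).Monic :=
    monic_prod_of_monic _ _ fun _ _ => monic_X_sub_C _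
  have hdegprod : (∏ α ∈ R, (X - Polynomial.C α)).natDegree = k - 1 := by
    rw [Polynomial.natDegree_prod _ _ (fun α _ => Polynomial.X_sub_C_ne_zero α)]
    simp [Polynomial.natDegree_X_sub_C, hR]
  have hcoeffP : ∀ N, k - 1 ≤ N → P.coeff N = f.coeff (k - 1) * (if N = k - 1 then 1 else 0) := by
    intro N hN
    rw [hP, Polynomial.coeff_C_mul]
    congr 1
    rcases eq_or_lt_of_le hN with h | h
    · rw [if_pos h.symm, ← h, ← hdegprod]
      exact hmon.coeff_natDegree
    · rw [if_neg (by omega), Polynomial.coeff_eq_zero_of_natDegree_lt (by omega)]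
  have hgdeg : (f - P).natDegree ≤ k - 2 := by
    rw [Polynomial.natDegree_le_iff_coeff_eq_zero]
    intro N hN
    rw [Polynomial.coeff_sub, hcoeffP N (by omega)]
    rcases eq_or_ne N (k - 1) with h | h
    · rw [if_pos h, mul_one, h, sub_self]
    · rw [if_neg h, mul_zero, Polynomial.coeff_eq_zero_of_natDegree_lt (by omega), sub_zero]
  have hg : f - P = 0 := by
    apply Polynomial.eq_zero_of_natDegree_lt_card_of_eval_eq_zero' _ R
    · intro α hα
      rw [Polynomial.eval_sub, hroots α hα, hP, Polynomial.eval_mul, Polynomial.eval_prod]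
      rw [Finset.prod_eq_zero hα (by simp)]
      ring
    · omega
  have hfP : f = P := sub_eq_zero.mp hg
  have h2 : P.coeff (k - 2) = f.coeff (k - 1) * -∑ α ∈ R, α := by
    rw [hP, Polynomial.coeff_C_mul]
    congr 1
    have := Polynomial.prod_X_sub_C_coeff_card_pred R (id : F → F) (by omega)
    simpa [hR, Nat.sub_sub] using this
  calc f.coeff (k - 2) = P.coeff (k - 2) := by rw [← hfP]
    _ = -(f.coeff (k - 1) * ∑ α ∈ R, α) := by rw [h2]; ring

def cword (q k : ℕ) (θ : Fin (q - 1) → F) (a : Fin k → F) : Fin (q + 1) → F :=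
  fun j => ∑ i, a i * G1 q k θ i j

lemma cword_lt {q k : ℕ} (θ : Fin (q - 1) → F) (a : Fin k → F) {j : Fin (q + 1)}
    (hj : (j : ℕ) < q - 1) :
    cword q k θ a j = (polyOf k a).eval (θ ⟨j, hj⟩) := by
  rw [polyOf_eval]
  unfold cword G1
  simp only [Matrix.of_apply, dif_pos hj]

lemma cword_q1 {q k : ℕ} (hq : 2 ≤ q) (hk : 2 ≤ k) (θ : Fin (q - 1) → F) (a : Fin k → F)
    {j : Fin (q + 1)} (hj : (j : ℕ) = q - 1) :
    cword q k θ a j = a ⟨0, by omega⟩ := by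
  unfold cword G1
  simp only [Matrix.of_apply, dif_neg (by omega : ¬ (j : ℕ) < q - 1), if_pos hj]
  rw [Finset.sum_eq_single (⟨0, by omega⟩ : Fin k)]
  · simp
  · intro b _ hb
    rw [if_neg (fun h => hb (Fin.ext h)), mul_zero]
  · simp

lemma cword_q {q k : ℕ} (hq : 2 ≤ q) (hk : 2 ≤ k) (θ : Fin (q - 1) → F) (a : Fin k → F)
    {j : Fin (q + 1)} (hj : (j : ℕ) = q) :
    cword q k θ a j = a ⟨1, by omega⟩ := by
  unfold cword G1
  simp only [Matrix.of_apply, dif_neg (by omega : ¬ (j : ℕ) < q - 1),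
    if_neg (by omega : ¬ (j : ℕ) = q - 1)]
  rw [Finset.sum_eq_single (⟨1, by omega⟩ : Fin k)]
  · simp
  · intro b _ hb
    rw [if_neg (fun h => hb (Fin.ext h)), mul_zero]
  · simp

lemma cword_zeros {q k : ℕ} (hq : 2 ≤ q) (hk : 2 ≤ k) (θ : Fin (q - 1) → F) (a : Fin k → F) :
    (Finset.univ.filter fun j => cword q k θ a j = 0).card
      = (Finset.univ.filter fun j : Fin (q - 1) => (polyOf k a).eval (θ j) = 0).card
        + (if a ⟨0, by omega⟩ = 0 then 1 else 0) + (if a ⟨1, by omega⟩ = 0 then 1 else 0) := by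
  classical
  set emb : Fin (q - 1) → Fin (q + 1) := fun j => ⟨j.1, by omega⟩ with hemb
  have hembinj : Function.Injective emb := by
    intro x y h
    have h' : ((emb x : Fin (q + 1)) : ℕ) = ((emb y : Fin (q + 1)) : ℕ) := congrArg Fin.val h
    exact Fin.ext h'
  set j0 : Fin (q + 1) := ⟨q - 1, by omega⟩
  set j1 : Fin (q + 1) := ⟨q, by omega⟩
  set Zθ := Finset.univ.filter fun j : Fin (q - 1) => (polyOf k a).eval (θ j) = 0 with hZθ
  set S0 : Finset (Fin (q + 1)) := if a ⟨0, by omega⟩ = 0 then {j0} else ∅ with hS0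
  set S1 : Finset (Fin (q + 1)) := if a ⟨1, by omega⟩ = 0 then {j1} else ∅ with hS1
  have hsplit : (Finset.univ.filter fun j => cword q k θ a j = 0)
      = (Zθ.image emb ∪ S0) ∪ S1 := by
    ext j
    simp only [Finset.mem_filter, Finset.mem_univ, true_and, Finset.mem_union, Finset.mem_image,
      hZθ, hS0, hS1]
    have hj2 := j.2
    rcases lt_or_ge (j : ℕ) (q - 1) with h1 | h1
    · rw [cword_lt θ a h1]
      constructor
      · intro h
        exact Or.inl (Or.inl ⟨⟨j, h1⟩, by simpa using h, Fin.ext rfl⟩)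
      · rintro ((⟨j', hj', rfl⟩ | hmem) | hmem)
        · have he : (⟨((emb j' : Fin (q+1)) : ℕ), h1⟩ : Fin (q - 1)) = j' := Fin.ext rfl
          rw [he]
          exact hj'
        · exfalso; revert hmem; split
          · intro h
            have := congrArg Fin.val (Finset.mem_singleton.mp h)
            simp [j0] at this; omega
          · simp
        · exfalso; revert hmem; split
          · intro h
            have := congrArg Fin.val (Finset.mem_singleton.mp h)
            simp [j1] at this; omega
          · simp
    · rcases eq_or_lt_of_le h1 with h2 | h2
      · rw [cword_q1 hq hk θ a h2.symm]
        have hjj0 : j = j0 := Fin.ext (by simp [j0, ← h2])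
        constructor
        · intro h
          refine Or.inl (Or.inr ?_)
          rw [if_pos h]
          simp [hjj0]
        · rintro ((⟨j', hj', hj'e⟩ | hmem) | hmem)
          · exfalso; have := j'.2; have := congrArg Fin.val hj'e; simp [emb] at this; omega
          · revert hmem; split
            · intro _; assumption
            · simp
          · exfalso; revert hmem; split
            · intro h
              have := congrArg Fin.val (Finset.mem_singleton.mp h)
              simp [j1] at this; omega
            · simp
      · have h3 : (j : ℕ) = q := by omega
        rw [cword_q hq hk θ a h3]
        have hjj1 : j = j1 := Fin.ext (by simp [j1, h3])
        constructor
        · intro h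
          refine Or.inr ?_
          rw [if_pos h]
          simp [hjj1]
        · rintro ((⟨j', hj', hj'e⟩ | hmem) | hmem)
          · exfalso; have := j'.2; have := congrArg Fin.val hj'e; simp [emb] at this; omega
          · exfalso; revert hmem; split
            · intro h
              have := congrArg Fin.val (Finset.mem_singleton.mp h)
              simp [j0] at this; omega
            · simp
          · revert hmem; split
            · intro _; assumption
            · simp
  rw [hsplit]
  have hval_im : ∀ x ∈ Zθ.image emb, (x : ℕ) < q - 1 := by
    intro x hx
    obtain ⟨j', _, rfl⟩ := Finset.mem_image.mp hx
    exact j'.2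
  have hval_S0 : ∀ x ∈ S0, (x : ℕ) = q - 1 := by
    intro x hx
    rw [hS0] at hx
    revert hx; split
    · intro hx
      rw [Finset.mem_singleton.mp hx]
    · simp
  have hval_S1 : ∀ x ∈ S1, (x : ℕ) = q := by
    intro x hx
    rw [hS1] at hx
    revert hx; split
    · intro hx
      rw [Finset.mem_singleton.mp hx]
    · simp
  have hd1 : Disjoint (Zθ.image emb ∪ S0) S1 := by
    rw [Finset.disjoint_left]
    intro x hx hx1
    have h1 := hval_S1 x hx1
    rcases Finset.mem_union.mp hx with hx' | hx'
    · have := hval_im x hx'; omega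
    · have := hval_S0 x hx'; omega
  have hd0 : Disjoint (Zθ.image emb) S0 := by
    rw [Finset.disjoint_left]
    intro x hx hx0
    have := hval_im x hx
    have := hval_S0 x hx0
    omega
  rw [Finset.card_union_of_disjoint hd1, Finset.card_union_of_disjoint hd0,
    Finset.card_image_of_injective _ hembinj]
  congr 1
  · congr 1
    rw [hS0]; split <;> simp
  · rw [hS1]; split <;> simp

lemma hn_add {n : ℕ} (c : Fin n → F) :
    hammingNorm c + (Finset.univ.filter fun j => c j = 0).card = n := by
  classical
  have h := Finset.card_filter_add_card_filter_not
    (s := (Finset.univ : Finset (Fin n))) (p := fun j => c j = 0)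
  rw [Finset.card_univ, Fintype.card_fin] at h
  have h2 : hammingNorm c = (Finset.univ.filter fun a => ¬ c a = 0).card := rfl
  omega

lemma zeros_card_le {q : ℕ} (θ : Fin (q - 1) → F) (hθinj : Function.Injective θ)
    (f : F[X]) (hf : f ≠ 0) :
    (Finset.univ.filter fun j : Fin (q - 1) => f.eval (θ j) = 0).card ≤ f.natDegree := by
  classical
  have h1 : (Finset.univ.filter fun j : Fin (q - 1) => f.eval (θ j) = 0).card
      ≤ f.roots.toFinset.card := by
    apply Finset.card_le_card_of_injOn θ
    · intro j hj
      rw [Finset.mem_coe, Multiset.mem_toFinset, Polynomial.mem_roots hf]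
      exact (Finset.mem_filter.mp (Finset.mem_coe.mp hj)).2
    · exact Function.Injective.injOn hθinj
  calc (Finset.univ.filter fun j : Fin (q - 1) => f.eval (θ j) = 0).card
      ≤ f.roots.toFinset.card := h1
    _ ≤ Multiset.card f.roots := Multiset.toFinset_card_le _
    _ ≤ f.natDegree := Polynomial.card_roots' f

lemma zeros_card_eq {q : ℕ} (θ : Fin (q - 1) → F) (hθinj : Function.Injective θ)
    (hθsurj : ∀ x : F, x ≠ 0 → ∃ j, θ j = x)
    (R : Finset F) (h0 : (0 : F) ∉ R) :
    (Finset.univ.filter fun j : Fin (q - 1) =>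
      (∏ α ∈ R, (X - Polynomial.C α)).eval (θ j) = 0).card = R.card := by
  classical
  have hiff : ∀ j : Fin (q - 1), (∏ α ∈ R, (X - Polynomial.C α)).eval (θ j) = 0 ↔ θ j ∈ R := by
    intro j
    rw [Polynomial.eval_prod, Finset.prod_eq_zero_iff]
    constructor
    · rintro ⟨α, hα, hz⟩
      simp only [Polynomial.eval_sub, Polynomial.eval_X, Polynomial.eval_C, sub_eq_zero] at hz
      rwa [hz]
    · intro h
      exact ⟨θ j, h, by simp⟩
  refine Finset.card_bij (fun j _ => θ j) ?_ ?_ ?_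
  · intro j hj
    exact (hiff j).mp (Finset.mem_filter.mp hj).2
  · intro j1 h1 j2 h2 h
    exact hθinj h
  · intro α hα
    obtain ⟨j, hj⟩ := hθsurj α (fun h => h0 (h ▸ hα))
    exact ⟨j, Finset.mem_filter.mpr ⟨Finset.mem_univ _, (hiff j).mpr (hj ▸ hα)⟩, hj⟩

theorem stmt3 (p m q k : ℕ) (hp : p.Prime) (hq : q = p ^ m)
    (hcond : (p = 2 ∧ 3 ≤ m ∧ (k = 3 ∨ k = q - 2 ∨ k = q - 1)) ∨
      (p ≠ 2 ∧ 2 ≤ m ∧ (k = 2 ∨ k = q - 1)))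
    (F : Type*) [Field F] [Fintype F] [DecidableEq F]
    (hcard : Fintype.card F = q)
    (θ : Fin (q - 1) → F) (hθinj : Function.Injective θ) (hθne : ∀ j, θ j ≠ 0) :
    Module.finrank F ↥(rowSpan (G1 q k θ)) = k ∧
      HasMinDist (rowSpan (G1 q k θ)) (q + 2 - k) := by
  classical
  -- basic numeric facts
  have hq8 : 8 ≤ q := by
    rcases hcond with ⟨hp2, hm, _⟩ | ⟨hp2, hm, _⟩
    · subst hq; subst hp2
      calc (8 : ℕ) = 2 ^ 3 := by norm_num
        _ ≤ 2 ^ m := Nat.pow_le_pow_right (by norm_num) hm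
    · have hp3 : 3 ≤ p := by
        have := hp.two_le
        omega
      subst hq
      calc (8 : ℕ) ≤ 3 ^ 2 := by norm_num
        _ ≤ p ^ 2 := Nat.pow_le_pow_left hp3 2
        _ ≤ p ^ m := Nat.pow_le_pow_right (by omega) hm
  have hkbound : 2 ≤ k ∧ k + 1 ≤ q := by
    rcases hcond with ⟨_, _, hk' | hk' | hk'⟩ | ⟨_, _, hk' | hk'⟩ <;> omega
  obtain ⟨hk2, hkq⟩ := hkbound
  have hq2 : 2 ≤ q := by omega
  -- characteristic
  have hchar : ringChar F = p := by
    obtain ⟨n, hrprime, hcn⟩ := FiniteField.card F (ringChar F)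
    have hdvd : ringChar F ∣ p ^ m := by
      rw [← hq, ← hcard, hcn]
      exact dvd_pow_self _ n.pos.ne'
    exact (Nat.prime_dvd_prime_iff_eq hrprime hp).mp (hrprime.dvd_of_dvd_pow hdvd)
  -- sum of all field elements is zero
  have hsumuniv : ∑ x : F, x = 0 := by
    have h := FiniteField.sum_pow_lt_card_sub_one (K := F) 1 (by rw [hcard]; omega)
    simpa using h
  have hcompl : ∀ S : Finset F, (0 : F) ∉ S →
      ∑ x ∈ S, x = -∑ x ∈ Finset.univ \ insert (0 : F) S, x := by
    intro S h0
    have h := Finset.sum_sdiff (f := fun x : F => x) (Finset.subset_univ (insert (0 : F) S))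
    rw [Finset.sum_insert h0, hsumuniv] at h
    -- h : ∑ sdiff + (0 + ∑ S) = 0
    linear_combination h
  -- Lemma A : no (k-1)-subset of nonzero elements sums to zero
  have lemA : ∀ S : Finset F, (0 : F) ∉ S → S.card = k - 1 → ∑ x ∈ S, x ≠ 0 := by
    have hkcase : k = 2 ∨ (k = 3 ∧ ringChar F = 2) ∨ (k = q - 2 ∧ ringChar F = 2)
        ∨ k = q - 1 := by
      rcases hcond with ⟨hp2, _, hk' | hk' | hk'⟩ | ⟨_, _, hk' | hk'⟩ <;>
        simp_all <;> omega
    intro S h0S hScard hsum0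
    rcases hkcase with hkv | ⟨hkv, hc2⟩ | ⟨hkv, hc2⟩ | hkv
    · -- k = 2
      have h1 : S.card = 1 := by omega
      obtain ⟨x, rfl⟩ := Finset.card_eq_one.mp h1
      rw [Finset.sum_singleton] at hsum0
      exact h0S (by rw [← hsum0]; exact Finset.mem_singleton_self x)
    · -- k = 3, char 2
      haveI : CharP F 2 := by rw [← hc2]; exact ringChar.charP F
      have h1 : S.card = 2 := by omega
      obtain ⟨x, y, hxy, rfl⟩ := Finset.card_eq_two.mp h1
      rw [Finset.sum_pair hxy] at hsum0
      have hx : x = -y := eq_neg_of_add_eq_zero_left hsum0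
      rw [CharTwo.neg_eq] at hx
      exact hxy hx
    · -- k = q - 2, char 2
      haveI : CharP F 2 := by rw [← hc2]; exact ringChar.charP F
      have hTcard : (Finset.univ \ insert (0 : F) S).card = 2 := by
        rw [Finset.card_sdiff_of_subset (Finset.subset_univ _),
          Finset.card_insert_of_notMem h0S, hScard, Finset.card_univ, hcard]
        omega
      obtain ⟨x, y, hxy, hT⟩ := Finset.card_eq_two.mp hTcard
      have h := hcompl S h0S
      rw [hT, Finset.sum_pair hxy, hsum0] at h
      have hxy0 : x + y = 0 := neg_eq_zero.mp h.symm
      have hx : x = -y := eq_neg_of_add_eq_zero_left hxy0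
      rw [CharTwo.neg_eq] at hx
      exact hxy hx
    · -- k = q - 1
      have hTcard : (Finset.univ \ insert (0 : F) S).card = 1 := by
        rw [Finset.card_sdiff_of_subset (Finset.subset_univ _),
          Finset.card_insert_of_notMem h0S, hScard, Finset.card_univ, hcard]
        omega
      obtain ⟨t, hT⟩ := Finset.card_eq_one.mp hTcard
      have ht : t ∉ insert (0 : F) S := by
        have : t ∈ Finset.univ \ insert (0 : F) S := hT ▸ Finset.mem_singleton_self t
        exact (Finset.mem_sdiff.mp this).2
      have ht0 : t ≠ 0 := fun h => ht (h ▸ Finset.mem_insert_self 0 S)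
      have h := hcompl S h0S
      rw [hT, Finset.sum_singleton, hsum0] at h
      exact ht0 (neg_eq_zero.mp h.symm)
  -- θ is surjective onto nonzero elements
  have hθsurj : ∀ x : F, x ≠ 0 → ∃ j, θ j = x := by
    have himg : Finset.image θ Finset.univ = Finset.univ.erase (0 : F) := by
      apply Finset.eq_of_subset_of_card_le
      · intro x hx
        obtain ⟨j, _, rfl⟩ := Finset.mem_image.mp hx
        exact Finset.mem_erase.mpr ⟨hθne j, Finset.mem_univ _⟩
      · rw [Finset.card_erase_of_mem (Finset.mem_univ 0),
          Finset.card_image_of_injective _ hθinj, Finset.card_univ, Finset.card_univ,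
          Fintype.card_fin, hcard]
    intro x hx
    have : x ∈ Finset.image θ Finset.univ := by
      rw [himg]
      exact Finset.mem_erase.mpr ⟨hx, Finset.mem_univ _⟩
    obtain ⟨j, _, hj⟩ := Finset.mem_image.mp this
    exact ⟨j, hj⟩
  -- membership characterization
  have hmem : ∀ c : Fin (q + 1) → F,
      c ∈ rowSpan (G1 q k θ) ↔ ∃ a : Fin k → F, cword q k θ a = c := by
    intro c
    rw [rowSpan]; refine Iff.trans (Submodule.mem_span_range_iff_exists_fun _) ?_
    constructor
    · rintro ⟨a, ha⟩
      refine ⟨a, ?_⟩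
      rw [← ha]
      funext j
      simp [cword, Finset.sum_apply]
    · rintro ⟨a, ha⟩
      refine ⟨a, ?_⟩
      rw [← ha]
      funext j
      simp [cword, Finset.sum_apply]
  -- coefficient identities
  have hcoeff0 : ∀ a : Fin k → F, (polyOf k a).coeff (k - 1) = a ⟨0, by omega⟩ := by
    intro a
    have := polyOf_coeff k a ⟨0, by omega⟩
    simpa using this
  have hcoeff1 : ∀ a : Fin k → F, (polyOf k a).coeff (k - 2) = a ⟨1, by omega⟩ := by
    intro a
    have h := polyOf_coeff k a ⟨1, by omega⟩
    have he : k - 1 - ((⟨1, by omega⟩ : Fin k) : ℕ) = k - 2 := by simp; omega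
    rwa [he] at h
  have hazero : ∀ a : Fin k → F, polyOf k a = 0 → a = 0 := by
    intro a ha
    funext i
    have := polyOf_coeff k a i
    rw [ha] at this
    simpa using this.symm
  constructor
  · -- finrank = k
    have hli : LinearIndependent F (G1 q k θ) := by
      refine Fintype.linearIndependent_iff.mpr ?_
      intro g hg
      have hcz : ∀ j, cword q k θ g j = 0 := by
        intro j
        have := congrFun hg j
        simpa [cword, Finset.sum_apply] using this
      have hf0 : polyOf k g = 0 := by
        apply Polynomial.eq_zero_of_natDegree_lt_card_of_eval_eq_zero _ hθinj
        · intro j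
          have h := hcz ⟨j.1, by omega⟩
          rwa [cword_lt θ g (show ((⟨j.1, by omega⟩ : Fin (q+1)) : ℕ) < q - 1 from j.2),
            Fin.eta] at h
        · rw [Fintype.card_fin]
          have := polyOf_natDegree_le k g
          omega
      intro i
      have hg0 := hazero g hf0
      rw [hg0]
      rfl
    rw [rowSpan, finrank_span_eq_card hli, Fintype.card_fin]
  · constructor
    · -- existence of a minimum-weight codeword
      obtain ⟨R, hRsub, hRcard⟩ := Finset.exists_subset_card_eq (s := Finset.univ.erase (0 : F)) (n := k - 1)
        (by rw [Finset.card_erase_of_mem (Finset.mem_univ 0), Finset.card_univ, hcard]; omega)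
      have h0R : (0 : F) ∉ R := fun h => (Finset.mem_erase.mp (hRsub h)).1 rfl
      set f : Polynomial F := ∏ α ∈ R, (Polynomial.X - Polynomial.C α) with hf
      have hmon : f.Monic := monic_prod_of_monic _ _ fun _ _ => Polynomial.monic_X_sub_C _
      have hdegf : f.natDegree = k - 1 := by
        rw [hf, Polynomial.natDegree_prod _ _ (fun α _ => Polynomial.X_sub_C_ne_zero α)]
        simp [Polynomial.natDegree_X_sub_C, hRcard]
      set a : Fin k → F := fun i => f.coeff (k - 1 - (i : ℕ)) with ha
      have hpa : polyOf k a = f := polyOf_of_coeff f (le_of_eq hdegf) (by omega)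
      have ha0 : a ⟨0, by omega⟩ = 1 := by
        rw [ha]
        simp only []
        have hdd : k - 1 - ((⟨0, by omega⟩ : Fin k) : ℕ) = f.natDegree := by
          rw [hdegf]; simp
        rw [hdd]
        exact hmon.coeff_natDegree
      have ha1 : a ⟨1, by omega⟩ = -∑ α ∈ R, α := by
        rw [ha]
        have he : k - 1 - ((⟨1, by omega⟩ : Fin k) : ℕ) = k - 2 := by simp; omega
        simp only []
        rw [he]
        have hcp := Polynomial.prod_X_sub_C_coeff_card_pred R (id : F → F) (by omega)
        simp only [id] at hcp
        rw [hf]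
        rw [show R.card - 1 = k - 2 by omega] at hcp
        simpa using hcp
      refine ⟨cword q k θ a, (hmem _).mpr ⟨a, rfl⟩, ?_, ?_⟩
      · -- nonzero
        intro hc0
        have h := cword_q1 (F := F) hq2 hk2 θ a
          (rfl : (((⟨q - 1, by omega⟩ : Fin (q + 1))) : ℕ) = q - 1)
        rw [hc0] at h
        simp only [Pi.zero_apply] at h
        rw [ha0] at h
        exact one_ne_zero h.symm
      · -- hamming weight
        have hZ := cword_zeros (F := F) hq2 hk2 θ a
        have hn := hn_add (cword q k θ a)
        have hZθ : (Finset.univ.filter fun j : Fin (q - 1) =>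
            (polyOf k a).eval (θ j) = 0).card = k - 1 := by
          rw [hpa, hf, zeros_card_eq θ hθinj hθsurj R h0R, hRcard]
        have hsumR : ∑ α ∈ R, α ≠ 0 := lemA R h0R hRcard
        rw [hZθ, if_neg (by rw [ha0]; exact one_ne_zero),
          if_neg (by rw [ha1]; exact neg_ne_zero.mpr hsumR)] at hZ
        omega
    · -- lower bound on weight of nonzero codewords
      intro c hc hc0
      obtain ⟨a, rfl⟩ := (hmem c).mp hc
      have hZ := cword_zeros (F := F) hq2 hk2 θ a
      have hn := hn_add (cword q k θ a)
      have hane : a ≠ 0 := by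
        intro h
        apply hc0
        funext j
        rw [h]
        simp [cword]
      have hfne : polyOf k a ≠ 0 := fun h => hane (hazero a h)
      have hdegle := polyOf_natDegree_le k a
      have hZθle := zeros_card_le θ hθinj (polyOf k a) hfne
      set Zθc := (Finset.univ.filter fun j : Fin (q - 1) =>
        (polyOf k a).eval (θ j) = 0).card with hZθc
      suffices h : Zθc + (if a ⟨0, by omega⟩ = 0 then 1 else 0)
          + (if a ⟨1, by omega⟩ = 0 then 1 else 0) ≤ k - 1 by omega
      by_cases h0 : a ⟨0, by omega⟩ = 0 <;> by_cases h1 : a ⟨1, by omega⟩ = 0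
      · -- both zero
        rw [if_pos h0, if_pos h1]
        have hk3 : 3 ≤ k := by
          by_contra hk3
          have hk2' : k = 2 := by omega
          apply hane
          funext i
          have hi := i.isLt
          rcases (by omega : (i : ℕ) = 0 ∨ (i : ℕ) = 1) with h | h
          · have : i = ⟨0, by omega⟩ := Fin.ext (by simp [h])
            rw [this]; exact h0
          · have : i = ⟨1, by omega⟩ := Fin.ext (by simp [h])
            rw [this]; exact h1
        have hdeg3 : (polyOf k a).natDegree ≤ k - 3 := by
          rw [Polynomial.natDegree_le_iff_coeff_eq_zero]
          intro N hN
          rcases eq_or_ne N (k - 1) with h | h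
          · rw [h, hcoeff0 a]; exact h0
          · rcases eq_or_ne N (k - 2) with h' | h'
            · rw [h', hcoeff1 a]; exact h1
            · exact Polynomial.coeff_eq_zero_of_natDegree_lt (by omega)
        omega
      · -- a0 = 0, a1 ≠ 0
        rw [if_pos h0, if_neg h1]
        have hdeg2 : (polyOf k a).natDegree ≤ k - 2 := by
          rw [Polynomial.natDegree_le_iff_coeff_eq_zero]
          intro N hN
          rcases eq_or_ne N (k - 1) with h | h
          · rw [h, hcoeff0 a]; exact h0
          · exact Polynomial.coeff_eq_zero_of_natDegree_lt (by omega)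
        omega
      · -- a0 ≠ 0, a1 = 0
        rw [if_neg h0, if_pos h1]
        suffices h : Zθc ≤ k - 2 by omega
        by_contra hcon
        have hZθeq : Zθc = k - 1 := by omega
        set Zθ := Finset.univ.filter fun j : Fin (q - 1) => (polyOf k a).eval (θ j) = 0
        set R := Zθ.image θ with hR
        have hRcard : R.card = k - 1 := by
          rw [hR, Finset.card_image_of_injective _ hθinj]
          exact hZθeq
        have h0R : (0 : F) ∉ R := by
          intro h
          obtain ⟨j, _, hj⟩ := Finset.mem_image.mp h
          exact hθne j hj
        have hroots : ∀ α ∈ R, (polyOf k a).eval α = 0 := by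
          intro α hα
          obtain ⟨j, hj, rfl⟩ := Finset.mem_image.mp hα
          exact (Finset.mem_filter.mp hj).2
        have hkey := key_poly hk2 (polyOf k a) hdegle R hRcard hroots
        rw [hcoeff0 a, hcoeff1 a, h1] at hkey
        have hsum0 : ∑ α ∈ R, α = 0 := by
          rcases mul_eq_zero.mp (neg_eq_zero.mp hkey.symm) with h | h
          · exact absurd h h0
          · exact h
        exact lemA R h0R hRcard hsum0
      · rw [if_neg h0, if_neg h1]
        omega
end

section
/- Let C3 be the linear code over F_{2^m} with generator matrix G3. Then the supports of the minimum weight (weight-k) codewords of C3^⊥ form a simple 2-(2^m−1, k, λ1^c) design, where λ1^c = (1/2^m)·[ binom(2^m−3, k−2) + (−1)^{k+⌊k/2⌋}·(k(k−1)/(2⌊k/2⌋))·binom(2^{m−1}−2, ⌊k/2⌋−1) ]. That is, the distinct supports of weight-k codewords of C3^⊥ are k-subsets of the coordinate set {1, ..., 2^m−1}, and every 2-element subset of coordinates is contained in exactly λ1^c of these supports. -/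
set_option linter.unusedSectionVars false
set_option maxHeartbeats 1000000


open Finset

variable {F : Type*} [Field F] [Fintype F] [DecidableEq F]

/-- The generator matrix `G₃`: the `j`-th column is
`(1, θⱼ, θⱼ², …, θⱼ^{k-2}, θⱼ^{k})ᵀ` (the power `θⱼ^{k-1}` is omitted). -/
def G3 (m k : ℕ) (θ : Fin (2 ^ m - 1) → F) : Matrix (Fin k) (Fin (2 ^ m - 1)) F :=
  Matrix.of fun i j =>
    if (i : ℕ) = k - 1 then θ j ^ k else θ j ^ (i : ℕ)

namespace S7

open Polynomial




/-! ### Nat binomial helpers -/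

lemma natH {M t s : ℕ} (h : t + s = M) (hM : 1 ≤ M) :
    t * (M - 1).choose t = s * (M - 1).choose s := by
  rcases Nat.eq_zero_or_pos t with ht | ht
  · subst ht
    simp only [zero_mul]
    rw [Nat.choose_eq_zero_of_lt (by omega), mul_zero]
  rcases Nat.eq_zero_or_pos s with hs | hs
  · subst hs
    simp only [zero_mul]
    rw [Nat.choose_eq_zero_of_lt (by omega), mul_zero]
  have h1 := Nat.choose_succ_right_eq (M - 1) (t - 1)
  have ht1 : t - 1 + 1 = t := by omega
  rw [ht1] at h1
  have h2 : (M - 1) - (t - 1) = s := by omega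
  rw [h2] at h1
  have h3 : (M - 1).choose (t - 1) = (M - 1).choose s := by
    have : (M - 1) - s = t - 1 := by omega
    rw [← this, Nat.choose_symm (by omega)]
  rw [h3] at h1
  rw [mul_comm t, mul_comm s]
  exact h1

lemma natH2 {M t s : ℕ} (h : t + s = M) (hM : 1 ≤ M) :
    M.choose t = (M - 1).choose t + (M - 1).choose s := by
  rcases Nat.eq_zero_or_pos t with ht | ht
  · subst ht
    simp only [Nat.choose_zero_right]
    rw [Nat.choose_eq_zero_of_lt (by omega)]
  have hM1 : M - 1 + 1 = M := by omega
  have ht1 : t - 1 + 1 = t := by omega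
  have h1 := Nat.choose_succ_succ (M - 1) (t - 1)
  simp only [Nat.succ_eq_add_one] at h1
  rw [hM1, ht1] at h1
  have h3 : (M - 1).choose (t - 1) = (M - 1).choose s := by
    have : (M - 1) - s = t - 1 := by omega
    rw [← this, Nat.choose_symm (by omega)]
  rw [h3] at h1
  omega

/-! ### sign character on `ZMod 2` -/

def sgn (x : ZMod 2) : ℤ := if x = 0 then 1 else -1

lemma sgn_zero : sgn 0 = 1 := rfl

lemma sgn_one : sgn 1 = -1 := rfl

lemma sgn_add : ∀ (x y : ZMod 2), sgn (x + y) = sgn x * sgn y := by decide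

lemma sgn_eq_one_of (x : ZMod 2) (h : x = 0) : sgn x = 1 := by subst h; rfl

lemma sgn_eq_neg_one_of (x : ZMod 2) (h : x ≠ 0) : sgn x = -1 := by
  simp [sgn, h]

lemma sgn_sum {α : Type*} (T : Finset α) (g : α → ZMod 2) :
    sgn (∑ x ∈ T, g x) = ∏ x ∈ T, sgn (g x) := by
  classical
  induction T using Finset.cons_induction with
  | empty => simp [sgn]
  | cons a T ha ih => rw [Finset.sum_cons, Finset.prod_cons, sgn_add, ih]

/-! ### Polynomial coefficient computations over ℤ -/

lemma coeff_sq_sub_one_pow (M d : ℕ) :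
    ((X ^ 2 - 1 : ℤ[X]) ^ M).coeff d
      = if 2 ∣ d then (-1) ^ (M - d / 2) * (M.choose (d / 2) : ℤ) else 0 := by
  have h : (X ^ 2 - 1 : ℤ[X]) ^ M
      = ∑ i ∈ range (M + 1), Polynomial.C ((-1 : ℤ) ^ (M - i) * (M.choose i : ℤ)) * X ^ (2 * i) := by
    have : (X ^ 2 - 1 : ℤ[X]) = X ^ 2 + (-1) := by ring
    rw [this, add_pow]
    refine Finset.sum_congr rfl fun i hi => ?_
    rw [← pow_mul]
    have hneg : ((-1 : ℤ[X]) ^ (M - i)) = Polynomial.C ((-1 : ℤ) ^ (M - i)) := by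
      rw [map_pow, map_neg, map_one]
    have hc : ((M.choose i : ℕ) : ℤ[X]) = Polynomial.C ((M.choose i : ℤ)) := by
      simp
    rw [hneg]
    rw [show ((M.choose i : ℕ) : ℤ[X]) = Polynomial.C ((M.choose i : ℤ)) from hc] at *
    rw [map_mul]
    ring
  rw [h, finset_sum_coeff]
  simp only [coeff_C_mul, coeff_X_pow]
  by_cases hdvd : 2 ∣ d
  · rw [if_pos hdvd]
    by_cases hle : d / 2 ≤ M
    · rw [Finset.sum_eq_single (d / 2)]
      · rw [if_pos (by omega), mul_one]
      · intro i hi hne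
        rw [if_neg (by omega), mul_zero]
      · intro hmem
        exact absurd (Finset.mem_range.mpr (by omega)) hmem
    · rw [Finset.sum_eq_zero, Nat.choose_eq_zero_of_lt (by omega)]
      · simp
      · intro i hi
        rw [Finset.mem_range] at hi
        rw [if_neg (by omega), mul_zero]
  · rw [if_neg hdvd]
    refine Finset.sum_eq_zero fun i hi => ?_
    rw [if_neg (by omega), mul_zero]

lemma coeff_mul_X_sub_one (P : ℤ[X]) (e : ℕ) :
    (P * (X - 1)).coeff (e + 1) = P.coeff e - P.coeff (e + 1) := by
  have h : P * (X - 1) = P * X - P := by ring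
  rw [h, coeff_sub, coeff_mul_X]

lemma coeff_mul_X_add_one (P : ℤ[X]) (e : ℕ) :
    (P * (X + 1)).coeff (e + 1) = P.coeff e + P.coeff (e + 1) := by
  have h : P * (X + 1) = P * X + P := by ring
  rw [h, coeff_add, coeff_mul_X]

lemma coeff_mul_cube (P : ℤ[X]) (e : ℕ) :
    (P * (X - 1) ^ 3).coeff (e + 3)
      = P.coeff e - 3 * P.coeff (e + 1) + 3 * P.coeff (e + 2) - P.coeff (e + 3) := by
  have h : P * (X - 1) ^ 3
      = P * X ^ 3 - ((P * X ^ 2 + P * X ^ 2) + P * X ^ 2) + ((P * X + P * X) + P * X) - P := by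
    ring
  rw [h, coeff_sub, coeff_add, coeff_sub, coeff_add, coeff_add, coeff_add, coeff_add]
  have h3 : (P * X ^ 3).coeff (e + 3) = P.coeff e := by
    rw [coeff_mul_X_pow]
  have h2 : (P * X ^ 2).coeff (e + 3) = P.coeff (e + 1) := by
    rw [show e + 3 = (e + 1) + 2 by omega, coeff_mul_X_pow]
  have h1 : (P * X).coeff (e + 3) = P.coeff (e + 2) := by
    rw [show e + 3 = (e + 2) + 1 by omega, coeff_mul_X]
  rw [h3, h2, h1]
  ring


/-! ### W values -/

-- coefficient of (X^2-1)^M * (X-1) at odd degree 2s+1, s+t = M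
lemma W_even_two (M s t : ℕ) (hst : s + t = M) :
    (((X ^ 2 - 1 : ℤ[X]) ^ M) * (X - 1)).coeff (2 * s + 1) = (-1) ^ t * (M.choose t : ℤ) := by
  rw [show 2 * s + 1 = (2 * s) + 1 from rfl, coeff_mul_X_sub_one]
  rw [coeff_sq_sub_one_pow, coeff_sq_sub_one_pow]
  rw [if_pos ⟨s, by omega⟩, if_neg (by omega)]
  have h1 : 2 * s / 2 = s := by omega
  have h2 : M - s = t := by omega
  have h3 : M.choose s = M.choose t := by
    rw [show s = M - t by omega, Nat.choose_symm (by omega)]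
  rw [h1, h2, h3, sub_zero]

lemma W_even_three (M s t : ℕ) (hst : s + t = M) :
    (((X ^ 2 - 1 : ℤ[X]) ^ M) * (X + 1)).coeff (2 * s + 1) = (-1) ^ t * (M.choose t : ℤ) := by
  rw [show 2 * s + 1 = (2 * s) + 1 from rfl, coeff_mul_X_add_one]
  rw [coeff_sq_sub_one_pow, coeff_sq_sub_one_pow]
  rw [if_pos ⟨s, by omega⟩, if_neg (by omega)]
  have h1 : 2 * s / 2 = s := by omega
  have h2 : M - s = t := by omega
  have h3 : M.choose s = M.choose t := by
    rw [show s = M - t by omega, Nat.choose_symm (by omega)]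
  rw [h1, h2, h3, add_zero]

lemma W_even_one (M s t : ℕ) (hst : s + t = M) (hs : 1 ≤ s) (ht : 1 ≤ t) :
    (((X ^ 2 - 1 : ℤ[X]) ^ (M - 1)) * (X - 1) ^ 3).coeff (2 * s + 1)
      = (-1) ^ t * (((M - 1).choose t : ℤ) - 3 * ((M - 1).choose (t - 1) : ℤ)) := by
  rw [show 2 * s + 1 = (2 * (s - 1)) + 3 by omega, coeff_mul_cube]
  rw [coeff_sq_sub_one_pow, coeff_sq_sub_one_pow, coeff_sq_sub_one_pow, coeff_sq_sub_one_pow]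
  rw [if_pos ⟨s - 1, by omega⟩, if_neg (by omega), if_pos (by exact ⟨s, by omega⟩), if_neg (by omega)]
  have e1 : 2 * (s - 1) / 2 = s - 1 := by omega
  have e2 : (2 * (s - 1) + 2) / 2 = s := by omega
  rw [e1, e2]
  have d1 : (M - 1) - (s - 1) = t := by omega
  have d2 : (M - 1) - s = t - 1 := by omega
  rw [d1, d2]
  have c1 : (M - 1).choose (s - 1) = (M - 1).choose t := by
    rw [show s - 1 = (M - 1) - t by omega, Nat.choose_symm (by omega)]
  have c2 : (M - 1).choose s = (M - 1).choose (t - 1) := by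
    rw [show s = (M - 1) - (t - 1) by omega, Nat.choose_symm (by omega)]
  rw [c1, c2]
  have hpow : ((-1 : ℤ)) ^ (t - 1) = (-1) ^ t * (-1) := by
    have h := pow_succ (-1 : ℤ) (t - 1)
    rw [show t - 1 + 1 = t by omega] at h
    rw [h]; ring
  rw [hpow]
  ring

lemma W_odd_two (M s r : ℕ) (hsr : s + r = M) (hs : 1 ≤ s) :
    (((X ^ 2 - 1 : ℤ[X]) ^ M) * (X - 1)).coeff (2 * s) = (-1) ^ (r + 1) * (M.choose r : ℤ) := by
  rw [show 2 * s = (2 * s - 1) + 1 by omega, coeff_mul_X_sub_one]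
  rw [coeff_sq_sub_one_pow, coeff_sq_sub_one_pow]
  rw [if_neg (by omega), if_pos (by exact ⟨s, by omega⟩)]
  have e2 : (2 * s - 1 + 1) / 2 = s := by omega
  rw [e2, show M - s = r by omega]
  have c1 : M.choose s = M.choose r := by
    rw [show s = M - r by omega, Nat.choose_symm (by omega)]
  rw [c1]
  ring

lemma W_odd_three (M s r : ℕ) (hsr : s + r = M) (hs : 1 ≤ s) :
    (((X ^ 2 - 1 : ℤ[X]) ^ M) * (X + 1)).coeff (2 * s) = (-1) ^ r * (M.choose r : ℤ) := by
  rw [show 2 * s = (2 * s - 1) + 1 by omega, coeff_mul_X_add_one]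
  rw [coeff_sq_sub_one_pow, coeff_sq_sub_one_pow]
  rw [if_neg (by omega), if_pos (by exact ⟨s, by omega⟩)]
  have e2 : (2 * s - 1 + 1) / 2 = s := by omega
  rw [e2, show M - s = r by omega]
  have c1 : M.choose s = M.choose r := by
    rw [show s = M - r by omega, Nat.choose_symm (by omega)]
  rw [c1]
  ring

lemma W_odd_one (M s r : ℕ) (hsr : s + r = M) (hs : 2 ≤ s) :
    (((X ^ 2 - 1 : ℤ[X]) ^ (M - 1)) * (X - 1) ^ 3).coeff (2 * s)
      = (-1) ^ r * (((M - 1).choose s : ℤ) - 3 * ((M - 1).choose r : ℤ)) := by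
  rw [show 2 * s = (2 * s - 3) + 3 by omega, coeff_mul_cube]
  rw [coeff_sq_sub_one_pow, coeff_sq_sub_one_pow, coeff_sq_sub_one_pow, coeff_sq_sub_one_pow]
  rw [if_neg (by omega), if_pos (by exact ⟨s - 1, by omega⟩), if_neg (by omega),
    if_pos (by exact ⟨s, by omega⟩)]
  have e1 : (2 * s - 3 + 1) / 2 = s - 1 := by omega
  have e2 : (2 * s - 3 + 3) / 2 = s := by omega
  rw [e1, e2]
  have d1 : (M - 1) - (s - 1) = r := by omega
  rw [d1]
  have c1 : (M - 1).choose (s - 1) = (M - 1).choose r := by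
    rw [show s - 1 = (M - 1) - r by omega, Nat.choose_symm (by omega)]
  rw [c1]
  -- remaining : -(3 * ((-1)^r * C(M-1,r))) + (-(-1)^(M-1-s) * C(M-1,s)) forms
  rcases Nat.eq_zero_or_pos r with hr | hr
  · -- r = 0 : s = M, choose (M-1) s = 0
    subst hr
    rw [Nat.choose_eq_zero_of_lt (show M - 1 < s by omega)]
    simp
  · have d2 : (M - 1) - s = r - 1 := by omega
    rw [d2]
    have hpow : ((-1 : ℤ)) ^ (r - 1) = (-1) ^ r * (-1) := by
      have h := pow_succ (-1 : ℤ) (r - 1)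
      rw [show r - 1 + 1 = r by omega] at h
      rw [h]; ring
    rw [hpow]
    ring

/-! ### corr and the combination identities -/

def corr (m j : ℕ) : ℤ :=
  if Even j then (-1) ^ (j / 2 + 1) * (j + 1) * ((2 ^ (m - 1) - 2).choose (j / 2) : ℤ)
  else (-1) ^ (j / 2) * (j + 2) * ((2 ^ (m - 1) - 2).choose (j / 2) : ℤ)

lemma corr_even (m t s : ℕ) (hm : 3 ≤ m) (hst : s + t = 2 ^ (m - 1) - 2) (hs : 1 ≤ s)
    (ht : 1 ≤ t) :
    ((2 ^ (m - 2) : ℤ) - 1) * ((-1) ^ t * (((2 ^ (m - 1) - 2 - 1).choose t : ℤ)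
        - 3 * ((2 ^ (m - 1) - 2 - 1).choose (t - 1) : ℤ)))
      - 2 ^ (m - 1) * ((-1) ^ t * (((2 ^ (m - 1) - 2).choose t : ℤ)))
      + 2 ^ (m - 2) * ((-1) ^ t * (((2 ^ (m - 1) - 2).choose t : ℤ)))
      = (-1) ^ (t + 1) * (2 * t + 1) * (((2 ^ (m - 1) - 2).choose t : ℤ)) := by
  set M : ℕ := 2 ^ (m - 1) - 2 with hM
  have hm4 : 4 ≤ 2 ^ (m - 1) := by
    calc (4 : ℕ) = 2 ^ 2 := by norm_num
    _ ≤ 2 ^ (m - 1) := Nat.pow_le_pow_right (by norm_num) (by omega)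
  have hM1 : 1 ≤ M := by omega
  have hts : t ≤ M := by omega
  -- Pascal : C(M,t) = C(M-1,t) + C(M-1,s)  (using natH2 on t+s = M)
  have hp : M.choose t = (M - 1).choose t + (M - 1).choose s := natH2 (by omega) hM1
  -- symm : C(M-1, t-1) = C(M-1, s)
  have hsymm : (M - 1).choose (t - 1) = (M - 1).choose s := by
    rw [show t - 1 = (M - 1) - s by omega, Nat.choose_symm (by omega)]
  -- core : t * C(M-1,t) = s * C(M-1,s)
  have hcore : t * (M - 1).choose t = s * (M - 1).choose s := natH (by omega) hM1
  -- 2^(m-1) = 2 * 2^(m-2), M = 2*2^(m-2) - 2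
  have hpow2 : (2 : ℤ) ^ (m - 1) = 2 * 2 ^ (m - 2) := by
    rw [← pow_succ']
    congr 1
    omega
  rw [hsymm, hp, hpow2]
  have hcoreZ : (t : ℤ) * ((M - 1).choose t : ℤ) = (s : ℤ) * ((M - 1).choose s : ℤ) := by
    exact_mod_cast congrArg (Nat.cast : ℕ → ℤ) hcore
  have hsZ : (s : ℤ) = 2 * 2 ^ (m - 2) - 2 - t := by
    have : (s : ℤ) + t = (M : ℤ) := by exact_mod_cast congrArg (Nat.cast : ℕ → ℤ) hst
    have hMZ : (M : ℤ) = 2 ^ (m - 1) - 2 := by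
      have : (2 : ℤ) ^ (m - 1) = ((2 ^ (m - 1) : ℕ) : ℤ) := by push_cast; ring
      omega
    rw [hpow2] at hMZ
    omega
  rw [hsZ] at hcoreZ
  push_cast
  linear_combination (2 * (-1 : ℤ) ^ t) * hcoreZ

lemma corr_odd (m r s : ℕ) (hm : 3 ≤ m) (hsr : s + r = 2 ^ (m - 1) - 2) (hs : 1 ≤ s) :
    ((2 ^ (m - 2) : ℤ) - 1) * ((-1) ^ r * (((2 ^ (m - 1) - 2 - 1).choose s : ℤ)
        - 3 * ((2 ^ (m - 1) - 2 - 1).choose r : ℤ)))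
      - 2 ^ (m - 1) * ((-1) ^ (r + 1) * (((2 ^ (m - 1) - 2).choose r : ℤ)))
      + 2 ^ (m - 2) * ((-1) ^ r * (((2 ^ (m - 1) - 2).choose r : ℤ)))
      = (-1) ^ r * (2 * r + 3) * (((2 ^ (m - 1) - 2).choose r : ℤ)) := by
  set M : ℕ := 2 ^ (m - 1) - 2 with hM
  have hm4 : 4 ≤ 2 ^ (m - 1) := by
    calc (4 : ℕ) = 2 ^ 2 := by norm_num
    _ ≤ 2 ^ (m - 1) := Nat.pow_le_pow_right (by norm_num) (by omega)
  have hM1 : 1 ≤ M := by omega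
  have hp : M.choose r = (M - 1).choose r + (M - 1).choose s := natH2 (by omega) hM1
  have hcore : r * (M - 1).choose r = s * (M - 1).choose s := natH (by omega) hM1
  have hpow2 : (2 : ℤ) ^ (m - 1) = 2 * 2 ^ (m - 2) := by
    rw [← pow_succ']
    congr 1
    omega
  rw [hp, hpow2]
  have hcoreZ : (r : ℤ) * ((M - 1).choose r : ℤ) = (s : ℤ) * ((M - 1).choose s : ℤ) := by
    exact_mod_cast congrArg (Nat.cast : ℕ → ℤ) hcore
  have hsZ : (s : ℤ) = 2 * 2 ^ (m - 2) - 2 - r := by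
    have h1 : (s : ℤ) + r = (M : ℤ) := by exact_mod_cast congrArg (Nat.cast : ℕ → ℤ) hsr
    have hMZ : (M : ℤ) = 2 ^ (m - 1) - 2 := by
      have : (2 : ℤ) ^ (m - 1) = ((2 ^ (m - 1) : ℕ) : ℤ) := by push_cast; ring
      omega
    rw [hpow2] at hMZ
    omega
  rw [hsZ] at hcoreZ
  push_cast
  linear_combination (-2 * (-1 : ℤ) ^ r) * hcoreZ


/-! ### Fiber counting for additive homs -/

lemma fiber_card_eq {A B : Type*} [AddCommGroup A] [Fintype A] [DecidableEq A]
    [AddCommGroup B] [Fintype B] [DecidableEq B]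
    (ψ : A →+ B) (hsurj : Function.Surjective ψ) (b : B) :
    #(univ.filter fun a => ψ a = b) * Fintype.card B = Fintype.card A := by
  have key : ∀ b0 : B, #(univ.filter fun a => ψ a = b0) = #(univ.filter fun a => ψ a = 0) := by
    intro b0
    obtain ⟨a0, ha0⟩ := hsurj b0
    apply Finset.card_bij (fun a _ => a - a0)
    · intro a ha
      simp only [Finset.mem_filter, Finset.mem_univ, true_and] at ha ⊢
      rw [map_sub, ha, ha0, sub_self]
    · intro a1 h1 a2 h2 h
      exact sub_left_injective h
    · intro c hc
      simp only [Finset.mem_filter, Finset.mem_univ, true_and] at hc ⊢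
      exact ⟨c + a0, by rw [map_add, hc, ha0, zero_add], by rw [add_sub_cancel_right]⟩
  have htot : ∑ b0 : B, #(univ.filter fun a => ψ a = b0) = Fintype.card A := by
    rw [← Finset.card_eq_sum_card_fiberwise (fun a _ => Finset.mem_univ (ψ a))]
    exact Finset.card_univ
  rw [key b]
  calc #(univ.filter fun a => ψ a = 0) * Fintype.card B
      = ∑ _b0 : B, #(univ.filter fun a => ψ a = 0) := by
        rw [Finset.sum_const, Finset.card_univ, smul_eq_mul, mul_comm]
    _ = ∑ b0 : B, #(univ.filter fun a => ψ a = b0) := by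
        exact Finset.sum_congr rfl fun b0 _ => (key b0).symm
    _ = Fintype.card A := htot

section DualSpace

variable {F : Type*} [Field F] [Fintype F] [DecidableEq F] [Algebra (ZMod 2) F]
variable [Fintype (Module.Dual (ZMod 2) F)] [DecidableEq (Module.Dual (ZMod 2) F)]

omit [DecidableEq F] [DecidableEq (Module.Dual (ZMod 2) F)] in
lemma card_dual : Fintype.card (Module.Dual (ZMod 2) F) = Fintype.card F := by
  rw [Module.card_eq_pow_finrank (K := ZMod 2) (V := Module.Dual (ZMod 2) F),
    Module.card_eq_pow_finrank (K := ZMod 2) (V := F), Subspace.dual_finrank_eq]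

lemma exists_sep (x y : F) (hx : x ≠ 0) (hxy : x ≠ y) :
    ∃ φ : Module.Dual (ZMod 2) F, φ x = 1 ∧ φ y = 0 := by
  set W : Submodule (ZMod 2) F := Submodule.span (ZMod 2) {y} with hW
  have hxW : Submodule.Quotient.mk (p := W) x ≠ 0 := by
    rw [ne_eq, Submodule.Quotient.mk_eq_zero]
    intro hmem
    rw [hW, Submodule.mem_span_singleton] at hmem
    obtain ⟨c, hc⟩ := hmem
    have h01 : ∀ z : ZMod 2, z = 0 ∨ z = 1 := by decide
    have : c = 0 ∨ c = 1 := h01 c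
    rcases this with h | h
    · rw [h, zero_smul] at hc; exact hx hc.symm
    · rw [h, one_smul] at hc; exact hxy hc.symm
  have := (not_iff_not.mpr (Module.forall_dual_apply_eq_zero_iff (ZMod 2)
    (Submodule.Quotient.mk (p := W) x))).mpr hxW
  push_neg at this
  obtain ⟨ψ, hψ⟩ := this
  refine ⟨ψ.comp W.mkQ, ?_, ?_⟩
  · have : ψ (Submodule.Quotient.mk (p := W) x) ≠ 0 := hψ
    have h01 : ∀ z : ZMod 2, z ≠ 0 → z = 1 := by decide
    exact h01 _ this
  · have hy : W.mkQ y = 0 := by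
      rw [Submodule.mkQ_apply, Submodule.Quotient.mk_eq_zero]
      exact Submodule.mem_span_singleton_self y
    simp [LinearMap.comp_apply, hy]

/-- evaluation at `v` as an additive hom on the dual -/
def evalHom (v : F) : Module.Dual (ZMod 2) F →+ ZMod 2 where
  toFun φ := φ v
  map_zero' := rfl
  map_add' _ _ := rfl

lemma orth (v : F) :
    ∑ φ : Module.Dual (ZMod 2) F, sgn (φ v)
      = if v = 0 then (Fintype.card F : ℤ) else 0 := by
  by_cases hv : v = 0
  · subst hv
    rw [if_pos rfl]
    have : ∀ φ : Module.Dual (ZMod 2) F, sgn (φ 0) = 1 := fun φ => by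
      rw [map_zero]; rfl
    rw [Finset.sum_congr rfl fun φ _ => this φ, Finset.sum_const, Finset.card_univ, card_dual]
    simp
  · rw [if_neg hv]
    have hsurj : Function.Surjective (evalHom (F := F) v) := by
      intro z
      have h01 : z = 0 ∨ z = 1 := by revert z; decide
      rcases h01 with h | h
      · exact ⟨0, by simp [evalHom, h]⟩
      · have : ¬ ∀ φ : Module.Dual (ZMod 2) F, φ v = 0 :=
          fun hall => hv ((Module.forall_dual_apply_eq_zero_iff (ZMod 2) v).mp hall)
        push_neg at this
        obtain ⟨φ, hφ⟩ := this
        have h1 : φ v = 1 := by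
          have h01' : ∀ z : ZMod 2, z ≠ 0 → z = 1 := by decide
          exact h01' _ hφ
        exact ⟨φ, by simp [evalHom, h1, h]⟩
    have h0 := fiber_card_eq (evalHom (F := F) v) hsurj 0
    have h1 := fiber_card_eq (evalHom (F := F) v) hsurj 1
    have hcards : #(univ.filter fun φ : Module.Dual (ZMod 2) F => φ v = 0)
        = #(univ.filter fun φ : Module.Dual (ZMod 2) F => ¬ φ v = 0) := by
      have e0 : (univ.filter fun φ : Module.Dual (ZMod 2) F => φ v = 0)
          = (univ.filter fun φ => evalHom (F := F) v φ = 0) := rfl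
      have e1 : (univ.filter fun φ : Module.Dual (ZMod 2) F => ¬ φ v = 0)
          = (univ.filter fun φ => evalHom (F := F) v φ = 1) := by
        apply Finset.filter_congr
        intro φ _
        constructor
        · intro h
          have h01' : ∀ z : ZMod 2, z ≠ 0 → z = 1 := by decide
          exact h01' _ h
        · intro h h'
          rw [show (φ v : ZMod 2) = evalHom (F := F) v φ from rfl, h] at h'
          exact one_ne_zero h'
      rw [e0, e1]
      have heq := h0.trans h1.symm
      have hc2 : Fintype.card (ZMod 2) = 2 := by simp
      rw [hc2] at heq
      omega
    rw [← Finset.sum_filter_add_sum_filter_not univ (fun φ : Module.Dual (ZMod 2) F => φ v = 0)]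
    have hA : ∑ φ ∈ univ.filter (fun φ : Module.Dual (ZMod 2) F => φ v = 0), sgn (φ v)
        = #(univ.filter fun φ : Module.Dual (ZMod 2) F => φ v = 0) := by
      rw [Finset.sum_congr rfl (fun φ hφ => sgn_eq_one_of _ (Finset.mem_filter.mp hφ).2)]
      simp
    have hB : ∑ φ ∈ univ.filter (fun φ : Module.Dual (ZMod 2) F => ¬ φ v = 0), sgn (φ v)
        = -#(univ.filter fun φ : Module.Dual (ZMod 2) F => ¬ φ v = 0) := by
      rw [Finset.sum_congr rfl (fun φ hφ => sgn_eq_neg_one_of _ (Finset.mem_filter.mp hφ).2)]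
      simp [mul_comm]
    rw [hA, hB, hcards]
    ring

end DualSpace


section DualSpace2

variable {F : Type*} [Field F] [Fintype F] [DecidableEq F] [Algebra (ZMod 2) F]
variable [Fintype (Module.Dual (ZMod 2) F)] [DecidableEq (Module.Dual (ZMod 2) F)]

/-- evaluation at the pair `(a, b)` as an additive hom on the dual -/
def evalHom2 (a b : F) : Module.Dual (ZMod 2) F →+ ZMod 2 × ZMod 2 where
  toFun φ := (φ a, φ b)
  map_zero' := rfl
  map_add' _ _ := rfl

lemma fiber_ab (a b : F) (ha : a ≠ 0) (hb : b ≠ 0) (hab : a ≠ b) (pq : ZMod 2 × ZMod 2) :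
    #(univ.filter fun φ : Module.Dual (ZMod 2) F => (φ a, φ b) = pq) * 4 = Fintype.card F := by
  obtain ⟨φ10, h10a, h10b⟩ := exists_sep a b ha hab
  obtain ⟨φ01, h01b, h01a⟩ := exists_sep b a hb (Ne.symm hab)
  have hsurj : Function.Surjective (evalHom2 (F := F) a b) := by
    rintro ⟨p, q⟩
    refine ⟨p • φ10 + q • φ01, ?_⟩
    show ((p • φ10 + q • φ01) a, (p • φ10 + q • φ01) b) = (p, q)
    simp only [LinearMap.add_apply, LinearMap.smul_apply, h10a, h10b, h01a, h01b,
      smul_eq_mul, mul_one, mul_zero, add_zero, zero_add]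
  have hres := fiber_card_eq (evalHom2 (F := F) a b) hsurj pq
  have hc4 : Fintype.card (ZMod 2 × ZMod 2) = 4 := by simp
  rw [hc4] at hres
  rw [card_dual (F := F)] at hres
  rw [← hres]
  congr 2

lemma fiber_elt (φ : Module.Dual (ZMod 2) F) (hφ : φ ≠ 0) (z : ZMod 2) :
    #(univ.filter fun x : F => φ x = z) * 2 = Fintype.card F := by
  have hsurj : Function.Surjective φ.toAddMonoidHom := by
    intro w
    have h01 : w = 0 ∨ w = 1 := by revert w; decide
    rcases h01 with h | h
    · exact ⟨0, by simp [h]⟩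
    · obtain ⟨x, hx⟩ := DFunLike.ne_iff.mp hφ
      have hx1 : φ x = 1 := by
        have h01' : ∀ u : ZMod 2, u ≠ 0 → u = 1 := by decide
        exact h01' _ (by simpa using hx)
      exact ⟨x, by simp [LinearMap.toAddMonoidHom, hx1, h]⟩
  have hres := fiber_card_eq φ.toAddMonoidHom hsurj z
  have hc2 : Fintype.card (ZMod 2) = 2 := by simp
  rw [hc2] at hres
  rw [← hres]
  congr 2

end DualSpace2

/-! ### Generating function for subset sums -/

lemma W_as_coeff {F : Type*} [DecidableEq F] (A : Finset F) (f : F → ℤ) (j : ℕ) (hj : j ≤ #A) :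
    ∑ T ∈ A.powersetCard j, ∏ x ∈ T, f x
      = (∏ x ∈ A, (X + Polynomial.C (f x))).coeff (#A - j) := by
  rw [Finset.prod_X_add_C_coeff A f (Nat.sub_le _ _), Nat.sub_sub_self hj]

lemma prod_split {F : Type*} [DecidableEq F] (A : Finset F) (g : F → ZMod 2) :
    ∏ x ∈ A, (X + Polynomial.C (sgn (g x)))
      = (X + 1) ^ #(A.filter fun x => g x = 0) * (X - 1) ^ #(A.filter fun x => ¬ g x = 0) := by
  classical
  rw [← Finset.prod_filter_mul_prod_filter_not A (fun x => g x = 0)]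
  congr 1
  · have h1 : ∀ x ∈ A.filter (fun x => g x = 0), (X + Polynomial.C (sgn (g x))) = (X + 1 : ℤ[X]) := by
      intro x hx
      rw [sgn_eq_one_of _ (Finset.mem_filter.mp hx).2, map_one]
    rw [Finset.prod_congr rfl h1, Finset.prod_const]
  · have h2 : ∀ x ∈ A.filter (fun x => ¬ g x = 0), (X + Polynomial.C (sgn (g x))) = (X - 1 : ℤ[X]) := by
      intro x hx
      rw [sgn_eq_neg_one_of _ (Finset.mem_filter.mp hx).2, map_neg, map_one, ← sub_eq_add_neg]
    rw [Finset.prod_congr rfl h2, Finset.prod_const]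


/-- Sum over `j`-subsets of `A` of the product of signs. -/
def Wsum {F : Type*} [DecidableEq F] (A : Finset F) (j : ℕ) (g : F → ZMod 2) : ℤ :=
  ∑ T' ∈ A.powersetCard j, ∏ x ∈ T', sgn (g x)

lemma Wsum_def {F : Type*} [DecidableEq F] (A : Finset F) (j : ℕ) (g : F → ZMod 2) :
    Wsum A j g = ∑ T' ∈ A.powersetCard j, ∏ x ∈ T', sgn (g x) := rfl

lemma countB {F : Type*} [Field F] [Fintype F] [DecidableEq F] {m k : ℕ} (hm : 3 ≤ m)
    (hk : 3 ≤ k) (hk' : k ≤ 2 ^ m - 4) (hcard : Fintype.card F = 2 ^ m)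
    (a b : F) (ha : a ≠ 0) (hb : b ≠ 0) (hab : a ≠ b) :
    (#(((univ \ ({0, a, b} : Finset F)).powersetCard (k - 2)).filter
        fun T' => ∑ x ∈ T', x = a + b) : ℤ) * 2 ^ m
      = ((2 ^ m - 3).choose (k - 2) : ℤ) + corr m (k - 2) := by
  classical
  have hq8 : 8 ≤ 2 ^ m := by
    calc (8 : ℕ) = 2 ^ 3 := by norm_num
      _ ≤ 2 ^ m := Nat.pow_le_pow_right (by norm_num) hm
  have hhq : 2 ^ m = 2 * 2 ^ (m - 1) := by
    rw [← pow_succ']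
    congr 1
    omega
  have hh4 : 4 ≤ 2 ^ (m - 1) := by
    calc (4 : ℕ) = 2 ^ 2 := by norm_num
      _ ≤ 2 ^ (m - 1) := Nat.pow_le_pow_right (by norm_num) (by omega)
  have hq4 : 2 ^ (m - 1) = 2 * 2 ^ (m - 2) := by
    rw [← pow_succ']
    congr 1
    omega
  have h2q : 2 ≤ 2 ^ (m - 2) := by
    calc (2 : ℕ) = 2 ^ 1 := by norm_num
      _ ≤ 2 ^ (m - 2) := Nat.pow_le_pow_right (by norm_num) (by omega)
  have hchar : CharP F 2 := by
    obtain ⟨n, hp, hc⟩ := FiniteField.card F (ringChar F)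
    have hdvd : ringChar F ∣ 2 ^ m := by
      rw [← hcard, hc]
      exact dvd_pow_self _ n.pos.ne'
    have h2 : ringChar F = 2 :=
      (Nat.prime_dvd_prime_iff_eq hp Nat.prime_two).mp (hp.dvd_of_dvd_pow hdvd)
    exact h2 ▸ ringChar.charP F
  haveI := hchar
  letI : Algebra (ZMod 2) F := ZMod.algebra F 2
  haveI : Finite (Module.Dual (ZMod 2) F) :=
    Finite.of_injective (fun φ => (φ : F → ZMod 2)) DFunLike.coe_injective
  letI : Fintype (Module.Dual (ZMod 2) F) := Fintype.ofFinite _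
  letI : DecidableEq (Module.Dual (ZMod 2) F) := Classical.decEq _
  have hadd0 : ∀ x y : F, x + y = 0 ↔ x = y := by
    intro x y
    rw [← CharTwo.sub_eq_add, sub_eq_zero]
  have h0ab : (0 : F) ∉ ({a, b} : Finset F) := by
    simp only [Finset.mem_insert, Finset.mem_singleton]
    push_neg
    exact ⟨fun h => ha h.symm, fun h => hb h.symm⟩
  have hTcard : #({0, a, b} : Finset F) = 3 := by
    rw [Finset.card_insert_of_notMem h0ab,
      Finset.card_insert_of_notMem (by simpa using hab), Finset.card_singleton]
  set A : Finset F := univ \ ({0, a, b} : Finset F) with hA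
  have hAcard : #A = 2 ^ m - 3 := by
    rw [hA, Finset.card_sdiff_of_subset (Finset.subset_univ _), Finset.card_univ, hcard, hTcard]
  set j := k - 2 with hj
  have hjA : j ≤ #A := by omega
  -- main orthogonality step
  have key : (#((A.powersetCard j).filter fun T' => ∑ x ∈ T', x = a + b) : ℤ) * 2 ^ m
      = ∑ φ : Module.Dual (ZMod 2) F, sgn (φ a) * sgn (φ b) * Wsum A j ⇑φ := by
    have e1 : ∀ T' ∈ A.powersetCard j,
        (if (∑ x ∈ T', x) = a + b then (2 ^ m : ℤ) else 0)
          = ∑ φ : Module.Dual (ZMod 2) F, sgn (φ a) * (sgn (φ b) * ∏ x ∈ T', sgn (φ x)) := by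
      intro T' _
      have horth := orth (F := F) ((∑ x ∈ T', x) + (a + b))
      rw [hcard] at horth
      have hterm : ∀ φ : Module.Dual (ZMod 2) F,
          sgn (φ ((∑ x ∈ T', x) + (a + b)))
            = sgn (φ a) * (sgn (φ b) * ∏ x ∈ T', sgn (φ x)) := by
        intro φ
        rw [map_add, sgn_add, map_add, sgn_add, map_sum, sgn_sum]
        ring
      have hsum : ∑ φ : Module.Dual (ZMod 2) F, sgn (φ ((∑ x ∈ T', x) + (a + b)))
          = ∑ φ : Module.Dual (ZMod 2) F, sgn (φ a) * (sgn (φ b) * ∏ x ∈ T', sgn (φ x)) :=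
        Finset.sum_congr rfl fun φ _ => hterm φ
      rw [← hsum, horth]
      have hcast : ((2 ^ m : ℕ) : ℤ) = (2 : ℤ) ^ m := by push_cast; ring
      rw [hcast]
      exact if_congr (hadd0 _ _).symm rfl rfl
    calc (#((A.powersetCard j).filter fun T' => ∑ x ∈ T', x = a + b) : ℤ) * 2 ^ m
        = ∑ T' ∈ A.powersetCard j, (if (∑ x ∈ T', x) = a + b then (2 ^ m : ℤ) else 0) := by
          rw [← Finset.sum_filter, Finset.sum_const, nsmul_eq_mul]
      _ = ∑ T' ∈ A.powersetCard j, ∑ φ : Module.Dual (ZMod 2) F,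
            sgn (φ a) * (sgn (φ b) * ∏ x ∈ T', sgn (φ x)) := Finset.sum_congr rfl e1
      _ = ∑ φ : Module.Dual (ZMod 2) F, ∑ T' ∈ A.powersetCard j,
            sgn (φ a) * (sgn (φ b) * ∏ x ∈ T', sgn (φ x)) := Finset.sum_comm
      _ = ∑ φ : Module.Dual (ZMod 2) F, sgn (φ a) * sgn (φ b) * Wsum A j ⇑φ := by
          refine Finset.sum_congr rfl fun φ _ => ?_
          rw [Wsum_def, Finset.mul_sum]
          exact Finset.sum_congr rfl fun T' _ => by ring
  -- value of W on nonzero functionals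
  have hWval : ∀ φ : Module.Dual (ZMod 2) F, φ ≠ 0 →
      Wsum A j ⇑φ = ((X + 1 : ℤ[X]) ^ (#A - #(A.filter fun x => ¬ φ x = 0))
          * (X - 1) ^ #(A.filter fun x => ¬ φ x = 0)).coeff (#A - j) := by
    intro φ hφ
    rw [Wsum_def, W_as_coeff A (fun x => sgn (φ x)) j hjA, prod_split A ⇑φ]
    have htot := Finset.card_filter_add_card_filter_not (p := fun x => φ x = 0) (s := A)
    have hbase : #(A.filter fun x => φ x = 0) = #A - #(A.filter fun x => ¬ φ x = 0) := by
      omega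
    rw [hbase]
  have hn1 : ∀ φ : Module.Dual (ZMod 2) F, φ ≠ 0 →
      #(A.filter fun x => ¬ φ x = 0)
        = 2 ^ (m - 1) - #(({0, a, b} : Finset F).filter fun x => ¬ φ x = 0) := by
    intro φ hφ
    have hsplit2 : (univ.filter fun x : F => ¬ φ x = 0)
        = (A.filter fun x => ¬ φ x = 0)
          ∪ (({0, a, b} : Finset F).filter fun x => ¬ φ x = 0) := by
      rw [hA]
      ext x
      simp only [Finset.mem_filter, Finset.mem_union, Finset.mem_sdiff, Finset.mem_univ, true_and]
      tauto
    have hdisj : Disjoint (A.filter fun x => ¬ φ x = 0)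
        (({0, a, b} : Finset F).filter fun x => ¬ φ x = 0) := by
      refine Finset.disjoint_filter_filter ?_
      rw [hA]
      exact Finset.sdiff_disjoint
    have hcardu : #(univ.filter fun x : F => ¬ φ x = 0) = 2 ^ (m - 1) := by
      have hfe := fiber_elt (F := F) φ hφ 1
      rw [hcard] at hfe
      have heq1 : (univ.filter fun x : F => ¬ φ x = 0) = (univ.filter fun x : F => φ x = 1) := by
        apply Finset.filter_congr
        intro x _
        constructor
        · intro h'
          exact (show ∀ z : ZMod 2, ¬ z = 0 → z = 1 by decide) _ h'
        · intro h' h''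
          rw [h'] at h''
          exact one_ne_zero h''
      rw [heq1]
      omega
    rw [hsplit2, Finset.card_union_of_disjoint hdisj] at hcardu
    omega
  have hTcount : ∀ φ : Module.Dual (ZMod 2) F,
      #(({0, a, b} : Finset F).filter fun x => ¬ φ x = 0)
        = (if φ a = 0 then 0 else 1) + (if φ b = 0 then 0 else 1) := by
    intro φ
    rw [Finset.filter_insert, if_neg (by simp), Finset.filter_insert, Finset.filter_singleton]
    by_cases hpa : φ a = 0 <;> by_cases hpb : φ b = 0
    · rw [if_neg (by simp [hpa]), if_neg (by simp [hpb]), if_pos hpa, if_pos hpb]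
      simp
    · rw [if_neg (by simp [hpa]), if_pos hpb, if_pos hpa, if_neg hpb]
      simp
    · rw [if_pos hpa, if_neg (by simp [hpb]), if_neg hpa, if_pos hpb]
      simp
    · rw [if_pos hpa, if_pos hpb, if_neg hpa, if_neg hpb]
      rw [Finset.card_insert_of_notMem (by simpa using hab)]
      simp
  have hWclass : ∀ φ : Module.Dual (ZMod 2) F, φ ≠ 0 →
      Wsum A j ⇑φ
        = ((X + 1 : ℤ[X]) ^ (2 ^ m - 3 - (2 ^ (m - 1)
              - ((if φ a = 0 then 0 else 1) + (if φ b = 0 then 0 else 1))))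
            * (X - 1) ^ (2 ^ (m - 1)
              - ((if φ a = 0 then 0 else 1) + (if φ b = 0 then 0 else 1)))).coeff
            (2 ^ m - 3 - j) := by
    intro φ hφ
    rw [hWval φ hφ, hn1 φ hφ, hTcount φ, hAcard]
  have hfibc : ∀ pq : ZMod 2 × ZMod 2,
      #(univ.filter fun φ : Module.Dual (ZMod 2) F => (φ a, φ b) = pq) = 2 ^ (m - 2) := by
    intro pq
    have hfib := fiber_ab a b ha hb hab pq
    rw [hcard] at hfib
    have h4 : 2 ^ m = 2 ^ (m - 2) * 4 := by
      rw [show m = (m - 2) + 2 by omega, pow_add]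
      norm_num
    omega
  have hfact1 : (X + 1 : ℤ[X]) ^ (2 ^ m - 3 - (2 ^ (m - 1) - 0)) * (X - 1) ^ (2 ^ (m - 1) - 0)
      = (X ^ 2 - 1) ^ (2 ^ (m - 1) - 2 - 1) * (X - 1) ^ 3 := by
    have e1 : 2 ^ m - 3 - (2 ^ (m - 1) - 0) = 2 ^ (m - 1) - 3 := by omega
    have e3 : 2 ^ (m - 1) - 2 - 1 = 2 ^ (m - 1) - 3 := by omega
    have e2 : 2 ^ (m - 1) - 0 = (2 ^ (m - 1) - 3) + 3 := by omega
    rw [e1, e3, e2, pow_add, ← mul_assoc, ← mul_pow,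
      show (X + 1 : ℤ[X]) * (X - 1) = X ^ 2 - 1 by ring]
  have hfact2 : (X + 1 : ℤ[X]) ^ (2 ^ m - 3 - (2 ^ (m - 1) - 1)) * (X - 1) ^ (2 ^ (m - 1) - 1)
      = (X ^ 2 - 1) ^ (2 ^ (m - 1) - 2) * (X - 1) := by
    have e1 : 2 ^ m - 3 - (2 ^ (m - 1) - 1) = 2 ^ (m - 1) - 2 := by omega
    have e2 : 2 ^ (m - 1) - 1 = (2 ^ (m - 1) - 2) + 1 := by omega
    rw [e1, e2, pow_succ, ← mul_assoc, ← mul_pow,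
      show (X + 1 : ℤ[X]) * (X - 1) = X ^ 2 - 1 by ring]
  have hfact3 : (X + 1 : ℤ[X]) ^ (2 ^ m - 3 - (2 ^ (m - 1) - 2)) * (X - 1) ^ (2 ^ (m - 1) - 2)
      = (X ^ 2 - 1) ^ (2 ^ (m - 1) - 2) * (X + 1) := by
    have e1 : 2 ^ m - 3 - (2 ^ (m - 1) - 2) = (2 ^ (m - 1) - 2) + 1 := by omega
    rw [e1, pow_succ, mul_right_comm, ← mul_pow,
      show (X + 1 : ℤ[X]) * (X - 1) = X ^ 2 - 1 by ring]
  -- the four class sums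
  have h00 : ∑ φ ∈ univ.filter
        (fun φ : Module.Dual (ZMod 2) F => (φ a, φ b) = ((0 : ZMod 2), (0 : ZMod 2))),
      sgn (φ a) * sgn (φ b) * Wsum A j ⇑φ
      = ((2 ^ m - 3).choose j : ℤ)
        + ((2 ^ (m - 2) : ℤ) - 1)
          * (((X ^ 2 - 1 : ℤ[X]) ^ (2 ^ (m - 1) - 2 - 1) * (X - 1) ^ 3).coeff
              (2 ^ m - 3 - j)) := by
    have h0mem : (0 : Module.Dual (ZMod 2) F) ∈ univ.filter
        (fun φ : Module.Dual (ZMod 2) F => (φ a, φ b) = ((0 : ZMod 2), (0 : ZMod 2))) := by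
      simp
    rw [← Finset.add_sum_erase _ _ h0mem]
    have hW0 : Wsum A j ⇑(0 : Module.Dual (ZMod 2) F) = ((2 ^ m - 3).choose j : ℤ) := by
      rw [Wsum_def,
        Finset.sum_congr rfl (fun T' _ => Finset.prod_congr rfl fun x _ => by
          rw [LinearMap.zero_apply, sgn_zero])]
      simp only [Finset.prod_const_one]
      rw [Finset.sum_const, Finset.card_powersetCard, hAcard]
      simp
    have hrest : ∀ φ ∈ (univ.filter
        (fun φ : Module.Dual (ZMod 2) F => (φ a, φ b) = ((0 : ZMod 2), (0 : ZMod 2)))).erase 0,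
        sgn (φ a) * sgn (φ b) * Wsum A j ⇑φ
          = (((X ^ 2 - 1 : ℤ[X]) ^ (2 ^ (m - 1) - 2 - 1) * (X - 1) ^ 3).coeff
              (2 ^ m - 3 - j)) := by
      intro φ hφ
      obtain ⟨hne0, hmem⟩ := Finset.mem_erase.mp hφ
      have hclass := (Finset.mem_filter.mp hmem).2
      have hpa : φ a = 0 := congrArg Prod.fst hclass
      have hpb : φ b = 0 := congrArg Prod.snd hclass
      rw [hWclass φ hne0, hpa, hpb, sgn_zero,
        show ((if (0 : ZMod 2) = 0 then 0 else 1) + (if (0 : ZMod 2) = 0 then 0 else 1) : ℕ)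
          = 0 by norm_num, hfact1]
      ring
    rw [Finset.sum_congr rfl hrest, Finset.sum_const, Finset.card_erase_of_mem h0mem,
      hfibc ((0 : ZMod 2), (0 : ZMod 2)), nsmul_eq_mul, Nat.cast_sub (by omega)]
    rw [hW0]
    simp only [LinearMap.zero_apply, sgn_zero]
    push_cast
    ring
  have h01 : ∑ φ ∈ univ.filter
        (fun φ : Module.Dual (ZMod 2) F => (φ a, φ b) = ((0 : ZMod 2), (1 : ZMod 2))),
      sgn (φ a) * sgn (φ b) * Wsum A j ⇑φ
      = -((2 ^ (m - 2) : ℤ)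
          * (((X ^ 2 - 1 : ℤ[X]) ^ (2 ^ (m - 1) - 2) * (X - 1)).coeff (2 ^ m - 3 - j))) := by
    have hrest : ∀ φ ∈ univ.filter
        (fun φ : Module.Dual (ZMod 2) F => (φ a, φ b) = ((0 : ZMod 2), (1 : ZMod 2))),
        sgn (φ a) * sgn (φ b) * Wsum A j ⇑φ
          = -(((X ^ 2 - 1 : ℤ[X]) ^ (2 ^ (m - 1) - 2) * (X - 1)).coeff (2 ^ m - 3 - j)) := by
      intro φ hφ
      have hclass := (Finset.mem_filter.mp hφ).2
      have hpa : φ a = 0 := congrArg Prod.fst hclass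
      have hpb : φ b = 1 := congrArg Prod.snd hclass
      have hne0 : φ ≠ 0 := by
        intro h
        rw [h, LinearMap.zero_apply] at hpb
        exact one_ne_zero hpb.symm
      rw [hWclass φ hne0, hpa, hpb, sgn_zero, sgn_one,
        show ((if (0 : ZMod 2) = 0 then 0 else 1) + (if (1 : ZMod 2) = 0 then 0 else 1) : ℕ)
          = 1 by norm_num, hfact2]
      ring
    rw [Finset.sum_congr rfl hrest, Finset.sum_const,
      hfibc ((0 : ZMod 2), (1 : ZMod 2)), nsmul_eq_mul]
    push_cast
    ring
  have h10 : ∑ φ ∈ univ.filter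
        (fun φ : Module.Dual (ZMod 2) F => (φ a, φ b) = ((1 : ZMod 2), (0 : ZMod 2))),
      sgn (φ a) * sgn (φ b) * Wsum A j ⇑φ
      = -((2 ^ (m - 2) : ℤ)
          * (((X ^ 2 - 1 : ℤ[X]) ^ (2 ^ (m - 1) - 2) * (X - 1)).coeff (2 ^ m - 3 - j))) := by
    have hrest : ∀ φ ∈ univ.filter
        (fun φ : Module.Dual (ZMod 2) F => (φ a, φ b) = ((1 : ZMod 2), (0 : ZMod 2))),
        sgn (φ a) * sgn (φ b) * Wsum A j ⇑φ
          = -(((X ^ 2 - 1 : ℤ[X]) ^ (2 ^ (m - 1) - 2) * (X - 1)).coeff (2 ^ m - 3 - j)) := by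
      intro φ hφ
      have hclass := (Finset.mem_filter.mp hφ).2
      have hpa : φ a = 1 := congrArg Prod.fst hclass
      have hpb : φ b = 0 := congrArg Prod.snd hclass
      have hne0 : φ ≠ 0 := by
        intro h
        rw [h, LinearMap.zero_apply] at hpa
        exact one_ne_zero hpa.symm
      rw [hWclass φ hne0, hpa, hpb, sgn_zero, sgn_one,
        show ((if (1 : ZMod 2) = 0 then 0 else 1) + (if (0 : ZMod 2) = 0 then 0 else 1) : ℕ)
          = 1 by norm_num, hfact2]
      ring
    rw [Finset.sum_congr rfl hrest, Finset.sum_const,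
      hfibc ((1 : ZMod 2), (0 : ZMod 2)), nsmul_eq_mul]
    push_cast
    ring
  have h11 : ∑ φ ∈ univ.filter
        (fun φ : Module.Dual (ZMod 2) F => (φ a, φ b) = ((1 : ZMod 2), (1 : ZMod 2))),
      sgn (φ a) * sgn (φ b) * Wsum A j ⇑φ
      = (2 ^ (m - 2) : ℤ)
          * (((X ^ 2 - 1 : ℤ[X]) ^ (2 ^ (m - 1) - 2) * (X + 1)).coeff (2 ^ m - 3 - j)) := by
    have hrest : ∀ φ ∈ univ.filter
        (fun φ : Module.Dual (ZMod 2) F => (φ a, φ b) = ((1 : ZMod 2), (1 : ZMod 2))),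
        sgn (φ a) * sgn (φ b) * Wsum A j ⇑φ
          = (((X ^ 2 - 1 : ℤ[X]) ^ (2 ^ (m - 1) - 2) * (X + 1)).coeff (2 ^ m - 3 - j)) := by
      intro φ hφ
      have hclass := (Finset.mem_filter.mp hφ).2
      have hpa : φ a = 1 := congrArg Prod.fst hclass
      have hpb : φ b = 1 := congrArg Prod.snd hclass
      have hne0 : φ ≠ 0 := by
        intro h
        rw [h, LinearMap.zero_apply] at hpa
        exact one_ne_zero hpa.symm
      rw [hWclass φ hne0, hpa, hpb, sgn_one,
        show ((if (1 : ZMod 2) = 0 then 0 else 1) + (if (1 : ZMod 2) = 0 then 0 else 1) : ℕ)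
          = 2 by norm_num, hfact3]
      ring
    rw [Finset.sum_congr rfl hrest, Finset.sum_const,
      hfibc ((1 : ZMod 2), (1 : ZMod 2)), nsmul_eq_mul]
    push_cast
    ring
  have hzmodsum : ∀ g : ZMod 2 × ZMod 2 → ℤ,
      ∑ pq : ZMod 2 × ZMod 2, g pq = g (0, 0) + g (0, 1) + g (1, 0) + g (1, 1) := by
    intro g
    have huniv : (univ : Finset (ZMod 2 × ZMod 2))
        = {((0 : ZMod 2), (0 : ZMod 2)), (0, 1), (1, 0), (1, 1)} := by decide
    rw [huniv, Finset.sum_insert (by decide), Finset.sum_insert (by decide),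
      Finset.sum_insert (by decide), Finset.sum_singleton]
    ring
  have hsum4 : ∑ φ : Module.Dual (ZMod 2) F, sgn (φ a) * sgn (φ b) * Wsum A j ⇑φ
      = (((2 ^ m - 3).choose j : ℤ)
          + ((2 ^ (m - 2) : ℤ) - 1)
            * (((X ^ 2 - 1 : ℤ[X]) ^ (2 ^ (m - 1) - 2 - 1) * (X - 1) ^ 3).coeff
                (2 ^ m - 3 - j)))
        + (-((2 ^ (m - 2) : ℤ)
            * (((X ^ 2 - 1 : ℤ[X]) ^ (2 ^ (m - 1) - 2) * (X - 1)).coeff (2 ^ m - 3 - j))))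
        + (-((2 ^ (m - 2) : ℤ)
            * (((X ^ 2 - 1 : ℤ[X]) ^ (2 ^ (m - 1) - 2) * (X - 1)).coeff (2 ^ m - 3 - j))))
        + ((2 ^ (m - 2) : ℤ)
            * (((X ^ 2 - 1 : ℤ[X]) ^ (2 ^ (m - 1) - 2) * (X + 1)).coeff (2 ^ m - 3 - j))) := by
    rw [← Finset.sum_fiberwise (univ : Finset (Module.Dual (ZMod 2) F))
      (fun φ => (φ a, φ b)) (fun φ => sgn (φ a) * sgn (φ b) * Wsum A j ⇑φ)]
    rw [hzmodsum (fun pq => ∑ φ ∈ univ.filter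
      (fun φ : Module.Dual (ZMod 2) F => (φ a, φ b) = pq),
        sgn (φ a) * sgn (φ b) * Wsum A j ⇑φ)]
    rw [h00, h01, h10, h11]
  rw [key, hsum4]
  have hq4Z : (2 : ℤ) ^ (m - 1) = 2 * 2 ^ (m - 2) := by exact_mod_cast congrArg Nat.cast hq4
  rcases Nat.even_or_odd k with hke | hko
  · obtain ⟨c, hc⟩ := hke
    have ht1 : 1 ≤ k / 2 - 1 := by omega
    set t : ℕ := k / 2 - 1 with hts
    set s : ℕ := 2 ^ (m - 1) - 2 - t with hss
    have hjt : j = 2 * t := by omega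
    have hst : s + t = 2 ^ (m - 1) - 2 := by omega
    have hs1 : 1 ≤ s := by omega
    have hd2 : 2 ^ m - 3 - j = 2 * s + 1 := by omega
    rw [hd2, W_even_one _ _ _ hst hs1 ht1, W_even_two _ _ _ hst, W_even_three _ _ _ hst]
    have hcj : corr m j = (-1) ^ (t + 1) * (2 * (t : ℤ) + 1)
        * ((2 ^ (m - 1) - 2).choose t : ℤ) := by
      simp only [corr]
      simp only [if_pos (show Even j from ⟨t, by omega⟩)]
      rw [show j / 2 = t by omega, hjt]
      push_cast
      ring
    rw [hcj]
    have hcor := corr_even m t s hm hst hs1 ht1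
    linear_combination hcor + ((-1 : ℤ) ^ t * ((2 ^ (m - 1) - 2).choose t : ℤ)) * hq4Z
  · obtain ⟨c, hc⟩ := hko
    set r : ℕ := (k - 3) / 2 with hrs
    set s : ℕ := 2 ^ (m - 1) - 2 - r with hss
    have hjr : j = 2 * r + 1 := by omega
    have hsr : s + r = 2 ^ (m - 1) - 2 := by omega
    have hs2 : 2 ≤ s := by omega
    have hd2 : 2 ^ m - 3 - j = 2 * s := by omega
    rw [hd2, W_odd_one _ _ _ hsr hs2, W_odd_two _ _ _ hsr (by omega),
      W_odd_three _ _ _ hsr (by omega)]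
    have hcj : corr m j = (-1) ^ r * (2 * (r : ℤ) + 3)
        * ((2 ^ (m - 1) - 2).choose r : ℤ) := by
      simp only [corr]
      simp only [if_neg (Nat.not_even_iff_odd.mpr ⟨r, hjr⟩)]
      rw [show j / 2 = r by omega, hjr]
      push_cast
      ring
    rw [hcj]
    have hcor := corr_odd m r s hm hsr (by omega)
    linear_combination hcor + ((-1 : ℤ) ^ (r + 1) * ((2 ^ (m - 1) - 2).choose r : ℤ)) * hq4Z


/-! ### Part A : characterization of the blocks -/

lemma mem_dual_iff {F : Type*} [Field F] {k n : ℕ} (G : Matrix (Fin k) (Fin n) F)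
    (v : Fin n → F) :
    v ∈ dualCode (rowSpan G) ↔ ∀ r : Fin k, ∑ i, G r i * v i = 0 := by
  constructor
  · intro h r
    exact h (G r) (Submodule.subset_span ⟨r, rfl⟩)
  · intro h c hc
    let L : (Fin n → F) →ₗ[F] F :=
      { toFun := fun c => ∑ i, c i * v i
        map_add' := by
          intro x y
          simp [add_mul, Finset.sum_add_distrib]
        map_smul' := by
          intro r x
          simp only [Pi.smul_apply, smul_eq_mul, RingHom.id_apply]
          rw [Finset.mul_sum]
          exact Finset.sum_congr rfl fun i _ => by ring }
    have hle : rowSpan G ≤ LinearMap.ker L := by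
      rw [rowSpan, Submodule.span_le]
      rintro _ ⟨r, rfl⟩
      exact h r
    exact hle hc

lemma coeff_basis {F : Type*} [Field F] {ι : Type*} [DecidableEq ι] (s : Finset ι) (v : ι → F)
    {i : ι} (hi : i ∈ s) :
    (Lagrange.basis s v i).coeff (#s - 1) = ∏ l ∈ s.erase i, (v i - v l)⁻¹ := by
  have hswap : Lagrange.basis s v i
      = Polynomial.C (∏ l ∈ s.erase i, (v i - v l)⁻¹)
        * ∏ l ∈ s.erase i, (X - Polynomial.C (v l)) := by
    rw [Lagrange.basis, map_prod, ← Finset.prod_mul_distrib]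
    exact Finset.prod_congr rfl fun l _ => rfl
  rw [hswap, Polynomial.coeff_C_mul]
  have hmonic : (∏ l ∈ s.erase i, (X - Polynomial.C (v l))).Monic :=
    Polynomial.monic_prod_of_monic _ _ fun l _ => Polynomial.monic_X_sub_C _
  have hdeg : (∏ l ∈ s.erase i, (X - Polynomial.C (v l))).natDegree = #s - 1 := by
    rw [Polynomial.natDegree_prod _ _ fun l _ => Polynomial.X_sub_C_ne_zero (v l),
      Finset.sum_congr rfl fun l _ => Polynomial.natDegree_X_sub_C (v l),
      Finset.sum_const, smul_eq_mul, mul_one, Finset.card_erase_of_mem hi]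
  rw [← hdeg, hmonic.coeff_natDegree, mul_one]

lemma key_identity {F : Type*} [Field F] {ι : Type*} [DecidableEq ι] (s : Finset ι) (v : ι → F)
    (hvs : Set.InjOn v s) (g : Polynomial F) (hg : g.degree < (#s : ℕ)) :
    ∑ i ∈ s, g.eval (v i) * ∏ l ∈ s.erase i, (v i - v l)⁻¹ = g.coeff (#s - 1) := by
  have hrep := Lagrange.eq_interpolate hvs hg
  conv_rhs => rw [hrep]
  rw [Lagrange.interpolate_apply, Polynomial.finset_sum_coeff]
  exact Finset.sum_congr rfl fun i hi => by
    rw [Polynomial.coeff_C_mul, coeff_basis s v hi]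

lemma blocks_iff {F : Type*} [Field F] [Fintype F] [DecidableEq F] {m k : ℕ}
    (hk : 3 ≤ k) (θ : Fin (2 ^ m - 1) → F) (hθinj : Function.Injective θ)
    (s : Finset (Fin (2 ^ m - 1))) :
    s ∈ blocks (dualCode (rowSpan (G3 m k θ))) k ↔ #s = k ∧ ∑ i ∈ s, θ i = 0 := by
  have hinj : Set.InjOn θ s := hθinj.injOn
  constructor
  · rintro ⟨c, hc, hnorm, hsupp⟩
    have hscard : #s = k := by
      rw [← hsupp]
      exact hnorm
    refine ⟨hscard, ?_⟩
    have hrows := (mem_dual_iff _ _).mp hc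
    have hczero : ∀ i, i ∉ s → c i = 0 := by
      intro i his
      by_contra hne
      exact his (hsupp ▸ Finset.mem_filter.mpr ⟨Finset.mem_univ i, hne⟩)
    have hgen : ∀ r : Fin k, ∑ i ∈ s, c i * G3 m k θ r i = 0 := by
      intro r
      have hthis := hrows r
      rw [← Finset.sum_subset (Finset.subset_univ s)
        (fun i _ his => by rw [hczero i his, mul_zero])] at hthis
      rw [← hthis]
      exact Finset.sum_congr rfl fun i _ => mul_comm _ _
    have hcon : ∀ e : ℕ, e ≤ k → e ≠ k - 1 → ∑ i ∈ s, c i * θ i ^ e = 0 := by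
      intro e he hne
      rcases Nat.lt_or_ge e (k - 1) with hlt | hge
      · have h1 := hgen ⟨e, by omega⟩
        rw [← h1]
        refine Finset.sum_congr rfl fun i _ => ?_
        congr 1
        show θ i ^ e = (if ((⟨e, by omega⟩ : Fin k) : ℕ) = k - 1 then θ i ^ k else θ i ^ e)
        rw [if_neg hne]
      · have hek : e = k := by omega
        have h1 := hgen ⟨k - 1, by omega⟩
        rw [← h1]
        refine Finset.sum_congr rfl fun i _ => ?_
        congr 1
        show θ i ^ e = (if ((⟨k - 1, by omega⟩ : Fin k) : ℕ) = k - 1 then θ i ^ k else _)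
        rw [if_pos rfl, hek]
    obtain ⟨i0, hi0⟩ : s.Nonempty := by
      rw [← Finset.card_pos, hscard]; omega
    have hci0 : c i0 ≠ 0 := by
      have hmem : i0 ∈ univ.filter fun i => c i ≠ 0 := hsupp.symm ▸ hi0
      exact (Finset.mem_filter.mp hmem).2
    set g : Polynomial F := ∏ l ∈ s.erase i0, (X - Polynomial.C (θ l)) with hgdef
    set α : F := -∑ l ∈ s.erase i0, θ l with hα
    set f : Polynomial F := g * (X - Polynomial.C α) with hf
    have hgmonic : g.Monic :=
      Polynomial.monic_prod_of_monic _ _ fun l _ => Polynomial.monic_X_sub_C _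
    have hgdeg : g.natDegree = k - 1 := by
      rw [hgdef, Polynomial.natDegree_prod _ _ fun l _ => Polynomial.X_sub_C_ne_zero (θ l),
        Finset.sum_congr rfl fun l _ => Polynomial.natDegree_X_sub_C (θ l),
        Finset.sum_const, smul_eq_mul, mul_one, Finset.card_erase_of_mem hi0, hscard]
    have hfdeg : f.natDegree = k := by
      rw [hf, Polynomial.natDegree_mul hgmonic.ne_zero (Polynomial.X_sub_C_ne_zero α),
        hgdeg, Polynomial.natDegree_X_sub_C]
      omega
    have hgnext : g.coeff (k - 2) = -∑ l ∈ s.erase i0, θ l := by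
      have h2 := Polynomial.nextCoeff_of_natDegree_pos (p := g) (by rw [hgdeg]; omega)
      rw [hgdeg] at h2
      have h1 : g.nextCoeff = -∑ l ∈ s.erase i0, θ l := Polynomial.prod_X_sub_C_nextCoeff θ
      rw [show k - 2 = k - 1 - 1 by omega, ← h2, h1]
    have hfcoeff : f.coeff (k - 1) = 0 := by
      rw [hf, show k - 1 = (k - 2) + 1 by omega, Polynomial.coeff_mul_X_sub_C, hgnext,
        show (k - 2) + 1 = k - 1 by omega]
      have hgl : g.coeff (k - 1) = 1 := by
        rw [← hgdeg]; exact hgmonic.coeff_natDegree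
      rw [hgl, hα]
      ring
    have heval0 : ∑ i ∈ s, c i * f.eval (θ i) = 0 := by
      have hexp : ∀ i : Fin (2 ^ m - 1), f.eval (θ i)
          = ∑ e ∈ Finset.range (k + 1), f.coeff e * θ i ^ e := fun i =>
        Polynomial.eval_eq_sum_range' (by omega) (θ i)
      calc ∑ i ∈ s, c i * f.eval (θ i)
          = ∑ i ∈ s, ∑ e ∈ Finset.range (k + 1), f.coeff e * (c i * θ i ^ e) := by
            refine Finset.sum_congr rfl fun i _ => ?_
            rw [hexp i, Finset.mul_sum]
            exact Finset.sum_congr rfl fun e _ => by ring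
        _ = ∑ e ∈ Finset.range (k + 1), f.coeff e * ∑ i ∈ s, c i * θ i ^ e := by
            rw [Finset.sum_comm]
            exact Finset.sum_congr rfl fun e _ => by rw [Finset.mul_sum]
        _ = 0 := by
            refine Finset.sum_eq_zero fun e he => ?_
            rcases eq_or_ne e (k - 1) with rfl | hne
            · rw [hfcoeff, zero_mul]
            · rw [hcon e (by rw [Finset.mem_range] at he; omega) hne, mul_zero]
    have hf_eval_erase : ∀ l ∈ s.erase i0, f.eval (θ l) = 0 := by
      intro l hl
      rw [hf, Polynomial.eval_mul, hgdef, Polynomial.eval_prod]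
      rw [Finset.prod_eq_zero hl (by simp), zero_mul]
    have hsingle : ∑ i ∈ s, c i * f.eval (θ i) = c i0 * f.eval (θ i0) := by
      rw [← Finset.add_sum_erase _ _ hi0,
        Finset.sum_eq_zero fun l hl => by rw [hf_eval_erase l hl, mul_zero], add_zero]
    have hfi0 : f.eval (θ i0) = 0 := by
      rcases mul_eq_zero.mp (hsingle ▸ heval0) with h | h
      · exact absurd h hci0
      · exact h
    have hgne : g.eval (θ i0) ≠ 0 := by
      rw [hgdef, Polynomial.eval_prod]
      refine Finset.prod_ne_zero_iff.mpr fun l hl => ?_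
      simp only [Polynomial.eval_sub, Polynomial.eval_X, Polynomial.eval_C]
      exact sub_ne_zero.mpr fun hh => (Finset.mem_erase.mp hl).1 (hθinj hh).symm
    rw [hf, Polynomial.eval_mul] at hfi0
    rcases mul_eq_zero.mp hfi0 with h | h
    · exact absurd h hgne
    · have hth : θ i0 = α := by
        have hsub : θ i0 - α = 0 := by simpa using h
        exact sub_eq_zero.mp hsub
      rw [hα] at hth
      rw [← Finset.add_sum_erase s θ hi0, hth, neg_add_cancel]
  · rintro ⟨hscard, hsum⟩
    set w : Fin (2 ^ m - 1) → F := fun i =>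
      if i ∈ s then (∏ l ∈ s.erase i, (θ i - θ l))⁻¹ else 0 with hw
    have hwne : ∀ i ∈ s, w i ≠ 0 := by
      intro i hi
      rw [hw]
      simp only [if_pos hi]
      apply inv_ne_zero
      refine Finset.prod_ne_zero_iff.mpr fun l hl => ?_
      exact sub_ne_zero.mpr fun hh => (Finset.mem_erase.mp hl).1 (hθinj hh).symm
    have hsupp : (univ.filter fun i => w i ≠ 0) = s := by
      ext i
      simp only [Finset.mem_filter, Finset.mem_univ, true_and]
      constructor
      · intro hne
        by_contra his
        rw [hw] at hne
        simp only [if_neg his] at hne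
        exact hne rfl
      · intro hi; exact hwne i hi
    have hkey : ∀ e : ℕ, e ≤ k → e ≠ k - 1 → ∑ i ∈ s, θ i ^ e * w i = 0 := by
      intro e he hne
      by_cases hek : e = k
      · rw [hek]
        set P : Polynomial F := X ^ k - ∏ l ∈ s, (X - Polynomial.C (θ l)) with hP
        have hprodmonic : (∏ l ∈ s, (X - Polynomial.C (θ l))).Monic :=
          Polynomial.monic_prod_of_monic _ _ fun l _ => Polynomial.monic_X_sub_C _
        have hproddeg : (∏ l ∈ s, (X - Polynomial.C (θ l))).natDegree = k := by
          rw [Polynomial.natDegree_prod _ _ fun l _ => Polynomial.X_sub_C_ne_zero (θ l),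
            Finset.sum_congr rfl fun l _ => Polynomial.natDegree_X_sub_C (θ l),
            Finset.sum_const, smul_eq_mul, mul_one, hscard]
        have hPdeg : P.degree < (#s : ℕ) := by
          have hdlt := Polynomial.degree_sub_lt
            (p := (X ^ k : Polynomial F)) (q := ∏ l ∈ s, (X - Polynomial.C (θ l)))
            (by rw [Polynomial.degree_X_pow,
              Polynomial.degree_eq_natDegree hprodmonic.ne_zero, hproddeg])
            (pow_ne_zero _ Polynomial.X_ne_zero)
            (by rw [Polynomial.leadingCoeff_X_pow, hprodmonic.leadingCoeff])
          rw [Polynomial.degree_X_pow] at hdlt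
          rw [hscard]
          exact hdlt
        have hk1 := key_identity s θ hinj P hPdeg
        have hPeval : ∀ i ∈ s, P.eval (θ i) = θ i ^ k := by
          intro i hi
          rw [hP, Polynomial.eval_sub, Polynomial.eval_pow, Polynomial.eval_X,
            Polynomial.eval_prod, Finset.prod_eq_zero hi (by simp), sub_zero]
        have hPcoeff : P.coeff (k - 1) = 0 := by
          rw [hP, Polynomial.coeff_sub]
          have h1 : (X ^ k : Polynomial F).coeff (k - 1) = 0 := by
            rw [Polynomial.coeff_X_pow, if_neg (by omega)]
          have h2 : (∏ l ∈ s, (X - Polynomial.C (θ l))).coeff (k - 1) = -∑ l ∈ s, θ l := by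
            have hnext : (∏ l ∈ s, (X - Polynomial.C (θ l))).nextCoeff = -∑ l ∈ s, θ l :=
              Polynomial.prod_X_sub_C_nextCoeff θ
            have h3 := Polynomial.nextCoeff_of_natDegree_pos
              (p := ∏ l ∈ s, (X - Polynomial.C (θ l))) (by rw [hproddeg]; omega)
            rw [hproddeg] at h3
            rw [← h3, hnext]
          rw [h1, h2, hsum]
          simp
        calc ∑ i ∈ s, θ i ^ k * w i
            = ∑ i ∈ s, P.eval (θ i) * ∏ l ∈ s.erase i, (θ i - θ l)⁻¹ := by
              refine Finset.sum_congr rfl fun i hi => ?_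
              rw [hPeval i hi, hw]
              simp only [if_pos hi]
              rw [← Finset.prod_inv_distrib]
          _ = P.coeff (#s - 1) := hk1
          _ = 0 := by rw [hscard, hPcoeff]
      · have hdeg : (X ^ e : Polynomial F).degree < (#s : ℕ) := by
          rw [Polynomial.degree_X_pow, hscard]
          exact_mod_cast (by omega : e < k)
        have hk1 := key_identity s θ hinj (X ^ e) hdeg
        have hcoeff : (X ^ e : Polynomial F).coeff (#s - 1) = 0 := by
          rw [Polynomial.coeff_X_pow, if_neg (by rw [hscard]; omega)]
        calc ∑ i ∈ s, θ i ^ e * w i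
            = ∑ i ∈ s, (X ^ e : Polynomial F).eval (θ i)
                * ∏ l ∈ s.erase i, (θ i - θ l)⁻¹ := by
              refine Finset.sum_congr rfl fun i hi => ?_
              rw [Polynomial.eval_pow, Polynomial.eval_X, hw]
              simp only [if_pos hi]
              rw [← Finset.prod_inv_distrib]
          _ = 0 := by rw [hk1, hcoeff]
    refine ⟨w, ?_, ?_, hsupp⟩
    · rw [mem_dual_iff]
      intro r
      have hres : ∑ i, G3 m k θ r i * w i = ∑ i ∈ s, G3 m k θ r i * w i :=
        (Finset.sum_subset (Finset.subset_univ s) fun i _ his => by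
          rw [hw]
          simp only [if_neg his, mul_zero]).symm
      rw [hres]
      by_cases hr : (r : ℕ) = k - 1
      · have hG : ∀ i, G3 m k θ r i = θ i ^ k := by
          intro i
          show (if (r : ℕ) = k - 1 then θ i ^ k else θ i ^ (r : ℕ)) = θ i ^ k
          rw [if_pos hr]
        rw [Finset.sum_congr rfl fun i _ => by rw [hG i]]
        exact hkey k le_rfl (by omega)
      · have hG : ∀ i, G3 m k θ r i = θ i ^ (r : ℕ) := by
          intro i
          show (if (r : ℕ) = k - 1 then θ i ^ k else θ i ^ (r : ℕ)) = θ i ^ (r : ℕ)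
          rw [if_neg hr]
        rw [Finset.sum_congr rfl fun i _ => by rw [hG i]]
        exact hkey r (by omega) hr
    · show hammingNorm w = k
      have hh : hammingNorm w = #(univ.filter fun i => w i ≠ 0) := rfl
      rw [hh, hsupp, hscard]



end S7

theorem stmt7 (m k : ℕ) (hm : 3 ≤ m) (hk : 3 ≤ k) (hk' : k ≤ 2 ^ m - 4)
    (F : Type*) [Field F] [Fintype F] [DecidableEq F]
    (hcard : Fintype.card F = 2 ^ m)
    (θ : Fin (2 ^ m - 1) → F) (hθinj : Function.Injective θ) (hθne : ∀ j, θ j ≠ 0) :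
    (∀ s ∈ blocks (dualCode (rowSpan (G3 m k θ))) k, s.card = k) ∧
      ∀ t : Finset (Fin (2 ^ m - 1)), t.card = 2 →
        ({s ∈ blocks (dualCode (rowSpan (G3 m k θ))) k | t ⊆ s}.ncard : ℚ) =
          (1 / (2 : ℚ) ^ m) *
          (((2 ^ m - 3).choose (k - 2) : ℚ) +
            (-1 : ℚ) ^ (k + k / 2) * (((k : ℚ) * ((k : ℚ) - 1)) / (2 * ((k / 2 : ℕ) : ℚ))) *
              ((2 ^ (m - 1) - 2).choose (k / 2 - 1) : ℚ)) := by
  classical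
  have hq8 : 8 ≤ 2 ^ m := by
    calc (8 : ℕ) = 2 ^ 3 := by norm_num
      _ ≤ 2 ^ m := Nat.pow_le_pow_right (by norm_num) hm
  have hchar : CharP F 2 := by
    obtain ⟨n, hp, hc⟩ := FiniteField.card F (ringChar F)
    have hdvd : ringChar F ∣ 2 ^ m := by
      rw [← hcard, hc]
      exact dvd_pow_self _ n.pos.ne'
    have h2 : ringChar F = 2 :=
      (Nat.prime_dvd_prime_iff_eq hp Nat.prime_two).mp (hp.dvd_of_dvd_pow hdvd)
    exact h2 ▸ ringChar.charP F
  haveI := hchar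
  constructor
  · intro s hs
    exact ((S7.blocks_iff hk θ hθinj s).mp hs).1
  · intro t ht
    obtain ⟨i1, i2, hne, rfl⟩ := Finset.card_eq_two.mp ht
    have hab : θ i1 ≠ θ i2 := fun h => hne (hθinj h)
    have ha : θ i1 ≠ 0 := hθne i1
    have hb : θ i2 ≠ 0 := hθne i2
    have hadd0 : ∀ x y : F, x + y = 0 ↔ x = y := by
      intro x y
      rw [← CharTwo.sub_eq_add, sub_eq_zero]
    have hseteq : {s ∈ blocks (dualCode (rowSpan (G3 m k θ))) k | {i1, i2} ⊆ s}
        = ↑((univ.powersetCard k).filter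
            (fun s : Finset (Fin (2 ^ m - 1)) => ∑ i ∈ s, θ i = 0 ∧ {i1, i2} ⊆ s)) := by
      ext s
      rw [Set.mem_sep_iff, Finset.mem_coe, Finset.mem_filter, Finset.mem_powersetCard_univ,
        S7.blocks_iff hk θ hθinj s]
      tauto
    rw [hseteq, Set.ncard_coe_finset]
    have hθsurj : ∀ x : F, x ≠ 0 → ∃ i, θ i = x := by
      intro x hx
      have himg : (univ : Finset (Fin (2 ^ m - 1))).image θ = (univ : Finset F).erase 0 := by
        apply Finset.eq_of_subset_of_card_le
        · intro y hy
          obtain ⟨i, _, rfl⟩ := Finset.mem_image.mp hy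
          exact Finset.mem_erase.mpr ⟨hθne i, Finset.mem_univ _⟩
        · have h1 : #((univ : Finset F).erase 0) = 2 ^ m - 1 := by
            rw [Finset.card_erase_of_mem (Finset.mem_univ 0), Finset.card_univ, hcard]
          have h2 : #((univ : Finset (Fin (2 ^ m - 1))).image θ) = 2 ^ m - 1 := by
            rw [Finset.card_image_of_injective _ hθinj, Finset.card_univ, Fintype.card_fin]
          omega
      have hmem : x ∈ (univ : Finset F).erase 0 := Finset.mem_erase.mpr ⟨hx, Finset.mem_univ _⟩
      rw [← himg] at hmem
      obtain ⟨i, _, hi⟩ := Finset.mem_image.mp hmem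
      exact ⟨i, hi⟩
    have hpaircard : #({i1, i2} : Finset (Fin (2 ^ m - 1))) = 2 := by
      rw [Finset.card_insert_of_notMem (by simpa using hne), Finset.card_singleton]
    have hcardbij : #((univ.powersetCard k).filter
          (fun s : Finset (Fin (2 ^ m - 1)) => ∑ i ∈ s, θ i = 0 ∧ {i1, i2} ⊆ s))
        = #(((univ \ ({0, θ i1, θ i2} : Finset F)).powersetCard (k - 2)).filter
            (fun T' => ∑ x ∈ T', x = θ i1 + θ i2)) := by
      apply Finset.card_bij (fun s _ => (s \ {i1, i2}).image θ)
      · intro s hs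
        rw [Finset.mem_filter, Finset.mem_powersetCard_univ] at hs
        obtain ⟨hscard, hsum0, hsub⟩ := hs
        rw [Finset.mem_filter, Finset.mem_powersetCard]
        refine ⟨⟨?_, ?_⟩, ?_⟩
        · intro x hx
          obtain ⟨i, hi, rfl⟩ := Finset.mem_image.mp hx
          rw [Finset.mem_sdiff] at hi
          rw [Finset.mem_sdiff]
          refine ⟨Finset.mem_univ _, ?_⟩
          intro hmem
          rcases Finset.mem_insert.mp hmem with h0 | hmem2
          · exact hθne i h0
          · rcases Finset.mem_insert.mp hmem2 with h1 | h2
            · exact hi.2 (by rw [hθinj h1]; exact Finset.mem_insert_self _ _)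
            · rw [Finset.mem_singleton] at h2
              exact hi.2 (by rw [hθinj h2]; simp)
        · rw [Finset.card_image_of_injective _ hθinj, Finset.card_sdiff_of_subset hsub, hscard, hpaircard]
        · rw [Finset.sum_image fun x _ y _ h => hθinj h]
          have hsplit := Finset.sum_sdiff (f := θ) hsub
          rw [Finset.sum_pair hne] at hsplit
          rw [hsum0] at hsplit
          exact (hadd0 _ _).mp hsplit
      · intro s1 h1 s2 h2 heq
        rw [Finset.mem_filter, Finset.mem_powersetCard_univ] at h1 h2
        have hdiff := Finset.image_injective hθinj heq
        have e1 : s1 \ {i1, i2} ∪ {i1, i2} = s1 := Finset.sdiff_union_of_subset h1.2.2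
        have e2 : s2 \ {i1, i2} ∪ {i1, i2} = s2 := Finset.sdiff_union_of_subset h2.2.2
        rw [← e1, ← e2, hdiff]
      · intro T hT
        rw [Finset.mem_filter, Finset.mem_powersetCard] at hT
        obtain ⟨⟨hTsub, hTcard⟩, hTsum⟩ := hT
        have hTne0 : ∀ x ∈ T, x ≠ 0 := by
          intro x hx
          have := hTsub hx
          rw [Finset.mem_sdiff] at this
          intro h0
          exact this.2 (by rw [h0]; exact Finset.mem_insert_self _ _)
        have hTrange : ∀ x ∈ T, x ∈ Set.range θ := by
          intro x hx
          obtain ⟨i, hi⟩ := hθsurj x (hTne0 x hx)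
          exact ⟨i, hi⟩
        set s0 : Finset (Fin (2 ^ m - 1)) := T.preimage θ (hθinj.injOn) with hs0
        have himg0 : s0.image θ = T := by
          rw [hs0, Finset.image_preimage]
          exact Finset.filter_true_of_mem fun x hx => hTrange x hx
        have hi1s0 : i1 ∉ s0 := by
          rw [hs0, Finset.mem_preimage]
          intro hmem
          have := hTsub hmem
          rw [Finset.mem_sdiff] at this
          exact this.2 (by simp)
        have hi2s0 : i2 ∉ s0 := by
          rw [hs0, Finset.mem_preimage]
          intro hmem
          have := hTsub hmem
          rw [Finset.mem_sdiff] at this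
          exact this.2 (by simp)
        have hdisj : Disjoint ({i1, i2} : Finset (Fin (2 ^ m - 1))) s0 := by
          rw [Finset.disjoint_left]
          intro i hi his0
          rcases Finset.mem_insert.mp hi with rfl | hi'
          · exact hi1s0 his0
          · rw [Finset.mem_singleton] at hi'
            subst hi'
            exact hi2s0 his0
        have hs0card : #s0 = k - 2 := by
          rw [← hTcard, ← himg0, Finset.card_image_of_injective _ hθinj]
        refine ⟨{i1, i2} ∪ s0, ?_, ?_⟩
        · rw [Finset.mem_filter, Finset.mem_powersetCard_univ]
          refine ⟨?_, ?_, Finset.subset_union_left⟩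
          · rw [Finset.card_union_of_disjoint hdisj, hpaircard, hs0card]
            omega
          · rw [Finset.sum_union hdisj, Finset.sum_pair hne]
            have hsum0 : ∑ i ∈ s0, θ i = θ i1 + θ i2 := by
              rw [← hTsum, ← himg0, Finset.sum_image fun x _ y _ h => hθinj h]
            rw [hsum0]
            exact CharTwo.add_self_eq_zero _
        · rw [Finset.union_sdiff_cancel_left hdisj, himg0]
    rw [hcardbij]
    have hcount := S7.countB hm hk hk' hcard (θ i1) (θ i2) ha hb hab
    have hcount' : (#(((univ \ ({0, θ i1, θ i2} : Finset F)).powersetCard (k - 2)).filter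
          (fun T' => ∑ x ∈ T', x = θ i1 + θ i2)) : ℚ) * 2 ^ m
        = ((2 ^ m - 3).choose (k - 2) : ℚ) + ((S7.corr m (k - 2) : ℤ) : ℚ) := by
      exact_mod_cast hcount
    have hS : ((S7.corr m (k - 2) : ℤ) : ℚ)
        = (-1 : ℚ) ^ (k + k / 2) * (((k : ℚ) * ((k : ℚ) - 1)) / (2 * ((k / 2 : ℕ) : ℚ)))
            * ((2 ^ (m - 1) - 2).choose (k / 2 - 1) : ℚ) := by
      rcases Nat.even_or_odd k with hke | hko
      · obtain ⟨u, hu⟩ := hke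
        have hje : Even (k - 2) := ⟨u - 1, by omega⟩
        have hj2 : (k - 2) / 2 = k / 2 - 1 := by omega
        simp only [S7.corr, if_pos hje, hj2]
        push_cast [Nat.cast_sub (show 2 ≤ k by omega)]
        have hsign : ((-1 : ℚ)) ^ (k + k / 2) = (-1) ^ (k / 2 - 1 + 1) := by
          rw [show k + k / 2 = (k / 2 - 1 + 1) + 2 * (k / 2) by omega, pow_add, pow_mul]
          norm_num
        have hcoef : ((k : ℚ) * ((k : ℚ) - 1)) / (2 * ((k / 2 : ℕ) : ℚ)) = (k : ℚ) - 1 := by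
          have h2u : (2 : ℚ) * ((k / 2 : ℕ) : ℚ) = (k : ℚ) := by
            have hh : 2 * (k / 2) = k := by omega
            exact_mod_cast hh
          have hkne : (k : ℚ) ≠ 0 := by
            have h3 : (3 : ℚ) ≤ (k : ℚ) := by exact_mod_cast hk
            exact ne_of_gt (by linarith)
          rw [h2u]
          exact mul_div_cancel_left₀ _ hkne
        rw [hsign, hcoef]
        ring
      · obtain ⟨u, hu⟩ := hko
        have hjo : ¬ Even (k - 2) := Nat.not_even_iff_odd.mpr ⟨u - 1, by omega⟩
        have hj2 : (k - 2) / 2 = k / 2 - 1 := by omega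
        simp only [S7.corr, if_neg hjo, hj2]
        push_cast [Nat.cast_sub (show 2 ≤ k by omega)]
        have hsign : ((-1 : ℚ)) ^ (k + k / 2) = (-1) ^ (k / 2 - 1) := by
          rw [show k + k / 2 = (k / 2 - 1) + 2 * (k / 2 + 1) by omega, pow_add, pow_mul]
          norm_num
        have hcoef : ((k : ℚ) * ((k : ℚ) - 1)) / (2 * ((k / 2 : ℕ) : ℚ)) = (k : ℚ) := by
          have h2u : (2 : ℚ) * ((k / 2 : ℕ) : ℚ) = (k : ℚ) - 1 := by
            have hh : 2 * (k / 2) = k - 1 := by omega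
            have hc := congrArg (Nat.cast : ℕ → ℚ) hh
            push_cast at hc
            rw [Nat.cast_sub (show 1 ≤ k by omega)] at hc
            push_cast at hc
            linarith
          have hkne : ((k : ℚ) - 1) ≠ 0 := by
            have h3 : (3 : ℚ) ≤ (k : ℚ) := by exact_mod_cast hk
            exact ne_of_gt (by linarith)
          rw [h2u]
          exact mul_div_cancel_right₀ _ hkne
        rw [hsign, hcoef]
        ring
    rw [← hS]
    rw [← hcount']
    field_simp
end

section
/- Let C3 be the linear code over F_{2^m} with generator matrix G3. Then the supports of the minimum weight (weight-(2^m−1−k)) codewords of C3 form a simple 2-(2^m−1, 2^m−1−k, λ1) design, where λ1 = ((2^m−1−k)(2^m−2−k)/(2^m·k·(k−1)))·[ binom(2^m−3, k−2) + (−1)^{k+⌊k/2⌋}·(k(k−1)/(2⌊k/2⌋))·binom(2^{m−1}−2, ⌊k/2⌋−1) ]. That is, every 2-element subset of the coordinate set {1, ..., 2^m−1} is contained in exactly λ1 of the distinct supports of weight-(2^m−1−k) codewords of C3. -/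
open Finset

variable {F : Type*} [Field F] [Fintype F] [DecidableEq F]

section Aux
open Polynomial

lemma char_two_of_card (F : Type*) [Field F] [Fintype F] (m : ℕ)
    (hcard : Fintype.card F = 2 ^ m) : ∀ x : F, x + x = 0 := by
  obtain ⟨p, hp⟩ := CharP.exists F
  haveI := hp
  have hpp : p.Prime := CharP.char_is_prime F p
  obtain ⟨n, hn⟩ := FiniteField.card F p
  have hdvd : p ∣ 2 ^ m := by
    rw [← hcard, hn.2]; exact dvd_pow_self p n.2.ne'
  have hp2 : p = 2 :=
    (Nat.prime_dvd_prime_iff_eq hpp Nat.prime_two).mp (hpp.dvd_of_dvd_pow hdvd)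
  intro x
  have h2 : (2 : F) = 0 := by
    have := CharP.cast_eq_zero F p
    rw [hp2] at this; exact_mod_cast this
  rw [← two_mul, h2, zero_mul]

lemma exists_chi (F : Type*) [Field F] [Fintype F] [DecidableEq F] (m : ℕ) (hm : 1 ≤ m)
    (hcard : Fintype.card F = 2 ^ m) :
    ∃ χ : F → ℚ, (∀ x y, χ (x + y) = χ x * χ y) ∧ (∀ x, χ x = 1 ∨ χ x = -1) ∧
      (∑ x : F, χ x = 0) := by
  have h2 := char_two_of_card F m hcard
  haveI : Module (ZMod 2) F := AddCommGroup.zmodModule (by intro x; rw [two_nsmul]; exact h2 x)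
  haveI : Module.Finite (ZMod 2) F := Module.Finite.of_finite
  set d := Module.finrank (ZMod 2) F with hd
  have hdpos : 0 < d := Module.finrank_pos
  let b := Module.finBasis (ZMod 2) F
  let φ : F →ₗ[ZMod 2] ZMod 2 := b.coord ⟨0, hdpos⟩
  set u : F := b ⟨0, hdpos⟩ with hu
  have hφu : φ u = 1 := by simp [φ, u]
  refine ⟨fun x => if φ x = 0 then 1 else -1, ?_, ?_, ?_⟩
  · intro x y
    have hadd : φ (x + y) = φ x + φ y := map_add φ x y
    have hz : ∀ a : ZMod 2, a = 0 ∨ a = 1 := by decide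
    rcases hz (φ x) with h1 | h1 <;> rcases hz (φ y) with h2' | h2' <;>
      simp [hadd, h1, h2'] <;> decide
  · intro x; by_cases h : φ x = 0 <;> simp [h]
  · have key : ∀ x : F, (if φ (x + u) = 0 then (1:ℚ) else -1) = -(if φ x = 0 then 1 else -1) := by
      intro x
      have hadd : φ (x + u) = φ x + 1 := by rw [map_add, hφu]
      have hz : ∀ a : ZMod 2, a = 0 ∨ a = 1 := by decide
      rcases hz (φ x) with h1 | h1 <;> simp [hadd, h1] <;> norm_num <;> decide
    have := Fintype.sum_equiv (Equiv.addRight u) (fun x => if φ (x + u) = 0 then (1:ℚ) else -1)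
      (fun x => if φ x = 0 then (1:ℚ) else -1) (fun x => rfl)
    rw [Finset.sum_congr rfl (fun x _ => key x)] at this
    simp only [Finset.sum_neg_distrib] at this
    linarith [this]

section Chi
variable {F : Type*} [Field F] [Fintype F] [DecidableEq F]
variable {χ : F → ℚ}

lemma chi_zero (hmul : ∀ x y, χ (x + y) = χ x * χ y) (hpm : ∀ x, χ x = 1 ∨ χ x = -1) :
    χ 0 = 1 := by
  have h := hmul 0 0
  rw [add_zero] at h
  rcases hpm 0 with h0 | h0 <;> [skip; rw [h0] at h] <;> [exact h0; norm_num at h]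

lemma chi_sq (hpm : ∀ x, χ x = 1 ∨ χ x = -1) (x : F) : χ x * χ x = 1 := by
  rcases hpm x with h | h <;> rw [h] <;> norm_num

lemma chi_orth (hmul : ∀ x y, χ (x + y) = χ x * χ y) (hpm : ∀ x, χ x = 1 ∨ χ x = -1)
    (hsum : ∑ x : F, χ x = 0) (s : F) :
    ∑ c : F, χ (c * s) = if s = 0 then (Fintype.card F : ℚ) else 0 := by
  split_ifs with hs
  · subst hs
    simp [chi_zero hmul hpm]
  · calc ∑ c : F, χ (c * s) = ∑ c : F, χ c := by
          refine Fintype.sum_equiv (Equiv.mulRight₀ s hs) _ _ (fun c => rfl)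
      _ = 0 := hsum

lemma chi_finsum (hmul : ∀ x y, χ (x + y) = χ x * χ y) (hpm : ∀ x, χ x = 1 ∨ χ x = -1)
    {ι : Type*} (R : Finset ι) (g : ι → F) :
    χ (∑ r ∈ R, g r) = ∏ r ∈ R, χ (g r) := by
  induction R using Finset.cons_induction with
  | empty => simp [chi_zero hmul hpm]
  | cons a s ha ih => rw [Finset.sum_cons, Finset.prod_cons, hmul, ih]

lemma card_chi_plus (hmul : ∀ x y, χ (x + y) = χ x * χ y) (hpm : ∀ x, χ x = 1 ∨ χ x = -1)
    (hsum : ∑ x : F, χ x = 0) (c : F) (hc : c ≠ 0) :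
    2 * (#(univ.filter fun x => χ (c * x) = 1) : ℚ) = (Fintype.card F : ℚ) := by
  have horth : ∑ x : F, χ (c * x) = 0 := by
    calc ∑ x : F, χ (c * x) = ∑ x : F, χ (x * c) := by simp_rw [mul_comm]
      _ = 0 := by rw [chi_orth hmul hpm hsum c]; simp [hc]
  have hsplit := Finset.sum_filter_add_sum_filter_not univ (fun x => χ (c * x) = 1)
    (fun x => χ (c * x))
  rw [horth] at hsplit
  have h1 : ∑ x ∈ univ.filter (fun x => χ (c * x) = 1), χ (c * x)
      = (#(univ.filter fun x => χ (c * x) = 1) : ℚ) := by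
    rw [Finset.sum_congr rfl (fun x hx => (Finset.mem_filter.mp hx).2)]
    simp
  have h2 : ∑ x ∈ univ.filter (fun x => ¬ χ (c * x) = 1), χ (c * x)
      = -(#(univ.filter fun x => ¬ χ (c * x) = 1) : ℚ) := by
    rw [Finset.sum_congr rfl (fun x hx => ((hpm (c * x)).resolve_left
      (Finset.mem_filter.mp hx).2 : χ (c * x) = -1))]
    simp
  have hcards := Finset.card_filter_add_card_filter_not (s := (univ : Finset F))
    (p := fun x => χ (c * x) = 1)
  rw [h1, h2] at hsplit
  have : (#(univ.filter fun x => χ (c * x) = 1) : ℚ)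
      + (#(univ.filter fun x => ¬ χ (c * x) = 1) : ℚ) = (Fintype.card F : ℚ) := by
    rw [← Nat.cast_add, hcards, Finset.card_univ]
  linarith

lemma card_chi_class (hmul : ∀ x y, χ (x + y) = χ x * χ y) (hpm : ∀ x, χ x = 1 ∨ χ x = -1)
    (hsum : ∑ x : F, χ x = 0) (h2 : ∀ x : F, x + x = 0)
    (a b : F) (ha : a ≠ 0) (hb : b ≠ 0) (hab : a ≠ b) (ε₁ ε₂ : ℚ)
    (hε₁ : ε₁ = 1 ∨ ε₁ = -1) (hε₂ : ε₂ = 1 ∨ ε₂ = -1) :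
    4 * (#(univ.filter fun c => χ (c * a) = ε₁ ∧ χ (c * b) = ε₂) : ℚ)
      = (Fintype.card F : ℚ) := by
  have hab0 : a + b ≠ 0 := by
    intro h
    apply hab
    have : a = a + (b + b) := by rw [h2 b, add_zero]
    rw [← add_assoc, h, zero_add] at this
    exact this
  have hexp : ∀ c : F, (1 + ε₁ * χ (c * a)) * (1 + ε₂ * χ (c * b))
      = 1 + ε₁ * χ (c * a) + ε₂ * χ (c * b) + (ε₁ * ε₂) * χ (c * (a + b)) := by
    intro c
    have : χ (c * (a + b)) = χ (c * a) * χ (c * b) := by rw [mul_add, hmul]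
    rw [this]; ring
  have hSig : ∑ c : F, (1 + ε₁ * χ (c * a)) * (1 + ε₂ * χ (c * b)) = (Fintype.card F : ℚ) := by
    rw [Finset.sum_congr rfl (fun c _ => hexp c)]
    simp only [Finset.sum_add_distrib, ← Finset.mul_sum]
    rw [chi_orth hmul hpm hsum a, chi_orth hmul hpm hsum b, chi_orth hmul hpm hsum (a + b)]
    simp [ha, hb, hab0, Finset.card_univ]
  rw [← hSig]
  rw [← Finset.sum_filter_add_sum_filter_not univ (fun c => χ (c * a) = ε₁ ∧ χ (c * b) = ε₂)]
  have hval1 : ∀ c ∈ univ.filter (fun c => χ (c * a) = ε₁ ∧ χ (c * b) = ε₂),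
      (1 + ε₁ * χ (c * a)) * (1 + ε₂ * χ (c * b)) = 4 := by
    intro c hc
    obtain ⟨hc1, hc2⟩ := (Finset.mem_filter.mp hc).2
    rw [hc1, hc2]
    rcases hε₁ with h | h <;> rcases hε₂ with h' | h' <;> rw [h, h'] <;> norm_num
  have hval0 : ∀ c ∈ univ.filter (fun c => ¬(χ (c * a) = ε₁ ∧ χ (c * b) = ε₂)),
      (1 + ε₁ * χ (c * a)) * (1 + ε₂ * χ (c * b)) = 0 := by
    intro c hc
    have hnc := (Finset.mem_filter.mp hc).2
    by_cases hc1 : χ (c * a) = ε₁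
    · have hc2 : χ (c * b) ≠ ε₂ := fun h => hnc ⟨hc1, h⟩
      have : χ (c * b) = -ε₂ := by
        rcases hpm (c * b) with h | h <;> rcases hε₂ with h' | h' <;>
          simp [h, h'] at hc2 ⊢ <;> tauto
      rw [this]
      rcases hε₂ with h' | h' <;> rw [h'] <;> ring
    · have : χ (c * a) = -ε₁ := by
        rcases hpm (c * a) with h | h <;> rcases hε₁ with h' | h' <;>
          simp [h, h'] at hc1 ⊢ <;> tauto
      rw [this]
      rcases hε₁ with h' | h' <;> rw [h'] <;> ring
  rw [Finset.sum_congr rfl hval1, Finset.sum_congr rfl hval0]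
  simp [mul_comm]

end Chi

/-- Coefficient of the generating polynomial of sign products. -/
lemma coeff_prod_one_add {F : Type*} [DecidableEq F] (S : Finset F) (g : F → ℚ) (k : ℕ)
    (hk : k ≤ #S) :
    (∏ x ∈ S, (C (g x) * X + 1)).coeff k = ∑ R ∈ S.powersetCard k, ∏ x ∈ R, g x := by
  rw [Finset.prod_add]
  have hterm : ∀ t ∈ S.powerset,
      ((∏ x ∈ t, (C (g x) * X)) * ∏ _x ∈ S \ t, (1:ℚ[X])) = C (∏ x ∈ t, g x) * X ^ #t := by
    intro t _
    rw [Finset.prod_const_one, mul_one, Finset.prod_mul_distrib, Finset.prod_const, map_prod]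
  rw [Finset.sum_congr rfl hterm, Polynomial.finset_sum_coeff]
  have hco : ∀ t : Finset F, (C (∏ x ∈ t, g x) * X ^ #t).coeff k
      = if #t = k then ∏ x ∈ t, g x else 0 := by
    intro t
    rw [Polynomial.coeff_C_mul, Polynomial.coeff_X_pow]
    rcases eq_or_ne (#t) k with h | h
    · rw [if_pos h.symm, if_pos h, mul_one]
    · rw [if_neg (Ne.symm h), if_neg h, mul_zero]
  rw [Finset.sum_congr rfl (fun t _ => hco t)]
  rw [Finset.sum_powerset S (fun t => if #t = k then ∏ x ∈ t, g x else 0)]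
  have : ∀ j ∈ Finset.range (#S + 1),
      (∑ t ∈ S.powersetCard j, if #t = k then ∏ x ∈ t, g x else 0)
      = if j = k then ∑ t ∈ S.powersetCard k, ∏ x ∈ t, g x else 0 := by
    intro j _
    split_ifs with h
    · subst h
      refine Finset.sum_congr rfl fun t ht => ?_
      rw [(Finset.mem_powersetCard.mp ht).2, if_pos rfl]
    · refine Finset.sum_eq_zero fun t ht => ?_
      rw [(Finset.mem_powersetCard.mp ht).2, if_neg h]
  rw [Finset.sum_congr rfl this, Finset.sum_ite_eq' (Finset.range (#S + 1)) k]
  rw [if_pos (Finset.mem_range.mpr (Nat.lt_succ_of_le hk))]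

/-- Coefficients of `(1 - X^2)^N` over `ℚ`. -/
lemma coeff_one_sub_X_sq_pow (N r : ℕ) :
    ((1 - X ^ 2 : ℚ[X]) ^ N).coeff r
      = if 2 ∣ r then (-1 : ℚ) ^ (r / 2) * (N.choose (r / 2) : ℚ) else 0 := by
  have hexpand : (1 - X ^ 2 : ℚ[X]) ^ N
      = ∑ i ∈ Finset.range (N + 1), C ((-1 : ℚ) ^ i * (N.choose i : ℚ)) * X ^ (2 * i) := by
    have : (1 - X ^ 2 : ℚ[X]) = (-X^2) + 1 := by ring
    rw [this, add_pow]
    refine Finset.sum_congr rfl fun i _ => ?_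
    rw [one_pow, mul_one]
    rw [neg_pow, pow_mul]
    simp only [map_mul, map_pow, map_neg, map_one, Polynomial.C_eq_natCast]
    push_cast
    ring
  rw [hexpand, Polynomial.finset_sum_coeff]
  have hco : ∀ i, (C ((-1 : ℚ) ^ i * (N.choose i : ℚ)) * X ^ (2 * i)).coeff r
      = if r = 2 * i then (-1 : ℚ) ^ i * (N.choose i : ℚ) else 0 := by
    intro i
    rw [Polynomial.coeff_C_mul, Polynomial.coeff_X_pow]
    split_ifs <;> simp
  rw [Finset.sum_congr rfl (fun i _ => hco i)]
  by_cases hdvd : 2 ∣ r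
  · obtain ⟨j, rfl⟩ := hdvd
    rw [if_pos ⟨j, rfl⟩]
    have hj : (2 * j) / 2 = j := by omega
    rw [hj]
    by_cases hjN : j ≤ N
    · rw [Finset.sum_eq_single j (fun i _ hij => by rw [if_neg (by omega)]) (fun h => by
        exact absurd (Finset.mem_range.mpr (by omega)) h)]
      rw [if_pos rfl]
    · rw [Finset.sum_eq_zero (fun i hi => by
        rw [if_neg (by rw [Finset.mem_range] at hi; omega)])]
      rw [Nat.choose_eq_zero_of_lt (by omega)]
      simp
  · rw [if_neg hdvd]
    exact Finset.sum_eq_zero fun i _ => by rw [if_neg (by omega)]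

lemma coeff_mul_one_sub (p : ℚ[X]) (k : ℕ) (hk : 1 ≤ k) :
    (p * (1 - X)).coeff k = p.coeff k - p.coeff (k - 1) := by
  have : p * (1 - X) = p - p * X ^ 1 := by ring
  rw [this, Polynomial.coeff_sub, Polynomial.coeff_mul_X_pow']
  rw [if_pos hk]

lemma coeff_mul_one_add (p : ℚ[X]) (k : ℕ) (hk : 1 ≤ k) :
    (p * (1 + X)).coeff k = p.coeff k + p.coeff (k - 1) := by
  have : p * (1 + X) = p + p * X ^ 1 := by ring
  rw [this, Polynomial.coeff_add, Polynomial.coeff_mul_X_pow']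
  rw [if_pos hk]

lemma coeff_mul_one_sub_cube (p : ℚ[X]) (k : ℕ) (hk : 3 ≤ k) :
    (p * (1 - X) ^ 3).coeff k
      = p.coeff k - 3 * p.coeff (k - 1) + 3 * p.coeff (k - 2) - p.coeff (k - 3) := by
  have : p * (1 - X) ^ 3 = p - (3:ℚ[X]) * (p * X ^ 1) + (3:ℚ[X]) * (p * X ^ 2) - p * X ^ 3 := by
    ring
  rw [this, Polynomial.coeff_sub, Polynomial.coeff_add, Polynomial.coeff_sub]
  have h3 : ((3:ℚ[X]) = C 3) := (map_ofNat Polynomial.C 3).symm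
  rw [h3, Polynomial.coeff_C_mul, Polynomial.coeff_C_mul]
  rw [Polynomial.coeff_mul_X_pow', Polynomial.coeff_mul_X_pow', Polynomial.coeff_mul_X_pow']
  rw [if_pos (by omega : 1 ≤ k), if_pos (by omega : 2 ≤ k), if_pos (by omega : 3 ≤ k)]

lemma one_add_mul_one_sub : ((1 + X) * (1 - X) : ℚ[X]) = 1 - X ^ 2 := by ring

lemma multiset_esymm_one {R : Type*} [CommSemiring R] (s : Multiset R) :
    s.esymm 1 = s.sum := by
  simp [Multiset.esymm, Multiset.powersetCard_one, Multiset.map_map, Function.comp]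

/-- The exponent map for `G3`. -/
def expo (k : ℕ) (i : Fin k) : ℕ := if (i : ℕ) = k - 1 then k else (i : ℕ)

lemma expo_le (k : ℕ) (i : Fin k) : expo k i ≤ k := by
  unfold expo; split <;> omega

lemma expo_ne (k : ℕ) (hk : 3 ≤ k) (i : Fin k) : expo k i ≠ k - 1 := by
  unfold expo; split <;> omega

lemma expo_inj (k : ℕ) (hk : 3 ≤ k) : Function.Injective (expo k) := by
  intro i i' h
  unfold expo at h
  have hi := i.isLt; have hi' := i'.isLt
  split_ifs at h <;> (apply Fin.ext; omega)

/-- Reconstruction: a polynomial of degree ≤ k with vanishing (k-1)-coefficient is a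
combination of the monomials `X ^ expo k i`. -/
lemma recon {F : Type*} [Field F] (k : ℕ) (hk : 3 ≤ k) (f : F[X])
    (hdeg : f.natDegree ≤ k) (hco : f.coeff (k - 1) = 0) :
    f = ∑ i : Fin k, C (f.coeff (expo k i)) * X ^ expo k i := by
  have himg : Finset.image (expo k) Finset.univ = (Finset.range (k + 1)).erase (k - 1) := by
    apply Finset.eq_of_subset_of_card_le
    · intro d hd
      obtain ⟨i, _, rfl⟩ := Finset.mem_image.mp hd
      exact Finset.mem_erase.mpr ⟨expo_ne k hk i, Finset.mem_range.mpr (Nat.lt_succ_of_le (expo_le k i))⟩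
    · rw [Finset.card_erase_of_mem (Finset.mem_range.mpr (by omega)), Finset.card_range,
        Finset.card_image_of_injective _ (expo_inj k hk), Finset.card_univ, Fintype.card_fin]
      omega
  have hsum : f = ∑ d ∈ Finset.range (k + 1), C (f.coeff d) * X ^ d := by
    conv_lhs => rw [Polynomial.as_sum_range' f (k + 1) (Nat.lt_succ_of_le hdeg)]
    exact Finset.sum_congr rfl fun d _ => by rw [Polynomial.C_mul_X_pow_eq_monomial]
  nth_rewrite 1 [hsum]
  rw [← Finset.add_sum_erase _ _ (Finset.mem_range.mpr (by omega : k - 1 < k + 1))]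
  rw [hco, map_zero, zero_mul, zero_add, ← himg,
    Finset.sum_image (fun i _ i' _ h => expo_inj k hk h)]

/-- Vieta: if f ≠ 0 has degree ≤ k, vanishing (k-1)-coefficient, and a k-set of roots,
then the roots sum to zero. -/
lemma sum_roots_eq_zero {F : Type*} [Field F] [DecidableEq F] (k : ℕ) (hk : 3 ≤ k)
    (f : F[X]) (hf : f ≠ 0) (hdeg : f.natDegree ≤ k) (hco : f.coeff (k - 1) = 0)
    (R : Finset F) (hR : #R = k) (hroots : ∀ r ∈ R, f.eval r = 0) :
    ∑ r ∈ R, r = 0 := by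
  have hle : R.1 ≤ f.roots := by
    rw [Multiset.le_iff_count]
    intro a
    by_cases ha : a ∈ R
    · rw [Polynomial.count_roots]
      have h1 : R.1.count a = 1 := Multiset.count_eq_one_of_mem R.nodup ha
      rw [h1]
      exact (Polynomial.rootMultiplicity_pos hf).mpr (hroots a ha)
    · rw [Multiset.count_eq_zero_of_notMem ha]
      exact Nat.zero_le _
  have hdvd : (R.1.map (fun r => X - C r)).prod ∣ f :=
    dvd_trans (Multiset.prod_dvd_prod_of_le (Multiset.map_le_map hle))
      (Polynomial.prod_multiset_X_sub_C_dvd f)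
  obtain ⟨g, hg⟩ := hdvd
  set p : F[X] := (R.1.map (fun r => X - C r)).prod with hp
  have hpdeg : p.natDegree = k := by
    rw [hp, Polynomial.natDegree_multiset_prod_X_sub_C_eq_card]
    simpa using hR
  have hpm : p.Monic := Polynomial.monic_multiset_prod_of_monic _ _
    (fun r _ => Polynomial.monic_X_sub_C r)
  have hgne : g ≠ 0 := by rintro rfl; rw [mul_zero] at hg; exact hf hg
  have hgdeg : g.natDegree = 0 := by
    have := Polynomial.natDegree_mul (hpm.ne_zero) hgne
    rw [← hg, hpdeg] at this
    omega
  have hgC : g = C (g.coeff 0) := Polynomial.eq_C_of_natDegree_eq_zero hgdeg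
  have ha0 : g.coeff 0 ≠ 0 := by
    intro h; apply hgne; rw [hgC, h, map_zero]
  have hvieta : p.coeff (k - 1) = -(∑ r ∈ R, r) := by
    have hcv : Multiset.card R.1 = k := by rw [← Finset.card_def, hR]
    have hcard : (k : ℕ) - 1 ≤ Multiset.card R.1 := by omega
    have := Multiset.prod_X_sub_C_coeff R.1 hcard
    rw [hp, this]
    rw [hcv]
    have h1 : k - (k - 1) = 1 := by omega
    rw [h1, multiset_esymm_one, pow_one, neg_one_mul]
    congr 1
    rw [Finset.sum_eq_multiset_sum, Multiset.map_id']
  have : f.coeff (k - 1) = p.coeff (k - 1) * g.coeff 0 := by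
    conv_lhs => rw [hg, hgC]
    rw [Polynomial.coeff_mul_C]
  rw [hco, hvieta] at this
  have := this.symm
  rcases mul_eq_zero.mp this with h | h
  · exact neg_eq_zero.mp h
  · exact absurd h ha0

open Polynomial in
lemma eval_comb {F : Type*} [Field F] [Fintype F] [DecidableEq F] (m k : ℕ)
    (θ : Fin (2 ^ m - 1) → F) (x : Fin k → F) (j : Fin (2 ^ m - 1)) :
    (∑ i, x i • G3 m k θ i) j = (∑ i : Fin k, C (x i) * X ^ expo k i).eval (θ j) := by
  rw [Finset.sum_apply, Polynomial.eval_finset_sum]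
  refine Finset.sum_congr rfl fun i _ => ?_
  simp only [Pi.smul_apply, smul_eq_mul, G3, Matrix.of_apply, expo]
  rw [Polynomial.eval_mul, Polynomial.eval_C, Polynomial.eval_pow, Polynomial.eval_X]
  split <;> rfl

open Polynomial in
lemma blocks_card_eq {F : Type*} [Field F] [Fintype F] [DecidableEq F]
    (m k : ℕ) (hm : 3 ≤ m) (hk : 3 ≤ k) (hk' : k ≤ 2 ^ m - 4)
    (hcard : Fintype.card F = 2 ^ m)
    (θ : Fin (2 ^ m - 1) → F) (hθinj : Function.Injective θ) (hθne : ∀ j, θ j ≠ 0)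
    (t : Finset (Fin (2 ^ m - 1))) (ht : #t = 2) :
    {s ∈ blocks (rowSpan (G3 m k θ)) (2 ^ m - 1 - k) | t ⊆ s}.ncard
      = #(Finset.filter (fun R => ∑ r ∈ R, r = 0)
          (Finset.powersetCard k ((Finset.univ.filter (fun x : F => x ≠ 0)) \ t.image θ))) := by
  have hq8 : 8 ≤ 2 ^ m := by
    calc (8:ℕ) = 2 ^ 3 := rfl
      _ ≤ 2 ^ m := Nat.pow_le_pow_right (by norm_num) hm
  set S : Finset F := (Finset.univ.filter (fun x : F => x ≠ 0)) \ t.image θ with hS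
  set Z := Finset.filter (fun R => ∑ r ∈ R, r = 0) (Finset.powersetCard k S) with hZ
  set β : Finset F → Finset (Fin (2 ^ m - 1)) := fun R => Finset.univ.filter (fun j => θ j ∉ R) with hβ
  have hcard_univ : Fintype.card (Fin (2 ^ m - 1)) = (2 ^ m - 1) := Fintype.card_fin (2 ^ m - 1)
  have himg : Finset.image θ Finset.univ = (Finset.univ : Finset F).filter (fun x => x ≠ 0) := by
    apply Finset.eq_of_subset_of_card_le
    · intro y hy
      obtain ⟨j, _, rfl⟩ := Finset.mem_image.mp hy
      exact Finset.mem_filter.mpr ⟨Finset.mem_univ _, hθne j⟩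
    · rw [Finset.card_image_of_injective _ hθinj, Finset.card_univ, hcard_univ]
      have hfe : (Finset.univ : Finset F).filter (fun y => y ≠ 0) = Finset.univ.erase 0 := by
        ext y; simp [Finset.mem_erase, and_comm]
      rw [hfe, Finset.card_erase_of_mem (Finset.mem_univ _), Finset.card_univ, hcard]
  have hθmem : ∀ (R : Finset F), R ⊆ S → ∀ r ∈ R, ∃ j, θ j = r := by
    intro R hR r hr
    have hmem : r ∈ Finset.image θ Finset.univ := by
      rw [himg]; exact (Finset.mem_sdiff.mp (hR hr)).1
    obtain ⟨j, _, hj⟩ := Finset.mem_image.mp hmem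
    exact ⟨j, hj⟩
  have fwd : ∀ s ∈ blocks (rowSpan (G3 m k θ)) ((2 ^ m - 1) - k), t ⊆ s → ∃ R ∈ Z, β R = s := by
    intro s hs hts
    obtain ⟨c, hcC, hcw, hcs⟩ := hs
    obtain ⟨x, hx⟩ := (Submodule.mem_span_range_iff_exists_fun F).mp hcC
    set f : F[X] := ∑ i : Fin k, C (x i) * X ^ expo k i with hf
    have hceval : ∀ j, c j = f.eval (θ j) := by
      intro j; rw [← hx]; exact eval_comb m k θ x j
    have hwpos : 0 < (2 ^ m - 1) - k := by omega
    have hcne : c ≠ 0 := by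
      intro h; rw [h, hammingNorm_zero] at hcw; omega
    have hfne : f ≠ 0 := by
      obtain ⟨j, hj⟩ := Function.ne_iff.mp hcne
      intro h
      apply hj
      have := hceval j
      rw [h, Polynomial.eval_zero] at this
      simpa using this
    have hfdeg : f.natDegree ≤ k := by
      apply Polynomial.natDegree_sum_le_of_forall_le
      intro i _
      exact le_trans (Polynomial.natDegree_C_mul_X_pow_le _ _) (expo_le k i)
    have hfco : f.coeff (k - 1) = 0 := by
      rw [hf, Polynomial.finset_sum_coeff]
      refine Finset.sum_eq_zero fun i _ => ?_
      rw [Polynomial.coeff_C_mul, Polynomial.coeff_X_pow,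
        if_neg (fun h => expo_ne k hk i h.symm), mul_zero]
    set Rt : Finset (Fin (2 ^ m - 1)) := Finset.univ.filter (fun j => j ∉ s) with hRt
    have hscard : #s = (2 ^ m - 1) - k := by rw [← hcs]; exact hcw
    have hRtcard : #Rt = k := by
      have hre : Rt = Finset.univ \ s := by
        rw [hRt, Finset.sdiff_eq_filter]
      rw [hre, Finset.card_sdiff_of_subset (Finset.subset_univ s), Finset.card_univ, hcard_univ, hscard]
      omega
    set R : Finset F := Rt.image θ with hR
    have hRcard : #R = k := by rw [hR, Finset.card_image_of_injective _ hθinj, hRtcard]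
    have hRroots : ∀ r ∈ R, f.eval r = 0 := by
      intro r hr
      obtain ⟨j, hjRt, rfl⟩ := Finset.mem_image.mp hr
      have hjs : j ∉ s := by
        have := Finset.mem_filter.mp hjRt; exact this.2
      have hcj : c j = 0 := by
        by_contra hne
        exact hjs (by rw [← hcs]; exact Finset.mem_filter.mpr ⟨Finset.mem_univ _, hne⟩)
      rw [← hceval j, hcj]
    have hRsum : ∑ r ∈ R, r = 0 := sum_roots_eq_zero k hk f hfne hfdeg hfco R hRcard hRroots
    have hRS : R ⊆ S := by
      intro r hr
      obtain ⟨j, hjRt, rfl⟩ := Finset.mem_image.mp hr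
      have hjs : j ∉ s := (Finset.mem_filter.mp hjRt).2
      refine Finset.mem_sdiff.mpr ⟨Finset.mem_filter.mpr ⟨Finset.mem_univ _, hθne j⟩, ?_⟩
      intro hmem
      obtain ⟨j', hj't, hj'⟩ := Finset.mem_image.mp hmem
      have : j' = j := hθinj hj'
      exact hjs (hts (this ▸ hj't))
    refine ⟨R, Finset.mem_filter.mpr ⟨Finset.mem_powersetCard.mpr ⟨hRS, hRcard⟩, hRsum⟩, ?_⟩
    ext j
    simp only [hβ, Finset.mem_filter, Finset.mem_univ, true_and]
    constructor
    · intro hnot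
      by_contra hjs
      exact hnot (Finset.mem_image.mpr ⟨j, Finset.mem_filter.mpr ⟨Finset.mem_univ _, hjs⟩, rfl⟩)
    · intro hjs hmem
      obtain ⟨j', hj', hj'eq⟩ := Finset.mem_image.mp hmem
      have he : j' = j := hθinj hj'eq
      exact (Finset.mem_filter.mp hj').2 (he ▸ hjs)
  have bwd : ∀ R ∈ Z, β R ∈ blocks (rowSpan (G3 m k θ)) ((2 ^ m - 1) - k) ∧ t ⊆ β R := by
    intro R hRZ
    obtain ⟨hRp, hRsum⟩ := Finset.mem_filter.mp hRZ
    obtain ⟨hRS, hRcard⟩ := Finset.mem_powersetCard.mp hRp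
    set f : F[X] := ∏ r ∈ R, (X - C r) with hf
    have hfdeg : f.natDegree = k := by
      rw [hf, Finset.prod_eq_multiset_prod,
        Polynomial.natDegree_multiset_prod_X_sub_C_eq_card, ← Finset.card_def, hRcard]
    have hco : f.coeff (k - 1) = 0 := by
      have h0 : 0 < #R := by omega
      have hv := Polynomial.prod_X_sub_C_coeff_card_pred R (fun r => r) h0
      rw [hRcard] at hv
      rw [hf]
      simpa [hRsum] using hv
    have hrecon := recon k hk f hfdeg.le hco
    set x : Fin k → F := fun i => f.coeff (expo k i) with hx
    set c : Fin (2 ^ m - 1) → F := ∑ i, x i • G3 m k θ i with hc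
    have hcmem : c ∈ rowSpan (G3 m k θ) := (Submodule.mem_span_range_iff_exists_fun F).mpr ⟨x, hc.symm⟩
    have hceval : ∀ j, c j = f.eval (θ j) := by
      intro j
      rw [hc, eval_comb m k θ x j, ← hrecon]
    have hevalne : ∀ j, (c j ≠ 0) ↔ θ j ∉ R := by
      intro j
      rw [hceval j, hf, Polynomial.eval_prod]
      simp only [Polynomial.eval_sub, Polynomial.eval_X, Polynomial.eval_C]
      rw [Finset.prod_ne_zero_iff]
      constructor
      · intro h hmem
        have := h _ hmem
        simp at this
      · intro h r hr
        exact sub_ne_zero.mpr (fun e => h (e ▸ hr))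
    have hsupp : Finset.univ.filter (fun j => c j ≠ 0) = β R := by
      ext j
      simp only [Finset.mem_filter, Finset.mem_univ, true_and, hβ]
      exact hevalne j
    have hfilmem : (Finset.univ.filter (fun j => θ j ∈ R)).image θ = R := by
      ext r
      constructor
      · intro hr
        obtain ⟨j, hjf, rfl⟩ := Finset.mem_image.mp hr
        exact (Finset.mem_filter.mp hjf).2
      · intro hr
        obtain ⟨j, hj⟩ := hθmem R hRS r hr
        exact Finset.mem_image.mpr ⟨j, Finset.mem_filter.mpr ⟨Finset.mem_univ _, hj ▸ hr⟩, hj⟩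
    have hfcard : #(Finset.univ.filter (fun j => θ j ∈ R)) = k := by
      have hh := Finset.card_image_of_injective (Finset.univ.filter (fun j => θ j ∈ R)) hθinj
      rw [hfilmem] at hh
      rw [← hh, hRcard]
    have hβcard : #(β R) = (2 ^ m - 1) - k := by
      have hsplit := Finset.card_filter_add_card_filter_not
        (s := (Finset.univ : Finset (Fin (2 ^ m - 1)))) (p := fun j => θ j ∈ R)
      rw [Finset.card_univ, hcard_univ, hfcard] at hsplit
      have : β R = Finset.univ.filter (fun j => ¬ θ j ∈ R) := rfl
      rw [this]
      omega
    have hham : hammingNorm c = (2 ^ m - 1) - k := by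
      show #(Finset.univ.filter (fun j => c j ≠ 0)) = (2 ^ m - 1) - k
      rw [hsupp]; exact hβcard
    refine ⟨⟨c, hcmem, hham, hsupp⟩, ?_⟩
    intro j hj
    refine Finset.mem_filter.mpr ⟨Finset.mem_univ _, ?_⟩
    intro hmem
    exact (Finset.mem_sdiff.mp (hRS hmem)).2 (Finset.mem_image_of_mem θ hj)
  have key : ∀ R ∈ Z, ∀ R' ∈ Z, β R = β R' → R ⊆ R' := by
    intro R hR R' hR' hEq r hr
    have hRS := (Finset.mem_powersetCard.mp (Finset.mem_filter.mp hR).1).1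
    obtain ⟨j, hj⟩ := hθmem R hRS r hr
    have hjβ : j ∉ β R := by
      simp only [hβ, Finset.mem_filter, Finset.mem_univ, true_and, not_not]
      rw [hj]; exact hr
    rw [hEq] at hjβ
    simp only [hβ, Finset.mem_filter, Finset.mem_univ, true_and, not_not] at hjβ
    rwa [hj] at hjβ
  have hinj : Set.InjOn β ↑Z := by
    intro R hR R' hR' hEq
    exact Finset.Subset.antisymm (key R hR R' hR' hEq) (key R' hR' R hR hEq.symm)
  have hset : {s ∈ blocks (rowSpan (G3 m k θ)) ((2 ^ m - 1) - k) | t ⊆ s} = ↑(Z.image β) := by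
    ext s
    simp only [Set.mem_setOf_eq, Finset.coe_image, Set.mem_image, Finset.mem_coe]
    constructor
    · rintro ⟨hsb, hts⟩
      exact fwd s hsb hts
    · rintro ⟨R, hRZ, rfl⟩
      exact bwd R hRZ
  rw [hset, Set.ncard_coe_finset, Finset.card_image_of_injOn hinj]

/-- Coefficient helper: `D2 m r` is the `r`-th coefficient of `(1-X^2)^(2^(m-1)-2)`. -/
def D2 (m r : ℕ) : ℚ :=
  if 2 ∣ r then (-1 : ℚ) ^ (r / 2) * ((2 ^ (m - 1) - 2).choose (r / 2) : ℚ) else 0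

/-- Coefficient helper: `D3 m r` is the `r`-th coefficient of `(1-X^2)^(2^(m-1)-3)`. -/
def D3 (m r : ℕ) : ℚ :=
  if 2 ∣ r then (-1 : ℚ) ^ (r / 2) * ((2 ^ (m - 1) - 3).choose (r / 2) : ℚ) else 0

open Polynomial in
lemma count_zero_sum {F : Type*} [Field F] [Fintype F] [DecidableEq F]
    (m k : ℕ) (hm : 3 ≤ m) (hk : 3 ≤ k) (hk' : k ≤ 2 ^ m - 4)
    (hcard : Fintype.card F = 2 ^ m) (a b : F) (ha : a ≠ 0) (hb : b ≠ 0) (hab : a ≠ b) :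
    (2 ^ m : ℚ) * #(Finset.filter (fun R => ∑ r ∈ R, r = 0)
        (Finset.powersetCard k ((Finset.univ.filter (fun x : F => x ≠ 0)) \ {a, b})))
      = ((2 ^ m - 3 : ℕ).choose k : ℚ)
        + ((2:ℚ) ^ (m - 2) - 1) * (D3 m k - 3 * D3 m (k-1) + 3 * D3 m (k-2) - D3 m (k-3))
        + (2:ℚ) ^ (m - 2) * (2 * (D2 m k - D2 m (k-1)) + (D2 m k + D2 m (k-1))) := by
  have hq8 : 8 ≤ 2 ^ m := by
    calc (8:ℕ) = 2 ^ 3 := rfl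
      _ ≤ 2 ^ m := Nat.pow_le_pow_right (by norm_num) hm
  have hH4 : 4 ≤ 2 ^ (m - 1) := by
    calc (4:ℕ) = 2 ^ 2 := rfl
      _ ≤ 2 ^ (m - 1) := Nat.pow_le_pow_right (by norm_num) (by omega)
  have hQ2 : 2 ≤ 2 ^ (m - 2) := by
    calc (2:ℕ) = 2 ^ 1 := rfl
      _ ≤ 2 ^ (m - 2) := Nat.pow_le_pow_right (by norm_num) (by omega)
  have h2H : 2 ^ m = 2 * 2 ^ (m - 1) := by
    rw [← pow_succ']; congr 1; omega
  have h2Q : 2 ^ (m - 1) = 2 * 2 ^ (m - 2) := by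
    rw [← pow_succ']; congr 1; omega
  obtain ⟨χ, hmul, hpm, hsum⟩ := exists_chi F m (by omega) hcard
  have h2 := char_two_of_card F m hcard
  have hchi0 : χ 0 = 1 := chi_zero hmul hpm
  have hiff : ∀ u : F, (¬ χ u = 1) ↔ χ u = -1 := fun u =>
    ⟨fun h => (hpm u).resolve_left h, fun h => by rw [h]; norm_num⟩
  set S : Finset F := (Finset.univ.filter (fun x : F => x ≠ 0)) \ {a, b} with hSdef
  have habS : ({a, b} : Finset F) ⊆ Finset.univ.filter (fun x : F => x ≠ 0) := by
    intro x hx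
    rcases Finset.mem_insert.mp hx with rfl | hx
    · exact Finset.mem_filter.mpr ⟨Finset.mem_univ _, ha⟩
    · rw [Finset.mem_singleton] at hx; subst hx
      exact Finset.mem_filter.mpr ⟨Finset.mem_univ _, hb⟩
  have hS3 : #S = 2 ^ m - 3 := by
    rw [hSdef, Finset.card_sdiff_of_subset habS]
    have hfe : (Finset.univ : Finset F).filter (fun y => y ≠ 0) = Finset.univ.erase 0 := by
      ext y; simp [Finset.mem_erase, and_comm]
    rw [hfe, Finset.card_erase_of_mem (Finset.mem_univ _), Finset.card_univ, hcard,
      Finset.card_insert_of_notMem (by simpa using hab), Finset.card_singleton]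
    omega
  have hkS : k ≤ #S := by omega
  set N := #(Finset.filter (fun R => ∑ r ∈ R, r = 0) (Finset.powersetCard k S)) with hN
  have step1 : ∑ c : F, ∑ R ∈ S.powersetCard k, ∏ r ∈ R, χ (c * r) = (2 ^ m : ℚ) * N := by
    rw [Finset.sum_comm]
    have h1 : ∀ R ∈ S.powersetCard k,
        ∑ c : F, ∏ r ∈ R, χ (c * r) = if (∑ r ∈ R, r) = 0 then ((2:ℚ) ^ m) else 0 := by
      intro R _
      have hcollapse : ∀ c : F, ∏ r ∈ R, χ (c * r) = χ (c * ∑ r ∈ R, r) := by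
        intro c
        rw [Finset.mul_sum, chi_finsum hmul hpm R (fun r => c * r)]
      rw [Finset.sum_congr rfl fun c _ => hcollapse c, chi_orth hmul hpm hsum, hcard]
      split_ifs <;> [push_cast; skip] <;> ring
    rw [Finset.sum_congr rfl h1, ← Finset.sum_filter, Finset.sum_const, ← hN]
    rw [nsmul_eq_mul]; ring
  have step2 : ∀ c : F, ∑ R ∈ S.powersetCard k, ∏ r ∈ R, χ (c * r)
      = (∏ x ∈ S, (C (χ (c * x)) * X + 1)).coeff k :=
    fun c => (coeff_prod_one_add S (fun x => χ (c * x)) k hkS).symm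
  have hT0 : (∏ x ∈ S, (C (χ (0 * x)) * X + 1)).coeff k = ((2 ^ m - 3 : ℕ).choose k : ℚ) := by
    have hfac : ∀ x ∈ S, C (χ (0 * x)) * X + 1 = 1 + X := by
      intro x _; rw [zero_mul, hchi0, map_one, one_mul, add_comm]
    rw [Finset.prod_congr rfl hfac, Finset.prod_const, hS3, Polynomial.coeff_one_add_X_pow]
  have hA : ∀ c : F, c ≠ 0 → #(S.filter (fun x => χ (c * x) = 1))
      = 2 ^ (m - 1) - 1 - (if χ (c * a) = 1 then 1 else 0)
        - (if χ (c * b) = 1 then 1 else 0) := by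
    intro c hc
    have hPuniv : #(Finset.univ.filter (fun x => χ (c * x) = 1)) = 2 ^ (m - 1) := by
      have hcc := card_chi_plus hmul hpm hsum c hc
      rw [hcard] at hcc
      have hNat : 2 * #(Finset.univ.filter (fun x => χ (c * x) = 1)) = 2 ^ m := by
        exact_mod_cast hcc
      omega
    have hT3 : S = Finset.univ \ ({0, a, b} : Finset F) := by
      rw [hSdef]
      ext x
      simp only [Finset.mem_sdiff, Finset.mem_filter, Finset.mem_univ, true_and,
        Finset.mem_insert, Finset.mem_singleton]
      tauto
    have hsplit : #(Finset.univ.filter (fun x => χ (c * x) = 1))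
        = #(S.filter (fun x => χ (c * x) = 1))
          + #((({0, a, b} : Finset F)).filter (fun x => χ (c * x) = 1)) := by
      rw [hT3, ← Finset.card_union_of_disjoint
          (Finset.disjoint_filter_filter Finset.sdiff_disjoint),
        ← Finset.filter_union, Finset.sdiff_union_of_subset (Finset.subset_univ _)]
    have hcard3 : #((({0, a, b} : Finset F)).filter (fun x => χ (c * x) = 1))
        = 1 + (if χ (c * a) = 1 then 1 else 0) + (if χ (c * b) = 1 then 1 else 0) := by
      rw [Finset.card_filter]
      rw [Finset.sum_insert (by simp [ha.symm, hb.symm]),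
        Finset.sum_insert (by simpa using hab), Finset.sum_singleton]
      rw [mul_zero, hchi0, if_pos rfl]
      ring
    omega
  have hprodc : ∀ c : F, (∏ x ∈ S, (C (χ (c * x)) * X + 1))
      = (1 + X) ^ (#(S.filter (fun x => χ (c * x) = 1)))
        * (1 - X) ^ (#S - #(S.filter (fun x => χ (c * x) = 1))) := by
    intro c
    rw [← Finset.prod_filter_mul_prod_filter_not S (fun x => χ (c * x) = 1)]
    congr 1
    · have hfac : ∀ x ∈ S.filter (fun x => χ (c * x) = 1), C (χ (c * x)) * X + 1 = 1 + X := by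
        intro x hx
        rw [(Finset.mem_filter.mp hx).2, map_one, one_mul, add_comm]
      rw [Finset.prod_congr rfl hfac, Finset.prod_const]
    · have hcnt : #(S.filter (fun x => ¬ χ (c * x) = 1))
          = #S - #(S.filter (fun x => χ (c * x) = 1)) := by
        have := Finset.card_filter_add_card_filter_not
          (s := S) (p := fun x => χ (c * x) = 1)
        omega
      have hfac : ∀ x ∈ S.filter (fun x => ¬ χ (c * x) = 1),
          C (χ (c * x)) * X + 1 = 1 - X := by
        intro x hx
        rw [(hiff _).mp (Finset.mem_filter.mp hx).2]
        simp only [map_neg, map_one]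
        ring
      rw [Finset.prod_congr rfl hfac, Finset.prod_const, hcnt]
  -- coefficient values of the three shapes
  set V1 : ℚ := D3 m k - 3 * D3 m (k-1) + 3 * D3 m (k-2) - D3 m (k-3) with hV1
  set V2 : ℚ := D2 m k - D2 m (k-1) with hV2
  set V3 : ℚ := D2 m k + D2 m (k-1) with hV3
  have hW1 : ((1 + X:ℚ[X]) ^ (2 ^ (m-1) - 3) * (1 - X) ^ (2 ^ (m-1))).coeff k = V1 := by
    obtain ⟨n3, hn3⟩ : ∃ n3, 2 ^ (m-1) - 3 = n3 := ⟨_, rfl⟩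
    have hXp : (2:ℕ) ^ (m-1) = n3 + 3 := by omega
    rw [hn3, hXp, pow_add, ← mul_assoc, ← mul_pow, one_add_mul_one_sub,
      coeff_mul_one_sub_cube _ k hk, coeff_one_sub_X_sq_pow, coeff_one_sub_X_sq_pow,
      coeff_one_sub_X_sq_pow, coeff_one_sub_X_sq_pow, hV1]
    simp only [D3, hn3]
  have hW2 : ((1 + X:ℚ[X]) ^ (2 ^ (m-1) - 2) * (1 - X) ^ (2 ^ (m-1) - 1)).coeff k = V2 := by
    obtain ⟨n2, hn2⟩ : ∃ n2, 2 ^ (m-1) - 2 = n2 := ⟨_, rfl⟩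
    have hXp : (2:ℕ) ^ (m-1) - 1 = n2 + 1 := by omega
    rw [hn2, hXp, pow_add, ← mul_assoc, ← mul_pow, one_add_mul_one_sub, pow_one,
      coeff_mul_one_sub _ k (by omega), coeff_one_sub_X_sq_pow, coeff_one_sub_X_sq_pow, hV2]
    simp only [D2, hn2]
  have hW3 : ((1 + X:ℚ[X]) ^ (2 ^ (m-1) - 1) * (1 - X) ^ (2 ^ (m-1) - 2)).coeff k = V3 := by
    obtain ⟨n2, hn2⟩ : ∃ n2, 2 ^ (m-1) - 2 = n2 := ⟨_, rfl⟩
    have hXp : (2:ℕ) ^ (m-1) - 1 = n2 + 1 := by omega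
    have hsplit : ((1 + X:ℚ[X]) ^ (n2 + 1) * (1 - X) ^ n2)
        = (1 - X^2) ^ n2 * (1 + X) := by
      rw [pow_add, pow_one]
      calc (1 + X:ℚ[X]) ^ n2 * (1 + X) * (1 - X) ^ n2
          = (1 + X:ℚ[X]) ^ n2 * (1 - X) ^ n2 * (1 + X) := by ring
        _ = ((1 + X) * (1 - X)) ^ n2 * (1 + X) := by rw [mul_pow]
        _ = (1 - X^2) ^ n2 * (1 + X) := by rw [one_add_mul_one_sub]
    rw [hn2, hXp, hsplit, coeff_mul_one_add _ k (by omega), coeff_one_sub_X_sq_pow,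
      coeff_one_sub_X_sq_pow, hV3]
    simp only [D2, hn2]
  -- value per class
  have hTc : ∀ c : F, c ≠ 0 → (∏ x ∈ S, (C (χ (c * x)) * X + 1)).coeff k
      = if χ (c * a) = 1 then (if χ (c * b) = 1 then V1 else V2)
        else (if χ (c * b) = 1 then V2 else V3) := by
    intro c hc
    rw [hprodc c]
    have hAc := hA c hc
    by_cases hca : χ (c * a) = 1 <;> by_cases hcb : χ (c * b) = 1 <;>
      simp only [hca, hcb, if_true, if_false, if_pos, if_neg] at hAc ⊢
    · rw [hAc, hS3]
      have e1 : 2 ^ (m-1) - 1 - 1 - 1 = 2 ^ (m-1) - 3 := by omega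
      have e2 : 2 ^ m - 3 - (2 ^ (m-1) - 3) = 2 ^ (m-1) := by omega
      rw [e1, e2]; exact hW1
    · rw [hAc, hS3]
      have e1 : 2 ^ (m-1) - 1 - 1 - 0 = 2 ^ (m-1) - 2 := by omega
      have e2 : 2 ^ m - 3 - (2 ^ (m-1) - 2) = 2 ^ (m-1) - 1 := by omega
      rw [e1, e2]; exact hW2
    · rw [hAc, hS3]
      have e1 : 2 ^ (m-1) - 1 - 0 - 1 = 2 ^ (m-1) - 2 := by omega
      have e2 : 2 ^ m - 3 - (2 ^ (m-1) - 2) = 2 ^ (m-1) - 1 := by omega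
      rw [e1, e2]; exact hW2
    · rw [hAc, hS3]
      have e1 : 2 ^ (m-1) - 1 - 0 - 0 = 2 ^ (m-1) - 1 := by omega
      have e2 : 2 ^ m - 3 - (2 ^ (m-1) - 1) = 2 ^ (m-1) - 2 := by omega
      rw [e1, e2]; exact hW3
  -- class cardinalities
  have hclass : ∀ (ε₁ ε₂ : ℚ), (ε₁ = 1 ∨ ε₁ = -1) → (ε₂ = 1 ∨ ε₂ = -1) →
      #(Finset.univ.filter (fun c : F => χ (c * a) = ε₁ ∧ χ (c * b) = ε₂)) = 2 ^ (m - 2) := by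
    intro ε₁ ε₂ hε₁ hε₂
    have hcc := card_chi_class hmul hpm hsum h2 a b ha hb hab ε₁ ε₂ hε₁ hε₂
    rw [hcard] at hcc
    have hNat : 4 * #(Finset.univ.filter (fun c : F => χ (c * a) = ε₁ ∧ χ (c * b) = ε₂))
        = 2 ^ m := by exact_mod_cast hcc
    omega
  -- split the full sum
  have htotal : ∑ c : F, (∏ x ∈ S, (C (χ (c * x)) * X + 1)).coeff k
      = ((2 ^ m - 3 : ℕ).choose k : ℚ)
        + ((2:ℚ) ^ (m - 2) - 1) * V1 + (2:ℚ) ^ (m - 2) * (2 * V2 + V3) := by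
    have herase : ∑ c ∈ (Finset.univ : Finset F).erase 0,
        (∏ x ∈ S, (C (χ (c * x)) * X + 1)).coeff k
        = ((2:ℚ) ^ (m - 2) - 1) * V1 + (2:ℚ) ^ (m - 2) * (2 * V2 + V3) := by
      set E := (Finset.univ : Finset F).erase 0 with hE
      have hmemE : ∀ c ∈ E, c ≠ 0 := fun c hc => (Finset.mem_erase.mp hc).1
      rw [Finset.sum_congr rfl (fun c hc => hTc c (hmemE c hc))]
      rw [← Finset.sum_filter_add_sum_filter_not E (fun c => χ (c * a) = 1)]
      have hpa : ∀ c ∈ E.filter (fun c => χ (c * a) = 1),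
          (if χ (c * a) = 1 then (if χ (c * b) = 1 then V1 else V2)
            else (if χ (c * b) = 1 then V2 else V3)) = (if χ (c * b) = 1 then V1 else V2) := by
        intro c hc; rw [if_pos (Finset.mem_filter.mp hc).2]
      have hna : ∀ c ∈ E.filter (fun c => ¬ χ (c * a) = 1),
          (if χ (c * a) = 1 then (if χ (c * b) = 1 then V1 else V2)
            else (if χ (c * b) = 1 then V2 else V3)) = (if χ (c * b) = 1 then V2 else V3) := by
        intro c hc; rw [if_neg (Finset.mem_filter.mp hc).2]
      rw [Finset.sum_congr rfl hpa, Finset.sum_congr rfl hna]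
      rw [← Finset.sum_filter_add_sum_filter_not (E.filter (fun c => χ (c * a) = 1))
        (fun c => χ (c * b) = 1)]
      rw [← Finset.sum_filter_add_sum_filter_not (E.filter (fun c => ¬ χ (c * a) = 1))
        (fun c => χ (c * b) = 1)]
      have hv11 : ∀ c ∈ (E.filter (fun c => χ (c * a) = 1)).filter (fun c => χ (c * b) = 1),
          (if χ (c * b) = 1 then V1 else V2) = V1 := by
        intro c hc; rw [if_pos (Finset.mem_filter.mp hc).2]
      have hv10 : ∀ c ∈ (E.filter (fun c => χ (c * a) = 1)).filter (fun c => ¬ χ (c * b) = 1),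
          (if χ (c * b) = 1 then V1 else V2) = V2 := by
        intro c hc; rw [if_neg (Finset.mem_filter.mp hc).2]
      have hv01 : ∀ c ∈ (E.filter (fun c => ¬ χ (c * a) = 1)).filter (fun c => χ (c * b) = 1),
          (if χ (c * b) = 1 then V2 else V3) = V2 := by
        intro c hc; rw [if_pos (Finset.mem_filter.mp hc).2]
      have hv00 : ∀ c ∈ (E.filter (fun c => ¬ χ (c * a) = 1)).filter (fun c => ¬ χ (c * b) = 1),
          (if χ (c * b) = 1 then V2 else V3) = V3 := by
        intro c hc; rw [if_neg (Finset.mem_filter.mp hc).2]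
      rw [Finset.sum_congr rfl hv11, Finset.sum_congr rfl hv10, Finset.sum_congr rfl hv01,
        Finset.sum_congr rfl hv00]
      rw [Finset.sum_const, Finset.sum_const, Finset.sum_const, Finset.sum_const]
      -- now compute the four cardinalities
      have hfe : ∀ (p : F → Prop) [DecidablePred p],
          E.filter p = (Finset.univ.filter p).erase 0 := by
        intro p _
        rw [hE, Finset.filter_erase]
      have hc11 : #((E.filter (fun c => χ (c * a) = 1)).filter (fun c => χ (c * b) = 1))
          = 2 ^ (m - 2) - 1 := by
        rw [Finset.filter_filter, hfe]
        rw [Finset.card_erase_of_mem (Finset.mem_filter.mpr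
          ⟨Finset.mem_univ _, by rw [zero_mul, hchi0], by rw [zero_mul, hchi0]⟩)]
        rw [hclass 1 1 (Or.inl rfl) (Or.inl rfl)]
      have hc10 : #((E.filter (fun c => χ (c * a) = 1)).filter (fun c => ¬ χ (c * b) = 1))
          = 2 ^ (m - 2) := by
        rw [Finset.filter_filter, hfe]
        rw [Finset.erase_eq_of_notMem (fun hmem => by
          have := (Finset.mem_filter.mp hmem).2.2
          rw [zero_mul, hchi0] at this
          exact this rfl)]
        have heq : (Finset.univ.filter (fun c : F => χ (c * a) = 1 ∧ ¬ χ (c * b) = 1))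
            = Finset.univ.filter (fun c : F => χ (c * a) = 1 ∧ χ (c * b) = -1) := by
          ext c
          simp only [Finset.mem_filter, Finset.mem_univ, true_and]
          rw [hiff]
        rw [heq, hclass 1 (-1) (Or.inl rfl) (Or.inr rfl)]
      have hc01 : #((E.filter (fun c => ¬ χ (c * a) = 1)).filter (fun c => χ (c * b) = 1))
          = 2 ^ (m - 2) := by
        rw [Finset.filter_filter, hfe]
        rw [Finset.erase_eq_of_notMem (fun hmem => by
          have := (Finset.mem_filter.mp hmem).2.1
          rw [zero_mul, hchi0] at this
          exact this rfl)]
        have heq : (Finset.univ.filter (fun c : F => ¬ χ (c * a) = 1 ∧ χ (c * b) = 1))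
            = Finset.univ.filter (fun c : F => χ (c * a) = -1 ∧ χ (c * b) = 1) := by
          ext c
          simp only [Finset.mem_filter, Finset.mem_univ, true_and]
          rw [hiff]
        rw [heq, hclass (-1) 1 (Or.inr rfl) (Or.inl rfl)]
      have hc00 : #((E.filter (fun c => ¬ χ (c * a) = 1)).filter (fun c => ¬ χ (c * b) = 1))
          = 2 ^ (m - 2) := by
        rw [Finset.filter_filter, hfe]
        rw [Finset.erase_eq_of_notMem (fun hmem => by
          have := (Finset.mem_filter.mp hmem).2.1
          rw [zero_mul, hchi0] at this
          exact this rfl)]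
        have heq : (Finset.univ.filter (fun c : F => ¬ χ (c * a) = 1 ∧ ¬ χ (c * b) = 1))
            = Finset.univ.filter (fun c : F => χ (c * a) = -1 ∧ χ (c * b) = -1) := by
          ext c
          simp only [Finset.mem_filter, Finset.mem_univ, true_and]
          rw [hiff, hiff]
        rw [heq, hclass (-1) (-1) (Or.inr rfl) (Or.inr rfl)]
      rw [hc11, hc10, hc01, hc00]
      have hcast : ((2 ^ (m - 2) - 1 : ℕ) : ℚ) = (2:ℚ) ^ (m - 2) - 1 := by
        have : (1:ℕ) ≤ 2 ^ (m - 2) := by omega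
        push_cast [this]
        ring
      simp only [nsmul_eq_mul, hcast]
      push_cast
      ring
    rw [← Finset.add_sum_erase _ _ (Finset.mem_univ (0:F)), hT0, herase]
    ring
  calc (2 ^ m : ℚ) * N = ∑ c : F, ∑ R ∈ S.powersetCard k, ∏ r ∈ R, χ (c * r) := step1.symm
    _ = ∑ c : F, (∏ x ∈ S, (C (χ (c * x)) * X + 1)).coeff k :=
        Finset.sum_congr rfl fun c _ => step2 c
    _ = _ := htotal

lemma succ_mul_choose' (n t : ℕ) : (n+1) * n.choose t = (n+1).choose t * (n + 1 - t) := by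
  rcases le_or_gt t n with h | h
  · have h1 := Nat.add_one_mul_choose_eq n t
    have h2 := Nat.choose_succ_right_eq (n+1) t
    calc (n+1) * n.choose t = (n+1).choose (t+1) * (t+1) := by
          simpa [Nat.succ_eq_add_one] using h1
      _ = (n+1).choose t * (n + 1 - t) := h2
  · rw [Nat.choose_eq_zero_of_lt h, mul_zero, show n + 1 - t = 0 from by omega, mul_zero]

set_option maxHeartbeats 2000000 in
lemma final_algebra (m k : ℕ) (hm : 3 ≤ m) (hk : 3 ≤ k) (hk' : k ≤ 2 ^ m - 4) :
    ((2 ^ m - 3 : ℕ).choose k : ℚ)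
      + ((2:ℚ) ^ (m - 2) - 1) * (D3 m k - 3 * D3 m (k-1) + 3 * D3 m (k-2) - D3 m (k-3))
      + (2:ℚ) ^ (m - 2) * (2 * (D2 m k - D2 m (k-1)) + (D2 m k + D2 m (k-1)))
    = (2:ℚ) ^ m * (((((2 ^ m - 1 - k : ℕ) : ℚ) * ((2 ^ m - 2 - k : ℕ) : ℚ)) /
          ((2 : ℚ) ^ m * (k : ℚ) * ((k : ℚ) - 1))) *
        (((2 ^ m - 3).choose (k - 2) : ℚ) +
          (-1 : ℚ) ^ (k + k / 2) * (((k : ℚ) * ((k : ℚ) - 1)) / (2 * ((k / 2 : ℕ) : ℚ))) *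
            ((2 ^ (m - 1) - 2).choose (k / 2 - 1) : ℚ))) := by
  have hq8 : 8 ≤ 2 ^ m := by
    calc (8:ℕ) = 2 ^ 3 := rfl
      _ ≤ 2 ^ m := Nat.pow_le_pow_right (by norm_num) hm
  have hH4 : 4 ≤ 2 ^ (m - 1) := by
    calc (4:ℕ) = 2 ^ 2 := rfl
      _ ≤ 2 ^ (m - 1) := Nat.pow_le_pow_right (by norm_num) (by omega)
  have h2H : 2 ^ m = 2 * 2 ^ (m - 1) := by rw [← pow_succ']; congr 1; omega
  have hQ : (2:ℚ) ^ m = 2 * (2:ℚ) ^ (m-1) := by rw [← pow_succ']; congr 1; omega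
  have hQ' : (2:ℚ) ^ (m-1) = 2 * (2:ℚ) ^ (m-2) := by rw [← pow_succ']; congr 1; omega
  have hP2 : (2:ℚ) ^ (m-2) = (2:ℚ) ^ (m-1) / 2 := by rw [hQ']; ring
  -- global cast lemmas
  have γ1 : ((2 ^ m - 1 - k : ℕ) : ℚ) = (2:ℚ) ^ m - 1 - k := by
    rw [Nat.cast_sub (by omega), Nat.cast_sub (by omega)]; push_cast; ring
  have γ2 : ((2 ^ m - 2 - k : ℕ) : ℚ) = (2:ℚ) ^ m - 2 - k := by
    rw [Nat.cast_sub (by omega), Nat.cast_sub (by omega)]; push_cast; ring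
  have δ1 : ((k - 1 : ℕ) : ℚ) = (k:ℚ) - 1 := by
    rw [Nat.cast_sub (by omega)]; norm_num
  -- choose recurrences over ℕ, then cast
  have hA : (2^m - 3).choose k * k = (2^m - 3).choose (k-1) * (2^m - 2 - k) := by
    have h := Nat.choose_succ_right_eq (2^m - 3) (k - 1)
    rw [show k - 1 + 1 = k from by omega] at h
    rw [h, show 2^m - 3 - (k-1) = 2^m - 2 - k from by omega]
  have hB : (2^m - 3).choose (k-1) * (k-1) = (2^m - 3).choose (k-2) * (2^m - 1 - k) := by
    have h := Nat.choose_succ_right_eq (2^m - 3) (k - 2)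
    rw [show k - 2 + 1 = k - 1 from by omega] at h
    rw [h, show 2^m - 3 - (k-2) = 2^m - 1 - k from by omega]
  have HAq : ((2^m - 3).choose k : ℚ) * k
      = ((2^m - 3).choose (k-1) : ℚ) * ((2:ℚ)^m - 2 - k) := by
    have h := congrArg (fun n : ℕ => (n:ℚ)) hA
    push_cast at h
    rw [γ2] at h
    exact h
  have HBq : ((2^m - 3).choose (k-1) : ℚ) * ((k:ℚ) - 1)
      = ((2^m - 3).choose (k-2) : ℚ) * ((2:ℚ)^m - 1 - k) := by
    have h := congrArg (fun n : ℕ => (n:ℚ)) hB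
    push_cast at h
    rw [γ1, δ1] at h
    exact h
  have key1 : (k:ℚ) * ((k:ℚ) - 1) * ((2^m - 3).choose k : ℚ)
      = ((2:ℚ)^m - 1 - k) * ((2:ℚ)^m - 2 - k) * ((2^m - 3).choose (k-2) : ℚ) := by
    linear_combination ((k:ℚ) - 1) * HAq + ((2:ℚ)^m - 2 - (k:ℚ)) * HBq
  -- H-side recurrences need 1 ≤ j; done per parity below
  rcases Nat.even_or_odd k with ⟨j, hj⟩ | ⟨j, hj⟩
  · -- even: k = 2j
    have hj1 : 2 ≤ j := by omega
    have hjH : j ≤ 2^(m-1) - 2 := by omega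
    have hj2 : k / 2 = j := by omega
    have hH1 : (2^(m-1) - 2).choose j * j
        = (2^(m-1) - 2).choose (j-1) * (2^(m-1) - 1 - j) := by
      have h := Nat.choose_succ_right_eq (2^(m-1) - 2) (j - 1)
      rw [show j - 1 + 1 = j from by omega] at h
      rw [h, show 2^(m-1) - 2 - (j-1) = 2^(m-1) - 1 - j from by omega]
    have hH2 : (2^(m-1) - 2) * (2^(m-1) - 3).choose j
        = (2^(m-1) - 2).choose j * (2^(m-1) - 2 - j) := by
      have h := succ_mul_choose' (2^(m-1) - 3) j
      rw [show 2^(m-1) - 3 + 1 = 2^(m-1) - 2 from by omega] at h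
      rw [h]
    have hH3 : (2^(m-1) - 2) * (2^(m-1) - 3).choose (j-1)
        = (2^(m-1) - 2).choose (j-1) * (2^(m-1) - 1 - j) := by
      have h := succ_mul_choose' (2^(m-1) - 3) (j-1)
      rw [show 2^(m-1) - 3 + 1 = 2^(m-1) - 2 from by omega] at h
      rw [h, show 2^(m-1) - 2 - (j-1) = 2^(m-1) - 1 - j from by omega]
    have γ3 : ((2^(m-1) - 1 - j : ℕ) : ℚ) = (2:ℚ)^(m-1) - 1 - j := by
      rw [Nat.cast_sub (by omega), Nat.cast_sub (by omega)]; push_cast; ring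
    have γ4 : ((2^(m-1) - 2 - j : ℕ) : ℚ) = (2:ℚ)^(m-1) - 2 - j := by
      rw [Nat.cast_sub (by omega), Nat.cast_sub (by omega)]; push_cast; ring
    have γ5 : ((2^(m-1) - 2 : ℕ) : ℚ) = (2:ℚ)^(m-1) - 2 := by
      rw [Nat.cast_sub (by omega)]; push_cast; ring
    have H1q : ((2^(m-1) - 2).choose j : ℚ) * j
        = ((2^(m-1) - 2).choose (j-1) : ℚ) * ((2:ℚ)^(m-1) - 1 - j) := by
      have h := congrArg (fun n : ℕ => (n:ℚ)) hH1
      push_cast at h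
      rw [γ3] at h
      exact h
    have H2q : ((2:ℚ)^(m-1) - 2) * ((2^(m-1) - 3).choose j : ℚ)
        = ((2^(m-1) - 2).choose j : ℚ) * ((2:ℚ)^(m-1) - 2 - j) := by
      have h := congrArg (fun n : ℕ => (n:ℚ)) hH2
      push_cast at h
      rw [γ4, γ5] at h
      exact h
    have H3q : ((2:ℚ)^(m-1) - 2) * ((2^(m-1) - 3).choose (j-1) : ℚ)
        = ((2^(m-1) - 2).choose (j-1) : ℚ) * ((2:ℚ)^(m-1) - 1 - j) := by
      have h := congrArg (fun n : ℕ => (n:ℚ)) hH3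
      push_cast at h
      rw [γ3, γ5] at h
      exact h
    have hkj : (k:ℚ) = 2 * (j:ℚ) := by
      have : k = 2 * j := by omega
      rw [this]; push_cast; ring
    -- evaluate D's
    have hD3k : D3 m k = (-1:ℚ)^j * ((2^(m-1) - 3).choose j : ℚ) := by
      unfold D3; rw [if_pos ⟨j, by omega⟩, hj2]
    have hD3k1 : D3 m (k-1) = 0 := by
      unfold D3
      rw [if_neg]
      rintro ⟨c, hc⟩; omega
    have hD3k2 : D3 m (k-2) = (-1:ℚ)^(j-1) * ((2^(m-1) - 3).choose (j-1) : ℚ) := by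
      unfold D3
      rw [if_pos ⟨j-1, by omega⟩, show (k-2)/2 = j-1 from by omega]
    have hD3k3 : D3 m (k-3) = 0 := by
      unfold D3
      rw [if_neg]
      rintro ⟨c, hc⟩; omega
    have hD2k : D2 m k = (-1:ℚ)^j * ((2^(m-1) - 2).choose j : ℚ) := by
      unfold D2; rw [if_pos ⟨j, by omega⟩, hj2]
    have hD2k1 : D2 m (k-1) = 0 := by
      unfold D2
      rw [if_neg]
      rintro ⟨c, hc⟩; omega
    have hsgn : (-1:ℚ)^(k + k/2) = (-1:ℚ)^j := by
      rw [hj2, show k + j = 2*j + j from by omega, pow_add, pow_mul]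
      norm_num
    have hsgn1 : (-1:ℚ)^(j-1) = -(-1:ℚ)^j := by
      have h : (-1:ℚ)^(j-1) * (-1) = (-1:ℚ)^j := by
        rw [← pow_succ, show j - 1 + 1 = j from by omega]
      linarith
    have key2 : 2*(j:ℚ)*(((2:ℚ)^(m-2)-1)*(((2^(m-1) - 3).choose j : ℚ)
          - 3*((2^(m-1) - 3).choose (j-1) : ℚ))
          + 3*(2:ℚ)^(m-2)*((2^(m-1) - 2).choose j : ℚ))
        = ((2:ℚ)^m - 1 - k)*((2:ℚ)^m - 2 - k)*((2^(m-1) - 2).choose (j-1) : ℚ) := by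
      rw [hP2, hQ, hkj]
      linear_combination (j:ℚ) * H2q - 3*(j:ℚ) * H3q
        + (4*(2:ℚ)^(m-1) - 2 - (j:ℚ)) * H1q
    rw [hD3k, hD3k1, hD3k2, hD3k3, hD2k, hD2k1, hsgn, hsgn1, γ1, γ2, hj2]
    have hkne : (k:ℚ) ≠ 0 := by positivity
    have hkne1 : (k:ℚ) - 1 ≠ 0 := by
      have : (3:ℚ) ≤ (k:ℚ) := by exact_mod_cast hk
      linarith
    have hjne : (j:ℚ) ≠ 0 := by
      have : (2:ℚ) ≤ (j:ℚ) := by exact_mod_cast hj1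
      linarith
    have hPne : (2:ℚ)^m ≠ 0 := by positivity
    field_simp
    linear_combination (2*(j:ℚ)) * key1
      + ((k:ℚ)*((k:ℚ)-1)*(-1:ℚ)^j) * key2
  · -- odd : k = 2j+1
    have hj1 : 1 ≤ j := by omega
    have hjH : j ≤ 2^(m-1) - 3 := by omega
    have hj2 : k / 2 = j := by omega
    have hH1 : (2^(m-1) - 2).choose j * j
        = (2^(m-1) - 2).choose (j-1) * (2^(m-1) - 1 - j) := by
      have h := Nat.choose_succ_right_eq (2^(m-1) - 2) (j - 1)
      rw [show j - 1 + 1 = j from by omega] at h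
      rw [h, show 2^(m-1) - 2 - (j-1) = 2^(m-1) - 1 - j from by omega]
    have hH2 : (2^(m-1) - 2) * (2^(m-1) - 3).choose j
        = (2^(m-1) - 2).choose j * (2^(m-1) - 2 - j) := by
      have h := succ_mul_choose' (2^(m-1) - 3) j
      rw [show 2^(m-1) - 3 + 1 = 2^(m-1) - 2 from by omega] at h
      rw [h]
    have hH3 : (2^(m-1) - 2) * (2^(m-1) - 3).choose (j-1)
        = (2^(m-1) - 2).choose (j-1) * (2^(m-1) - 1 - j) := by
      have h := succ_mul_choose' (2^(m-1) - 3) (j-1)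
      rw [show 2^(m-1) - 3 + 1 = 2^(m-1) - 2 from by omega] at h
      rw [h, show 2^(m-1) - 2 - (j-1) = 2^(m-1) - 1 - j from by omega]
    have γ3 : ((2^(m-1) - 1 - j : ℕ) : ℚ) = (2:ℚ)^(m-1) - 1 - j := by
      rw [Nat.cast_sub (by omega), Nat.cast_sub (by omega)]; push_cast; ring
    have γ4 : ((2^(m-1) - 2 - j : ℕ) : ℚ) = (2:ℚ)^(m-1) - 2 - j := by
      rw [Nat.cast_sub (by omega), Nat.cast_sub (by omega)]; push_cast; ring
    have γ5 : ((2^(m-1) - 2 : ℕ) : ℚ) = (2:ℚ)^(m-1) - 2 := by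
      rw [Nat.cast_sub (by omega)]; push_cast; ring
    have H1q : ((2^(m-1) - 2).choose j : ℚ) * j
        = ((2^(m-1) - 2).choose (j-1) : ℚ) * ((2:ℚ)^(m-1) - 1 - j) := by
      have h := congrArg (fun n : ℕ => (n:ℚ)) hH1
      push_cast at h
      rw [γ3] at h
      exact h
    have H2q : ((2:ℚ)^(m-1) - 2) * ((2^(m-1) - 3).choose j : ℚ)
        = ((2^(m-1) - 2).choose j : ℚ) * ((2:ℚ)^(m-1) - 2 - j) := by
      have h := congrArg (fun n : ℕ => (n:ℚ)) hH2
      push_cast at h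
      rw [γ4, γ5] at h
      exact h
    have H3q : ((2:ℚ)^(m-1) - 2) * ((2^(m-1) - 3).choose (j-1) : ℚ)
        = ((2^(m-1) - 2).choose (j-1) : ℚ) * ((2:ℚ)^(m-1) - 1 - j) := by
      have h := congrArg (fun n : ℕ => (n:ℚ)) hH3
      push_cast at h
      rw [γ3, γ5] at h
      exact h
    have hkj : (k:ℚ) = 2 * (j:ℚ) + 1 := by
      have : k = 2 * j + 1 := by omega
      rw [this]; push_cast; ring
    have hD3k : D3 m k = 0 := by
      unfold D3; rw [if_neg]; rintro ⟨c, hc⟩; omega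
    have hD3k1 : D3 m (k-1) = (-1:ℚ)^j * ((2^(m-1) - 3).choose j : ℚ) := by
      unfold D3
      rw [if_pos ⟨j, by omega⟩, show (k-1)/2 = j from by omega]
    have hD3k2 : D3 m (k-2) = 0 := by
      unfold D3; rw [if_neg]; rintro ⟨c, hc⟩; omega
    have hD3k3 : D3 m (k-3) = (-1:ℚ)^(j-1) * ((2^(m-1) - 3).choose (j-1) : ℚ) := by
      unfold D3
      rw [if_pos ⟨j-1, by omega⟩, show (k-3)/2 = j-1 from by omega]
    have hD2k : D2 m k = 0 := by
      unfold D2; rw [if_neg]; rintro ⟨c, hc⟩; omega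
    have hD2k1 : D2 m (k-1) = (-1:ℚ)^j * ((2^(m-1) - 2).choose j : ℚ) := by
      unfold D2
      rw [if_pos ⟨j, by omega⟩, show (k-1)/2 = j from by omega]
    have hsgn : (-1:ℚ)^(k + k/2) = -(-1:ℚ)^j := by
      rw [hj2, show k + j = 2*j + (j+1) from by omega, pow_add, pow_mul, neg_one_sq,
        one_pow, one_mul, pow_succ]
      ring
    have hsgn1 : (-1:ℚ)^(j-1) = -(-1:ℚ)^j := by
      have h : (-1:ℚ)^(j-1) * (-1) = (-1:ℚ)^j := by
        rw [← pow_succ, show j - 1 + 1 = j from by omega]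
      linarith
    have key2 : 2*(j:ℚ)*(((2:ℚ)^(m-2)-1)*(3*((2^(m-1) - 3).choose j : ℚ)
          - ((2^(m-1) - 3).choose (j-1) : ℚ))
          + (2:ℚ)^(m-2)*((2^(m-1) - 2).choose j : ℚ))
        = ((2:ℚ)^m - 1 - k)*((2:ℚ)^m - 2 - k)*((2^(m-1) - 2).choose (j-1) : ℚ) := by
      rw [hP2, hQ, hkj]
      linear_combination 3*(j:ℚ) * H2q - (j:ℚ) * H3q
        + (4*(2:ℚ)^(m-1) - 6 - 3*(j:ℚ)) * H1q
    rw [hD3k, hD3k1, hD3k2, hD3k3, hD2k, hD2k1, hsgn, hsgn1, γ1, γ2, hj2]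
    have hkne : (k:ℚ) ≠ 0 := by positivity
    have hkne1 : (k:ℚ) - 1 ≠ 0 := by
      have : (3:ℚ) ≤ (k:ℚ) := by exact_mod_cast hk
      linarith
    have hjne : (j:ℚ) ≠ 0 := by
      have : (1:ℚ) ≤ (j:ℚ) := by exact_mod_cast hj1
      linarith
    have hPne : (2:ℚ)^m ≠ 0 := by positivity
    field_simp
    linear_combination (2*(j:ℚ)) * key1
      - ((k:ℚ)*((k:ℚ)-1)*(-1:ℚ)^j) * key2

end Aux

theorem stmt9 (m k : ℕ) (hm : 3 ≤ m) (hk : 3 ≤ k) (hk' : k ≤ 2 ^ m - 4)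
    (F : Type*) [Field F] [Fintype F] [DecidableEq F]
    (hcard : Fintype.card F = 2 ^ m)
    (θ : Fin (2 ^ m - 1) → F) (hθinj : Function.Injective θ) (hθne : ∀ j, θ j ≠ 0) :
    ∀ t : Finset (Fin (2 ^ m - 1)), t.card = 2 →
      ({s ∈ blocks (rowSpan (G3 m k θ)) (2 ^ m - 1 - k) | t ⊆ s}.ncard : ℚ) =
        ((((2 ^ m - 1 - k : ℕ) : ℚ) * ((2 ^ m - 2 - k : ℕ) : ℚ)) /
            ((2 : ℚ) ^ m * (k : ℚ) * ((k : ℚ) - 1))) *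
          (((2 ^ m - 3).choose (k - 2) : ℚ) +
            (-1 : ℚ) ^ (k + k / 2) * (((k : ℚ) * ((k : ℚ) - 1)) / (2 * ((k / 2 : ℕ) : ℚ))) *
              ((2 ^ (m - 1) - 2).choose (k / 2 - 1) : ℚ)) := by
  intro t ht
  obtain ⟨j1, j2, hj12, rfl⟩ := Finset.card_eq_two.mp ht
  have hab : θ j1 ≠ θ j2 := fun h => hj12 (hθinj h)
  have himg2 : ({j1, j2} : Finset (Fin (2 ^ m - 1))).image θ = {θ j1, θ j2} := by
    rw [Finset.image_insert, Finset.image_singleton]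
  rw [blocks_card_eq m k hm hk hk' hcard θ hθinj hθne {j1, j2} ht, himg2]
  have hcount := count_zero_sum m k hm hk hk' hcard (θ j1) (θ j2) (hθne j1) (hθne j2) hab
  rw [final_algebra m k hm hk hk'] at hcount
  have hPne : ((2:ℚ) ^ m) ≠ 0 := by positivity
  exact mul_left_cancel₀ hPne hcount
end
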